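/- arXiv:1910.08813 — 6 statements merged into one kernel-verified Lean document; each statement's English description precedes it below -/
import Mathlib

section
/- Let A be a real n×n matrix with trace zero. Then there exists an orthogonal matrix V ∈ ℝ^{n×n} such that all diagonal entries of VᵀAV are zero (i.e., VᵀAV is hollow). -/
open Matrix

-- Step 1: a symmetric trace-zero matrix has a unit vector with zero quadratic form
lemma exists_null (n : ℕ) (S : Matrix (Fin (n+1)) (Fin (n+1)) ℝ) (hsym : Sᵀ = S)
    (htr : S.trace = 0) :
    ∃ x : Fin (n+1) → ℝ, x ⬝ᵥ x = 1 ∧ x ⬝ᵥ (S *ᵥ x) = 0 := by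
  by_cases hz : ∃ i, S i i = 0
  · obtain ⟨i, hi⟩ := hz
    refine ⟨Pi.single i 1, ?_, ?_⟩
    · simp [single_dotProduct, Pi.single_apply]
    · simp [mulVec_single, single_dotProduct, hi]
  · push_neg at hz
    have htr' : ∑ i, S i i = 0 := htr
    have hneg : ∃ i, S i i < 0 := by
      by_contra h; push_neg at h
      have hpos : ∀ i, 0 < S i i := fun i => lt_of_le_of_ne (h i) (Ne.symm (hz i))
      have := Finset.sum_pos (fun i _ => hpos i) ⟨0, Finset.mem_univ 0⟩
      linarith [htr']
    have hpos : ∃ k, 0 < S k k := by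
      by_contra h; push_neg at h
      have hneg' : ∀ i, S i i < 0 := fun i => lt_of_le_of_ne (h i) (hz i)
      have := Finset.sum_neg (fun i _ => hneg' i) ⟨0, Finset.mem_univ 0⟩
      linarith [htr']
    obtain ⟨i, hi⟩ := hneg
    obtain ⟨k, hk⟩ := hpos
    have hik : i ≠ k := by rintro rfl; linarith
    have hki : k ≠ i := hik.symm
    set f : ℝ → ℝ := fun t =>
      (Real.cos t)^2 * S i i + 2 * (Real.cos t * Real.sin t) * S i k + (Real.sin t)^2 * S k k
      with hf
    have hcont : ContinuousOn f (Set.Icc 0 (Real.pi/2)) := by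
      apply Continuous.continuousOn; fun_prop
    have hmem : (0:ℝ) ∈ Set.Icc (f 0) (f (Real.pi/2)) := by
      constructor <;> simp [hf] <;> linarith
    obtain ⟨t, _, ht⟩ := intermediate_value_Icc (by positivity : (0:ℝ) ≤ Real.pi/2) hcont hmem
    have hSki : S k i = S i k := by
      have := congrFun (congrFun hsym i) k
      simpa [transpose_apply] using this
    set u : Fin (n+1) → ℝ := Pi.single i 1 with hu
    set v : Fin (n+1) → ℝ := Pi.single k 1 with hv
    refine ⟨Real.cos t • u + Real.sin t • v, ?_, ?_⟩
    · simp only [dotProduct_add, add_dotProduct, dotProduct_smul, smul_dotProduct,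
        single_dotProduct, Pi.add_apply, Pi.smul_apply, Pi.single_apply, smul_eq_mul, hu, hv]
      simp [hik, hki]
      nlinarith [Real.sin_sq_add_cos_sq t]
    · simp only [mulVec_add, mulVec_smul, mulVec_single, dotProduct_add, add_dotProduct,
        dotProduct_smul, smul_dotProduct, single_dotProduct, Pi.add_apply, Pi.smul_apply,
        smul_eq_mul, hu, hv]
      simp [hik, hki, hSki]
      have ht' : Real.cos t ^ 2 * S i i + 2 * (Real.cos t * Real.sin t) * S i k
          + Real.sin t ^ 2 * S k k = 0 := ht
      nlinarith [ht']

-- padded block matrix [[1,0],[0,W]]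
def pad (n : ℕ) (W : Matrix (Fin n) (Fin n) ℝ) : Matrix (Fin (n+1)) (Fin (n+1)) ℝ :=
  Matrix.of fun i j =>
    Fin.cases (Fin.cases (1:ℝ) (fun _ => 0) j) (fun a => Fin.cases (0:ℝ) (fun b => W a b) j) i

@[simp] lemma pad_zero_zero (n : ℕ) (W : Matrix (Fin n) (Fin n) ℝ) : pad n W 0 0 = 1 := rfl
@[simp] lemma pad_zero_succ (n : ℕ) (W : Matrix (Fin n) (Fin n) ℝ) (b : Fin n) :
    pad n W 0 b.succ = 0 := by simp [pad]
@[simp] lemma pad_succ_zero (n : ℕ) (W : Matrix (Fin n) (Fin n) ℝ) (a : Fin n) :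
    pad n W a.succ 0 = 0 := by simp [pad]
@[simp] lemma pad_succ_succ (n : ℕ) (W : Matrix (Fin n) (Fin n) ℝ) (a b : Fin n) :
    pad n W a.succ b.succ = W a b := by simp [pad]

lemma pad_orth (n : ℕ) (W : Matrix (Fin n) (Fin n) ℝ) (hW : Wᵀ * W = 1) :
    (pad n W)ᵀ * pad n W = 1 := by
  ext i j
  rw [mul_apply]
  rw [Fin.sum_univ_succ]
  induction i using Fin.cases with
  | zero =>
      induction j using Fin.cases with
      | zero => simp
      | succ b =>
          simp only [transpose_apply, pad_zero_zero, pad_zero_succ, pad_succ_zero,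
            pad_succ_succ, one_mul, zero_mul, mul_zero, Finset.sum_const_zero, add_zero]
          rw [one_apply_ne (Ne.symm (Fin.succ_ne_zero b))]
  | succ a =>
      induction j using Fin.cases with
      | zero =>
          simp only [transpose_apply, pad_zero_zero, pad_zero_succ, pad_succ_zero,
            pad_succ_succ, one_mul, zero_mul, mul_zero, mul_one, Finset.sum_const_zero, add_zero,
            zero_add]
          rw [one_apply_ne (Fin.succ_ne_zero a)]
      | succ b =>
          have h := congrFun (congrFun hW a) b
          rw [mul_apply] at h
          simp only [transpose_apply] at h
          simp only [transpose_apply, pad_zero_succ, pad_succ_succ, zero_mul, zero_add]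
          rw [h]
          simp [one_apply, Fin.succ_inj]

lemma pad_diag (n : ℕ) (W : Matrix (Fin n) (Fin n) ℝ) (M : Matrix (Fin (n+1)) (Fin (n+1)) ℝ)
    (hM0 : M 0 0 = 0)
    (hWB : ∀ a, (Wᵀ * (M.submatrix Fin.succ Fin.succ) * W) a a = 0) :
    ∀ i, ((pad n W)ᵀ * M * pad n W) i i = 0 := by
  intro i
  have expand : ((pad n W)ᵀ * M * pad n W) i i
      = ∑ k, ∑ j, pad n W j i * M j k * pad n W k i := by
    rw [mul_apply]
    apply Finset.sum_congr rfl
    intro k _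
    rw [mul_apply, Finset.sum_mul]
    apply Finset.sum_congr rfl
    intro j _
    simp [transpose_apply]
  rw [expand, Finset.sum_comm]
  induction i using Fin.cases with
  | zero =>
      rw [Fin.sum_univ_succ]
      have h1 : ∑ k, pad n W 0 (0:Fin (n+1)) * M 0 k * pad n W k 0 = 0 := by
        rw [Fin.sum_univ_succ]
        simp [hM0]
      rw [h1]
      have h2 : ∑ j : Fin n, ∑ k : Fin (n+1),
          pad n W j.succ (0:Fin (n+1)) * M j.succ k * pad n W k 0 = 0 := by
        apply Finset.sum_eq_zero
        intro j _
        apply Finset.sum_eq_zero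
        intro k _
        simp
      rw [h2, add_zero]
  | succ a =>
      have expand2 : (Wᵀ * (M.submatrix Fin.succ Fin.succ) * W) a a
          = ∑ k, ∑ j, W j a * M j.succ k.succ * W k a := by
        rw [mul_apply]
        apply Finset.sum_congr rfl
        intro k _
        rw [mul_apply, Finset.sum_mul]
        apply Finset.sum_congr rfl
        intro j _
        simp [transpose_apply]
      have h2 : ∑ j : Fin n, ∑ k : Fin n, W j a * M j.succ k.succ * W k a = 0 := by
        rw [← Finset.sum_comm, ← expand2]
        exact hWB a
      calc ∑ j : Fin (n+1), ∑ k : Fin (n+1), pad n W j a.succ * M j k * pad n W k a.succ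
          = ∑ j : Fin n, ∑ k : Fin n, W j a * M j.succ k.succ * W k a := by
            rw [Fin.sum_univ_succ]
            simp only [pad_zero_succ, zero_mul, Finset.sum_const_zero, zero_add]
            apply Finset.sum_congr rfl
            intro j _
            rw [Fin.sum_univ_succ]
            simp only [pad_zero_succ, pad_succ_succ, mul_zero, zero_add]
        _ = 0 := h2

lemma key : ∀ (n : ℕ) (S : Matrix (Fin n) (Fin n) ℝ), Sᵀ = S → S.trace = 0 →
    ∃ V : Matrix (Fin n) (Fin n) ℝ, Vᵀ * V = 1 ∧ ∀ i, (Vᵀ * S * V) i i = 0 := by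
  intro n
  induction n with
  | zero =>
      intro S _ _
      exact ⟨1, by simp, fun i => i.elim0⟩
  | succ n ih =>
      intro S hsym htr
      obtain ⟨x, hx1, hx0⟩ := exists_null n S hsym htr
      set xE : EuclideanSpace ℝ (Fin (n+1)) := (WithLp.equiv 2 _).symm x with hxE
      have hxEapp : ∀ p, xE p = x p := fun p => rfl
      have hnorm : (inner ℝ xE xE : ℝ) = 1 := by
        rw [PiLp.inner_apply]
        simpa [RCLike.inner_apply, hxEapp, dotProduct, pow_two] using hx1
      have ho : Orthonormal ℝ (Set.restrict {(0 : Fin (n+1))} fun _ => xE) := by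
        rw [orthonormal_iff_ite]
        intro i j
        have hij : i = j := Subtype.ext (by
          have h1 := i.2
          have h2 := j.2
          simp only [Set.mem_singleton_iff] at h1 h2
          rw [h1, h2])
        subst hij
        rw [if_pos rfl]
        exact hnorm
      obtain ⟨b, hb⟩ := Orthonormal.exists_orthonormalBasis_extension_of_card_eq
        (by simp [finrank_euclideanSpace_fin]) ho
      have hb0 : b 0 = xE := hb 0 rfl
      set Q : Matrix (Fin (n+1)) (Fin (n+1)) ℝ := Matrix.of fun p q => b q p with hQdef
      have hinner : ∀ i k : Fin (n+1), ∑ p, b i p * b k p = if i = k then (1:ℝ) else 0 := by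
        intro i k
        have h := orthonormal_iff_ite.mp b.orthonormal i k
        rw [PiLp.inner_apply] at h
        simpa [RCLike.inner_apply, mul_comm] using h
      have hQ : Qᵀ * Q = 1 := by
        ext i k
        rw [mul_apply]
        simp only [transpose_apply, hQdef, Matrix.of_apply]
        rw [hinner i k]
        simp [one_apply]
      set M := Qᵀ * S * Q with hM
      have hMsym : Mᵀ = M := by
        rw [hM, transpose_mul, transpose_mul, transpose_transpose, hsym, Matrix.mul_assoc]
      have hMtr : M.trace = 0 := by
        rw [hM, trace_mul_cycle, mul_eq_one_comm.mp hQ, one_mul, htr]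
      have hM00 : M 0 0 = 0 := by
        have hQ0 : ∀ p, Q p 0 = x p := by
          intro p
          simp only [hQdef, Matrix.of_apply, hb0, hxEapp]
        have e1 : M 0 0 = ∑ k, (∑ j, x j * S j k) * x k := by
          rw [hM, mul_apply]
          apply Finset.sum_congr rfl
          intro k _
          rw [mul_apply, hQ0]
          congr 1
          apply Finset.sum_congr rfl
          intro j _
          rw [transpose_apply, hQ0]
        rw [e1, ← hx0]
        rw [show (x ⬝ᵥ (S *ᵥ x)) = ∑ j, ∑ k, x j * (S j k * x k) by
          simp [dotProduct, mulVec, Finset.mul_sum]]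
        rw [Finset.sum_comm]
        apply Finset.sum_congr rfl
        intro k _
        rw [Finset.sum_mul]
        apply Finset.sum_congr rfl
        intro j _
        ring
      set B := M.submatrix Fin.succ Fin.succ with hBdef
      have hBsym : Bᵀ = B := by
        ext a c
        simp only [transpose_apply, hBdef, submatrix_apply]
        exact congrFun (congrFun hMsym a.succ) c.succ
      have hBtr : B.trace = 0 := by
        have e2 : M.trace = M 0 0 + B.trace := by
          simp only [Matrix.trace, Matrix.diag, hBdef, submatrix_apply]
          exact Fin.sum_univ_succ _
        rw [e2, hM00, zero_add] at hMtr
        exact hMtr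
      obtain ⟨W, hW1, hW2⟩ := ih B hBsym hBtr
      refine ⟨Q * pad n W, ?_, ?_⟩
      · rw [transpose_mul, Matrix.mul_assoc, ← Matrix.mul_assoc Qᵀ Q (pad n W), hQ, one_mul]
        exact pad_orth n W hW1
      · have e3 : (Q * pad n W)ᵀ * S * (Q * pad n W) = (pad n W)ᵀ * M * pad n W := by
          rw [hM, transpose_mul]
          simp only [Matrix.mul_assoc]
        rw [e3]
        exact pad_diag n W M hM00 hW2

theorem stmt_1 (n : ℕ) (A : Matrix (Fin n) (Fin n) ℝ) (hA : A.trace = 0) :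
    ∃ V : Matrix (Fin n) (Fin n) ℝ, Vᵀ * V = 1 ∧ ∀ i, (Vᵀ * A * V) i i = 0 := by
  set S : Matrix (Fin n) (Fin n) ℝ := (1/2 : ℝ) • (A + Aᵀ) with hS
  have hsym : Sᵀ = S := by
    rw [hS, transpose_smul, transpose_add, transpose_transpose, add_comm]
  have htr : S.trace = 0 := by
    rw [hS, trace_smul, trace_add, trace_transpose, hA]
    simp
  obtain ⟨V, hV1, hV2⟩ := key n S hsym htr
  refine ⟨V, hV1, ?_⟩
  intro i
  have h1 : (Vᵀ * Aᵀ * V) i i = (Vᵀ * A * V) i i := by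
    have : Vᵀ * Aᵀ * V = (Vᵀ * A * V)ᵀ := by
      rw [transpose_mul, transpose_mul, transpose_transpose, Matrix.mul_assoc]
    rw [this, transpose_apply]
  have h2 : (Vᵀ * S * V) i i = (1/2 : ℝ) * ((Vᵀ * A * V) i i + (Vᵀ * Aᵀ * V) i i) := by
    rw [hS]
    simp only [Matrix.smul_mul, Matrix.mul_smul, Matrix.add_mul, Matrix.mul_add,
      Matrix.smul_apply, Matrix.add_apply, smul_eq_mul]
  have h3 := hV2 i
  rw [h2, h1] at h3
  linarith
end

section
/- Let A, B be real n×n matrices with tr A = tr B = 0 and n ≥ 3. Then there exists a nonzero vector v ∈ ℝ^n such that vᵀAv = 0 and vᵀBv = 0. -/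
open Matrix

lemma bilin_expand {N p q : ℕ} (S : Matrix (Fin N) (Fin N) ℝ)
    (x : Fin p → ℝ) (y : Fin q → ℝ) (u : Fin p → Fin N → ℝ) (w : Fin q → Fin N → ℝ) :
    (∑ j, x j • u j) ⬝ᵥ S.mulVec (∑ j, y j • w j)
      = ∑ j, ∑ j', x j * y j' * (u j ⬝ᵥ S.mulVec (w j')) := by
  simp only [← Matrix.toLinearMap₂'_apply' (T := ℝ)]
  simp only [map_sum, _root_.map_smul, LinearMap.sum_apply, LinearMap.smul_apply, smul_eq_mul]
  rw [Finset.sum_comm]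
  exact Finset.sum_congr rfl fun j _ => by rw [Finset.mul_sum]; exact Finset.sum_congr rfl fun j' _ => by ring

lemma dot_single {N : ℕ} (S : Matrix (Fin N) (Fin N) ℝ) (i j : Fin N) :
    (Pi.single i 1 : Fin N → ℝ) ⬝ᵥ S.mulVec (Pi.single j 1) = S i j := by
  simp [dotProduct, mulVec, Pi.single_apply, Finset.mul_sum, mul_ite, ite_mul]

lemma expand2 {N : ℕ} (S : Matrix (Fin N) (Fin N) ℝ) (i j : Fin N) (α β : ℝ) :
    (α • (Pi.single i 1 : Fin N → ℝ) + β • (Pi.single j 1 : Fin N → ℝ)) ⬝ᵥ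
      S.mulVec (α • (Pi.single i 1 : Fin N → ℝ) + β • (Pi.single j 1 : Fin N → ℝ))
    = α*α*(S i i) + α*β*(S i j) + β*α*(S j i) + β*β*(S j j) := by
  simp [add_dotProduct, smul_dotProduct, Matrix.mulVec_add, Matrix.mulVec_smul,
    dotProduct_add, dotProduct_smul, dot_single, smul_eq_mul]
  ring

lemma exists_unit_null {m : ℕ} (S : Matrix (Fin (m+1)) (Fin (m+1)) ℝ) (hS : S.trace = 0) :
    ∃ v : Fin (m+1) → ℝ, v ⬝ᵥ v = 1 ∧ v ⬝ᵥ S.mulVec v = 0 := by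
  have htr : ∑ i, S i i = 0 := hS
  by_cases hz : ∃ i, S i i = 0
  · obtain ⟨i, hi⟩ := hz
    refine ⟨Pi.single i 1, ?_, ?_⟩
    · have := expand2 (1 : Matrix (Fin (m+1)) (Fin (m+1)) ℝ) i i 1 0
      simpa [Matrix.one_mulVec] using
        (by simpa using dot_single (1 : Matrix (Fin (m+1)) (Fin (m+1)) ℝ) i i :
          (Pi.single i 1 : Fin (m+1) → ℝ) ⬝ᵥ Pi.single i 1 = 1)
    · simpa [dot_single] using hi
  · push_neg at hz
    have hex : ∃ i, 0 < S i i := by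
      by_contra h
      push_neg at h
      have : ∑ i, S i i < 0 := by
        have h0 : ∀ i ∈ Finset.univ, S i i ≤ 0 := fun i _ => h i
        have := Finset.sum_lt_sum_of_nonempty (s := (Finset.univ : Finset (Fin (m+1))))
          Finset.univ_nonempty (f := fun i => S i i) (g := fun _ => (0:ℝ))
          (fun i _ => lt_of_le_of_ne (h i) (hz i))
        simpa using this
      linarith
    have hex' : ∃ j, S j j < 0 := by
      by_contra h
      push_neg at h
      have : (0:ℝ) < ∑ i, S i i := by
        have := Finset.sum_lt_sum_of_nonempty (s := (Finset.univ : Finset (Fin (m+1))))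
          Finset.univ_nonempty (f := fun _ => (0:ℝ)) (g := fun i => S i i)
          (fun i _ => lt_of_le_of_ne (h i) (Ne.symm (hz i)))
        simpa using this
      linarith
    obtain ⟨i, hi⟩ := hex
    obtain ⟨j, hj⟩ := hex'
    have hij : i ≠ j := fun h => by rw [h] at hi; linarith
    set g : ℝ → ℝ := fun t => (Real.cos t)*(Real.cos t)*(S i i) + (Real.cos t)*(Real.sin t)*(S i j)
      + (Real.sin t)*(Real.cos t)*(S j i) + (Real.sin t)*(Real.sin t)*(S j j) with hg
    have hcont : Continuous g := by fun_prop
    have hg0 : g 0 = S i i := by simp [hg]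
    have hgpi : g (Real.pi/2) = S j j := by simp [hg]
    have hmem : (0:ℝ) ∈ Set.Icc (g (Real.pi/2)) (g 0) := by
      constructor <;> [rw [hgpi]; rw [hg0]] <;> linarith
    have hsub := intermediate_value_Icc' (by positivity : (0:ℝ) ≤ Real.pi/2)
      hcont.continuousOn
    obtain ⟨t, _, ht⟩ := hsub hmem
    refine ⟨Real.cos t • (Pi.single i 1 : Fin (m+1) → ℝ)
      + Real.sin t • (Pi.single j 1 : Fin (m+1) → ℝ), ?_, ?_⟩
    · have h1 := expand2 (1 : Matrix (Fin (m+1)) (Fin (m+1)) ℝ) i j (Real.cos t) (Real.sin t)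
      rw [Matrix.one_mulVec] at h1
      rw [h1]
      simp [Matrix.one_apply, hij, hij.symm]
      nlinarith [Real.sin_sq_add_cos_sq t]
    · rw [expand2]
      exact ht

lemma sum_diag_eq_trace {m : ℕ} (S : Matrix (Fin m) (Fin m) ℝ) (f : Fin m → Fin m → ℝ)
    (hf : ∀ i j, f i ⬝ᵥ f j = if i = j then (1:ℝ) else 0) :
    ∑ i, f i ⬝ᵥ S.mulVec (f i) = S.trace := by
  set F : Matrix (Fin m) (Fin m) ℝ := Matrix.of (fun i j => f i j) with hF
  have hFFt : F * Fᵀ = 1 := by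
    ext i j
    have := hf i j
    simpa [Matrix.mul_apply, Matrix.one_apply, dotProduct, hF] using this
  have key : ∀ i, f i ⬝ᵥ S.mulVec (f i) = (F * S * Fᵀ) i i := by
    intro i
    simp [Matrix.mul_apply, dotProduct, mulVec, hF, Finset.sum_mul, Finset.mul_sum]
    rw [Finset.sum_comm]
    exact Finset.sum_congr rfl fun a _ => Finset.sum_congr rfl fun b _ => by ring
  calc ∑ i, f i ⬝ᵥ S.mulVec (f i) = (F * S * Fᵀ).trace := by
        rw [Matrix.trace]; exact Finset.sum_congr rfl fun i _ => key i
    _ = (Fᵀ * F * S).trace := by rw [Matrix.trace_mul_cycle]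
    _ = S.trace := by rw [mul_eq_one_comm.mp hFFt, one_mul]

lemma extend_onb {m : ℕ} (v : Fin (m+1) → ℝ) (hv : v ⬝ᵥ v = 1) :
    ∃ f : Fin (m+1) → (Fin (m+1) → ℝ), f 0 = v ∧
      ∀ i j, f i ⬝ᵥ f j = if i = j then (1:ℝ) else 0 := by
  let v' : EuclideanSpace ℝ (Fin (m+1)) := (WithLp.equiv 2 _).symm v
  have hinner : ∀ x y : EuclideanSpace ℝ (Fin (m+1)),
      (inner ℝ x y : ℝ) = ∑ i, x i * y i := by
    intro x y
    simp [PiLp.inner_apply, mul_comm]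
  have hvfam : Orthonormal ℝ (({0} : Set (Fin (m+1))).restrict (fun _ => v')) := by
    rw [orthonormal_iff_ite]
    rintro ⟨i, hi⟩ ⟨j, hj⟩
    simp only [Set.mem_singleton_iff] at hi hj
    subst hi; subst hj
    simp only [Set.restrict_apply, if_pos rfl]
    rw [hinner]
    exact hv
  obtain ⟨b, hb⟩ := hvfam.exists_orthonormalBasis_extension_of_card_eq
    (by simp [finrank_euclideanSpace])
  refine ⟨fun i => (b i : Fin (m+1) → ℝ), ?_, ?_⟩
  · exact congrArg (fun x : EuclideanSpace ℝ (Fin (m+1)) => (x : Fin (m+1) → ℝ)) (hb 0 rfl)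
  · intro i j
    have := (orthonormal_iff_ite.mp b.orthonormal) i j
    rw [hinner] at this
    exact this

lemma exists_null_onb : ∀ (m : ℕ) (S : Matrix (Fin m) (Fin m) ℝ), S.trace = 0 →
    ∃ f : Fin m → (Fin m → ℝ), (∀ i j, f i ⬝ᵥ f j = if i = j then (1:ℝ) else 0) ∧
      ∀ i, f i ⬝ᵥ S.mulVec (f i) = 0 := by
  intro m
  induction m with
  | zero => exact fun S _ => ⟨fun i => i.elim0, fun i => i.elim0, fun i => i.elim0⟩
  | succ m ih =>
    intro S hS
    obtain ⟨v, hv1, hv0⟩ := exists_unit_null S hS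
    obtain ⟨f, hf0, hf⟩ := extend_onb v hv1
    set S' : Matrix (Fin m) (Fin m) ℝ :=
      Matrix.of (fun k l => f k.succ ⬝ᵥ S.mulVec (f l.succ)) with hS'
    have htr' : S'.trace = 0 := by
      have h1 : ∑ i, f i ⬝ᵥ S.mulVec (f i) = S.trace := sum_diag_eq_trace S f hf
      rw [Fin.sum_univ_succ, hf0, hv0, hS, zero_add] at h1
      simpa [Matrix.trace, hS'] using h1
    obtain ⟨g, hg, hgnull⟩ := ih S' htr'
    set e : Fin (m+1) → (Fin (m+1) → ℝ) :=
      Fin.cases v (fun k => ∑ j, g k j • f j.succ) with he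
    have hsingle : ∀ x : Fin (m+1) → ℝ, x = ∑ j : Fin 1, (1:ℝ) • x := by
      intro x; simp
    have hdot : ∀ k l, (∑ j, g k j • f j.succ) ⬝ᵥ S.mulVec (∑ j, g l j • f j.succ)
        = g k ⬝ᵥ S'.mulVec (g l) := by
      intro k l
      rw [bilin_expand]
      simp [dotProduct, mulVec, hS', Finset.mul_sum]
      refine Finset.sum_congr rfl fun a _ => Finset.sum_congr rfl fun b _ => ?_
      simp_rw [Finset.sum_mul, Finset.mul_sum]
      exact Finset.sum_congr rfl fun x _ => Finset.sum_congr rfl fun y _ => by ring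
    have hdot1 : ∀ k l, (∑ j, g k j • f j.succ) ⬝ᵥ (∑ j, g l j • f j.succ)
        = if k = l then (1:ℝ) else 0 := by
      intro k l
      have h1 : (∑ j, g k j • f j.succ) ⬝ᵥ (∑ j, g l j • f j.succ)
          = (∑ j, g k j • f j.succ) ⬝ᵥ (1 : Matrix (Fin (m+1)) (Fin (m+1)) ℝ).mulVec
            (∑ j, g l j • f j.succ) := by rw [Matrix.one_mulVec]
      rw [h1, bilin_expand]
      have h2 : ∀ (a b : Fin m), f a.succ ⬝ᵥ (1 : Matrix (Fin (m+1)) (Fin (m+1)) ℝ).mulVec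
          (f b.succ) = if a = b then (1:ℝ) else 0 := by
        intro a b
        rw [Matrix.one_mulVec, hf]
        simp [Fin.succ_inj]
      calc ∑ j, ∑ j', g k j * g l j' * (f j.succ ⬝ᵥ
              (1 : Matrix (Fin (m+1)) (Fin (m+1)) ℝ).mulVec (f j'.succ))
          = ∑ j, g k j * g l j := by
            refine Finset.sum_congr rfl fun j _ => ?_
            rw [Finset.sum_eq_single j]
            · rw [h2]; simp
            · intro b _ hb; rw [h2]; simp [Ne.symm hb]
            · intro h; exact absurd (Finset.mem_univ j) h
        _ = g k ⬝ᵥ g l := rfl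
        _ = if k = l then (1:ℝ) else 0 := hg k l
    have hvdot : ∀ l, v ⬝ᵥ (∑ j, g l j • f j.succ) = 0 := by
      intro l
      have hexp : v ⬝ᵥ (∑ j, g l j • f j.succ) = ∑ j, g l j * (v ⬝ᵥ f j.succ) := by
        simp only [dotProduct, Finset.sum_apply, Pi.smul_apply, smul_eq_mul]
        simp_rw [Finset.mul_sum]
        rw [Finset.sum_comm]
        exact Finset.sum_congr rfl fun a _ => Finset.sum_congr rfl fun b _ => by ring
      rw [hexp]
      refine Finset.sum_eq_zero fun j _ => ?_
      have : v ⬝ᵥ f j.succ = 0 := by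
        rw [← hf0, hf]
        simp [(Fin.succ_ne_zero j).symm]
      rw [this]; simp
    have hvdot' : ∀ l, (∑ j, g l j • f j.succ) ⬝ᵥ v = 0 := by
      intro l
      have hexp : (∑ j, g l j • f j.succ) ⬝ᵥ v = ∑ j, g l j * (f j.succ ⬝ᵥ v) := by
        simp only [dotProduct, Finset.sum_apply, Pi.smul_apply, smul_eq_mul]
        simp_rw [Finset.sum_mul, Finset.mul_sum]
        rw [Finset.sum_comm]
        exact Finset.sum_congr rfl fun a _ => Finset.sum_congr rfl fun b _ => by ring
      rw [hexp]
      refine Finset.sum_eq_zero fun j _ => ?_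
      have : f j.succ ⬝ᵥ v = 0 := by
        rw [← hf0, hf]
        simp [Fin.succ_ne_zero j]
      rw [this]; simp
    refine ⟨e, ?_, ?_⟩
    · intro i j
      refine Fin.cases ?_ ?_ i
      · refine Fin.cases ?_ ?_ j
        · simp only [he, Fin.cases_zero]
          rw [hv1]; simp
        · intro l
          simp only [he, Fin.cases_zero, Fin.cases_succ]
          rw [hvdot l]
          simp [(Fin.succ_ne_zero l).symm]
      · intro k
        refine Fin.cases ?_ ?_ j
        · simp only [he, Fin.cases_zero, Fin.cases_succ]
          rw [hvdot' k]
          simp [Fin.succ_ne_zero k]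
        · intro l
          simp only [he, Fin.cases_succ]
          rw [hdot1 k l]
          simp [Fin.succ_inj]
    · intro i
      refine Fin.cases ?_ ?_ i
      · simp only [he, Fin.cases_zero]; exact hv0
      · intro k
        simp only [he, Fin.cases_succ]
        rw [hdot k k, hgnull k]

lemma seg_ivt (q : ℝ → ℝ → ℝ → ℝ)
    (hq : Continuous fun p : ℝ × ℝ × ℝ => q p.1 p.2.1 p.2.2)
    (x y z x' y' z' : ℝ)
    (h1 : 0 ≤ q x y z) (h2 : q x' y' z' ≤ 0) :
    ∃ t ∈ Set.Icc (0:ℝ) 1,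
      q ((1-t)*x + t*x') ((1-t)*y + t*y') ((1-t)*z + t*z') = 0 := by
  set f : ℝ → ℝ := fun t => q ((1-t)*x + t*x') ((1-t)*y + t*y') ((1-t)*z + t*z') with hfdef
  have hf : Continuous f := by
    have hm : Continuous fun t : ℝ =>
        ((((1-t)*x + t*x'), (((1-t)*y + t*y'), ((1-t)*z + t*z'))) : ℝ × ℝ × ℝ) := by fun_prop
    exact hq.comp hm
  have hf0 : f 0 = q x y z := by norm_num [hfdef]
  have hf1 : f 1 = q x' y' z' := by norm_num [hfdef]
  have hsub := intermediate_value_Icc' (by norm_num : (0:ℝ) ≤ 1) hf.continuousOn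
  have hmem : (0:ℝ) ∈ Set.Icc (f 1) (f 0) := by
    rw [hf0, hf1]; exact ⟨h2, h1⟩
  obtain ⟨t, ht, htv⟩ := hsub hmem
  exact ⟨t, ht, htv⟩

lemma Epos (B c : ℝ) (hBc : 0 < B*c) :
    ∀ t ∈ Set.Icc (0:ℝ) 1, B*(1-t) + c*t ≠ 0 := by
  rintro t ⟨ht0, ht1⟩ hE
  rcases lt_trichotomy c 0 with hc|hc|hc
  · have hB : B < 0 := by nlinarith
    have h1 : B*(1-t) ≤ 0 := mul_nonpos_of_nonpos_of_nonneg hB.le (by linarith)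
    have h2 : c*t ≤ 0 := mul_nonpos_of_nonpos_of_nonneg hc.le ht0
    have h3 : B*(1-t) = 0 := by linarith
    rcases mul_eq_zero.mp h3 with h|h
    · exact absurd h hB.ne
    · have : t = 1 := by linarith
      rw [this] at hE; nlinarith
  · rw [hc, mul_zero] at hBc; exact lt_irrefl _ hBc
  · have hB : 0 < B := by nlinarith
    have h1 : 0 ≤ B*(1-t) := mul_nonneg hB.le (by linarith)
    have h2 : 0 ≤ c*t := mul_nonneg hc.le ht0
    have h3 : B*(1-t) = 0 := by linarith
    rcases mul_eq_zero.mp h3 with h|h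
    · exact absurd h hB.ne'
    · have : t = 1 := by linarith
      rw [this] at hE; nlinarith

lemma three_var (a b c p11 p22 p33 p12 p13 p23 : ℝ) (hu : 0 < p11) (hw : p22 < 0) :
    ∃ x y z : ℝ, ¬(x = 0 ∧ y = 0 ∧ z = 0) ∧ a*x*y + b*x*z + c*y*z = 0 ∧
      p11*x*x + p22*y*y + p33*z*z + p12*x*y + p13*x*z + p23*y*z = 0 := by
  set q : ℝ → ℝ → ℝ → ℝ := fun x y z =>
    p11*x*x + p22*y*y + p33*z*z + p12*x*y + p13*x*z + p23*y*z with hqdef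
  have hq : Continuous fun p : ℝ × ℝ × ℝ => q p.1 p.2.1 p.2.2 := by
    simp only [hqdef]; fun_prop
  have hq100 : q 1 0 0 = p11 := by norm_num [hqdef]
  have hq010 : q 0 1 0 = p22 := by norm_num [hqdef]
  by_cases hb : b = 0
  · -- plane case through y = 0 and a*x + c*z = 0
    set s : ℝ := if 0 ≤ c then 1 else -1 with hsdef
    have hs : s = 1 ∨ s = -1 := by
      by_cases h : 0 ≤ c <;> simp [hsdef, h]
    have hs0 : s ≠ 0 := by rcases hs with h|h <;> rw [h] <;> norm_num
    have hsc : 0 ≤ s*c := by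
      by_cases h : 0 ≤ c
      · simp only [hsdef, if_pos h]; linarith
      · simp only [hsdef, if_neg h]; push_neg at h; nlinarith
    by_cases hac : a = 0 ∧ c = 0
    · obtain ⟨t, ht, htv⟩ := seg_ivt q hq 1 0 0 0 1 0 (by rw [hq100]; exact hu.le)
        (by rw [hq010]; exact hw.le)
      refine ⟨(1-t)*1 + t*0, (1-t)*0 + t*1, (1-t)*0 + t*0, ?_, ?_, ?_⟩
      · rintro ⟨h1, h2, -⟩
        obtain ⟨ht0, ht1⟩ := ht
        nlinarith
      · rw [hb, hac.1, hac.2]; ring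
      · exact htv
    · have hpne : ¬(s*c = 0 ∧ -(s*a) = 0) := by
        rintro ⟨h1, h2⟩
        rcases mul_eq_zero.mp h1 with h|h
        · exact hs0 h
        · have h2' : s*a = 0 := by linarith
          rcases mul_eq_zero.mp h2' with h'|h'
          · exact hs0 h'
          · exact hac ⟨h', h⟩
      by_cases hqp : q (s*c) 0 (-(s*a)) ≤ 0
      · obtain ⟨t, ht, htv⟩ := seg_ivt q hq 1 0 0 (s*c) 0 (-(s*a))
          (by rw [hq100]; exact hu.le) hqp
        refine ⟨(1-t)*1 + t*(s*c), (1-t)*0 + t*0, (1-t)*0 + t*(-(s*a)), ?_, ?_, ?_⟩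
        · rintro ⟨h1, -, h3⟩
          obtain ⟨ht0, ht1⟩ := ht
          have hx1 : 0 ≤ (1-t)*1 := by linarith
          have hx2 : 0 ≤ t*(s*c) := mul_nonneg ht0 hsc
          have h1t : (1-t)*1 = 0 := by linarith
          have ht1' : t = 1 := by linarith
          rw [ht1'] at h1 h3
          exact hpne ⟨by linarith, by linarith⟩
        · rw [hb]; ring
        · exact htv
      · push_neg at hqp
        obtain ⟨t, ht, htv⟩ := seg_ivt q hq (s*c) 0 (-(s*a)) 0 1 0 hqp.le
          (by rw [hq010]; exact hw.le)
        refine ⟨(1-t)*(s*c) + t*0, (1-t)*0 + t*1, (1-t)*(-(s*a)) + t*0, ?_, ?_, ?_⟩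
        · rintro ⟨h1, h2, h3⟩
          obtain ⟨ht0, ht1⟩ := ht
          have ht0' : t = 0 := by linarith
          rw [ht0'] at h1 h3
          exact hpne ⟨by linarith, by linarith⟩
        · rw [hb]; ring
        · exact htv
  · by_cases hc : c = 0
    · -- plane case through x = 0 and a*y + b*z = 0
      set s : ℝ := if 0 ≤ b then 1 else -1 with hsdef
      have hs : s = 1 ∨ s = -1 := by
        by_cases h : 0 ≤ b <;> simp [hsdef, h]
      have hs0 : s ≠ 0 := by rcases hs with h|h <;> rw [h] <;> norm_num
      have hsb : 0 < s*b := by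
        by_cases h : 0 ≤ b
        · simp only [hsdef, if_pos h]
          rcases lt_or_eq_of_le h with h'|h'
          · linarith
          · exact absurd h'.symm hb
        · simp only [hsdef, if_neg h]; push_neg at h; nlinarith
      by_cases hqp : q 0 (s*b) (-(s*a)) ≤ 0
      · obtain ⟨t, ht, htv⟩ := seg_ivt q hq 1 0 0 0 (s*b) (-(s*a))
          (by rw [hq100]; exact hu.le) hqp
        refine ⟨(1-t)*1 + t*0, (1-t)*0 + t*(s*b), (1-t)*0 + t*(-(s*a)), ?_, ?_, ?_⟩
        · rintro ⟨h1, h2, -⟩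
          obtain ⟨ht0, ht1⟩ := ht
          have ht1' : t = 1 := by linarith
          rw [ht1'] at h2
          have : s*b = 0 := by linarith
          exact absurd this hsb.ne'
        · rw [hc]; ring
        · exact htv
      · push_neg at hqp
        obtain ⟨t, ht, htv⟩ := seg_ivt q hq 0 (s*b) (-(s*a)) 0 1 0 hqp.le
          (by rw [hq010]; exact hw.le)
        refine ⟨(1-t)*0 + t*0, (1-t)*(s*b) + t*1, (1-t)*(-(s*a)) + t*0, ?_, ?_, ?_⟩
        · rintro ⟨-, h2, -⟩
          obtain ⟨ht0, ht1⟩ := ht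
          have hy1 : 0 ≤ (1-t)*(s*b) := mul_nonneg (by linarith) hsb.le
          have hy2 : 0 ≤ t*1 := by linarith
          have h1t : (1-t)*(s*b) = 0 := by linarith
          rcases mul_eq_zero.mp h1t with h|h
          · have ht1' : t = 1 := by linarith
            rw [ht1'] at h2; linarith
          · exact absurd h hsb.ne'
        · rw [hc]; ring
        · exact htv
    · -- main rational curve case: b ≠ 0, c ≠ 0
      set ε : ℝ := if 0 < b*c then 1 else -1 with hεdef
      have hε : ε = 1 ∨ ε = -1 := by
        by_cases h : 0 < b*c <;> simp [hεdef, h]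
      have hε2 : ε*ε = 1 := by rcases hε with h|h <;> rw [h] <;> norm_num
      have hε0 : ε ≠ 0 := by rcases hε with h|h <;> rw [h] <;> norm_num
      have hBc : 0 < (ε*b)*c := by
        rcases lt_trichotomy (b*c) 0 with h|h|h
        · have : ¬ (0 < b*c) := by linarith
          simp only [hεdef, if_neg this]; nlinarith
        · exfalso; rcases mul_eq_zero.mp h with h'|h'
          · exact hb h'
          · exact hc h'
        · simp only [hεdef, if_pos h]; nlinarith
      set E : ℝ → ℝ := fun t => (ε*b)*(1-t) + c*t with hEdef
      have hEne : ∀ t ∈ Set.Icc (0:ℝ) 1, E t ≠ 0 := fun t ht => Epos (ε*b) c hBc t ht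
      set f : ℝ → ℝ := fun t => q ((1-t)*(E t)) (ε*t*(E t)) (-(a*t*(1-t))) with hfdef
      have hf : Continuous f := by
        have hm : Continuous fun t : ℝ =>
            ((((1-t)*(E t)), ((ε*t*(E t)), (-(a*t*(1-t))))) : ℝ × ℝ × ℝ) := by
          simp only [hEdef]; fun_prop
        exact hq.comp hm
      have hf0 : f 0 = p11*((ε*b)*(ε*b)) := by
        simp only [hfdef, hEdef, hqdef]; norm_num; ring
      have hf1 : f 1 = p22*(c*c) := by
        simp only [hfdef, hEdef, hqdef]; norm_num
        linear_combination (p22*c^2) * hε2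
      have hf0pos : 0 < f 0 := by
        rw [hf0]
        have : ε*b ≠ 0 := mul_ne_zero hε0 hb
        exact mul_pos hu (mul_self_pos.mpr this)
      have hf1neg : f 1 < 0 := by
        rw [hf1]
        exact mul_neg_of_neg_of_pos hw (mul_self_pos.mpr hc)
      have hsub := intermediate_value_Icc' (by norm_num : (0:ℝ) ≤ 1) hf.continuousOn
      have hmem : (0:ℝ) ∈ Set.Icc (f 1) (f 0) := ⟨hf1neg.le, hf0pos.le⟩
      obtain ⟨t, ht, htv⟩ := hsub hmem
      refine ⟨(1-t)*(E t), ε*t*(E t), -(a*t*(1-t)), ?_, ?_, ?_⟩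
      · rintro ⟨h1, h2, -⟩
        have hEt : E t ≠ 0 := hEne t ht
        rcases mul_eq_zero.mp h1 with h|h
        · have ht1 : t = 1 := by linarith
          rw [ht1] at h2
          rcases mul_eq_zero.mp h2 with h'|h'
          · rcases mul_eq_zero.mp h' with h''|h''
            · exact hε0 h''
            · norm_num at h''
          · exact hEne 1 (by norm_num) h'
        · exact hEt h
      · simp only [hEdef]
        linear_combination (a*t*(1-t)*((ε*b)*(1-t)+c*t)*b*(1-t)) * hε2
      · exact htv

lemma expand3 {N : ℕ} (S : Matrix (Fin N) (Fin N) ℝ) (u w r : Fin N → ℝ) (x y z : ℝ) :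
    (x•u + y•w + z•r) ⬝ᵥ S.mulVec (x•u + y•w + z•r) =
      x*x*(u ⬝ᵥ S.mulVec u) + y*y*(w ⬝ᵥ S.mulVec w) + z*z*(r ⬝ᵥ S.mulVec r)
      + x*y*((u ⬝ᵥ S.mulVec w) + (w ⬝ᵥ S.mulVec u))
      + x*z*((u ⬝ᵥ S.mulVec r) + (r ⬝ᵥ S.mulVec u))
      + y*z*((w ⬝ᵥ S.mulVec r) + (r ⬝ᵥ S.mulVec w)) := by
  simp [Matrix.mulVec_add, Matrix.mulVec_smul, add_dotProduct, smul_dotProduct,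
    dotProduct_add, dotProduct_smul, smul_eq_mul]
  ring

lemma dot3 {N : ℕ} (u w r s : Fin N → ℝ) (x y z : ℝ) :
    (x•u + y•w + z•r) ⬝ᵥ s = x*(u ⬝ᵥ s) + y*(w ⬝ᵥ s) + z*(r ⬝ᵥ s) := by
  simp [add_dotProduct, smul_dotProduct, smul_eq_mul]

theorem stmt_3 (n : ℕ) (hn : 3 ≤ n) (A B : Matrix (Fin n) (Fin n) ℝ)
    (hA : A.trace = 0) (hB : B.trace = 0) :
    ∃ v : Fin n → ℝ, v ≠ 0 ∧ v ⬝ᵥ A.mulVec v = 0 ∧ v ⬝ᵥ B.mulVec v = 0 := by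
  obtain ⟨f, hf, hfA⟩ := exists_null_onb n A hA
  have hBtr : ∑ i, f i ⬝ᵥ B.mulVec (f i) = 0 := by
    rw [sum_diag_eq_trace B f hf, hB]
  set t : Fin n → ℝ := fun i => f i ⬝ᵥ B.mulVec (f i) with htdef
  have hne : Nonempty (Fin n) := Fin.pos_iff_nonempty.mp (by omega)
  have hfne : ∀ i, f i ≠ 0 := by
    intro i h
    have := hf i i
    rw [h] at this
    simp [zero_dotProduct] at this
  by_cases hz : ∃ i, t i = 0
  · obtain ⟨i, hi⟩ := hz
    exact ⟨f i, hfne i, hfA i, hi⟩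
  · push_neg at hz
    have hex : ∃ i, 0 < t i := by
      by_contra h
      push_neg at h
      have : ∑ i, t i < 0 := by
        have := Finset.sum_lt_sum_of_nonempty (s := (Finset.univ : Finset (Fin n)))
          Finset.univ_nonempty (f := t) (g := fun _ => (0:ℝ))
          (fun i _ => lt_of_le_of_ne (h i) (hz i))
        simpa using this
      rw [hBtr] at this; linarith
    have hex' : ∃ j, t j < 0 := by
      by_contra h
      push_neg at h
      have : (0:ℝ) < ∑ i, t i := by
        have := Finset.sum_lt_sum_of_nonempty (s := (Finset.univ : Finset (Fin n)))
          Finset.univ_nonempty (f := fun _ => (0:ℝ)) (g := t)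
          (fun i _ => lt_of_le_of_ne (h i) (Ne.symm (hz i)))
        simpa using this
      rw [hBtr] at this; linarith
    obtain ⟨i, hi⟩ := hex
    obtain ⟨j, hj⟩ := hex'
    have hij : i ≠ j := fun h => by rw [h] at hi; linarith
    have hk : ∃ k, k ≠ i ∧ k ≠ j := by
      by_contra h
      push_neg at h
      have hsub : (Finset.univ : Finset (Fin n)) ⊆ {i, j} := by
        intro k _
        by_cases hk' : k = i
        · simp [hk']
        · simp [h k hk']
      have h1 : n ≤ 2 := by
        calc n = (Finset.univ : Finset (Fin n)).card := by simp
          _ ≤ ({i, j} : Finset (Fin n)).card := Finset.card_le_card hsub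
          _ ≤ 2 := Finset.card_insert_le i {j} |>.trans (by simp)
      omega
    obtain ⟨k, hki, hkj⟩ := hk
    obtain ⟨x, y, z, hxyz, h1, h2⟩ := three_var
      ((f i ⬝ᵥ A.mulVec (f j)) + (f j ⬝ᵥ A.mulVec (f i)))
      ((f i ⬝ᵥ A.mulVec (f k)) + (f k ⬝ᵥ A.mulVec (f i)))
      ((f j ⬝ᵥ A.mulVec (f k)) + (f k ⬝ᵥ A.mulVec (f j)))
      (t i) (t j) (t k)
      ((f i ⬝ᵥ B.mulVec (f j)) + (f j ⬝ᵥ B.mulVec (f i)))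
      ((f i ⬝ᵥ B.mulVec (f k)) + (f k ⬝ᵥ B.mulVec (f i)))
      ((f j ⬝ᵥ B.mulVec (f k)) + (f k ⬝ᵥ B.mulVec (f j)))
      hi hj
    refine ⟨x • f i + y • f j + z • f k, ?_, ?_, ?_⟩
    · intro h0
      apply hxyz
      have di : (x • f i + y • f j + z • f k) ⬝ᵥ f i = x := by
        rw [dot3]
        simp [hf, Ne.symm hij, hki]
      have dj : (x • f i + y • f j + z • f k) ⬝ᵥ f j = y := by
        rw [dot3]
        simp [hf, hij, hkj]
      have dk : (x • f i + y • f j + z • f k) ⬝ᵥ f k = z := by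
        rw [dot3]
        simp [hf, Ne.symm hki, Ne.symm hkj]
      refine ⟨?_, ?_, ?_⟩
      · rw [← di, h0]; simp [zero_dotProduct]
      · rw [← dj, h0]; simp [zero_dotProduct]
      · rw [← dk, h0]; simp [zero_dotProduct]
    · rw [expand3, hfA i, hfA j, hfA k]
      linear_combination h1
    · rw [expand3]
      simp only [htdef] at h2
      linear_combination h2
end

section
/- Let A, B be real n×n matrices with tr A = tr B = 0. Then there exists an orthogonal matrix V ∈ ℝ^{n×n} such that VᵀAV is hollow and VᵀBV is almost hollow. -/
open Matrix Real

noncomputable section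
namespace Stmt4Aux

/-- quadratic form -/
def qf {n : ℕ} (M : Matrix (Fin n) (Fin n) ℝ) (x : Fin n → ℝ) : ℝ :=
  x ⬝ᵥ M.mulVec x

lemma qf_eq {n : ℕ} (M : Matrix (Fin n) (Fin n) ℝ) (x : Fin n → ℝ) :
    qf M x = ∑ i, ∑ j, x i * M i j * x j := by
  simp [qf, dotProduct, mulVec, Finset.mul_sum, mul_assoc]

lemma continuous_qf {n : ℕ} (M : Matrix (Fin n) (Fin n) ℝ) :
    Continuous fun x : Fin n → ℝ => qf M x := by
  simp only [qf_eq]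
  fun_prop

lemma qf_smul {n : ℕ} (M : Matrix (Fin n) (Fin n) ℝ) (c : ℝ) (x : Fin n → ℝ) :
    qf M (c • x) = c ^ 2 * qf M x := by
  simp [qf_eq, Finset.mul_sum]
  congr 1; ext i; congr 1; ext j; ring

/-- there is an orthogonal matrix with prescribed first column -/
lemma exists_orthogonal_col {n : ℕ} (x : Fin n → ℝ) (hx : x ⬝ᵥ x = 1) (a : Fin n) :
    ∃ W : Matrix (Fin n) (Fin n) ℝ, Wᵀ * W = 1 ∧ ∀ i, W i a = x i := by
  classical
  set y : EuclideanSpace ℝ (Fin n) := WithLp.toLp 2 x with hy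
  have hnorm : ‖y‖ = 1 := by
    have h2 : ‖y‖ ^ 2 = 1 := by
      rw [← real_inner_self_eq_norm_sq, EuclideanSpace.inner_eq_star_dotProduct]
      simpa [y] using hx
    nlinarith [norm_nonneg y]
  have hcard : Module.finrank ℝ (EuclideanSpace ℝ (Fin n)) = Fintype.card (Fin n) := by
    simp
  have horth : Orthonormal ℝ (Set.restrict {a} (fun _ : Fin n => y)) := by
    constructor
    · intro i; exact hnorm
    · intro i j hij
      exact absurd (Subsingleton.elim i j) hij
  obtain ⟨b, hb⟩ := horth.exists_orthonormalBasis_extension_of_card_eq hcard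
  refine ⟨Matrix.of fun i j => b j i, ?_, ?_⟩
  · ext i j
    have := orthonormal_iff_ite.mp b.orthonormal i j
    simp only [PiLp.inner_apply, RCLike.inner_apply, conj_trivial] at this
    simp only [Matrix.mul_apply, transpose_apply, Matrix.of_apply, Matrix.one_apply]
    simpa [mul_comm] using this
  · intro i
    have : b a = y := hb a (Set.mem_singleton a)
    simp [Matrix.of_apply, this, y]


/-- entry of a triple product -/
lemma conj_entry {n : ℕ} (X M Y : Matrix (Fin n) (Fin n) ℝ) (a b : Fin n) :
    (Xᵀ * M * Y) a b = ∑ i, ∑ j, X i a * M i j * Y j b := by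
  simp only [Matrix.mul_apply, transpose_apply, Finset.sum_mul]
  exact Finset.sum_comm

lemma conj_entry_qf {n : ℕ} (W M : Matrix (Fin n) (Fin n) ℝ) (a : Fin n) (x : Fin n → ℝ)
    (hx : ∀ i, W i a = x i) :
    (Wᵀ * M * W) a a = x ⬝ᵥ M.mulVec x := by
  rw [conj_entry]
  simp only [dotProduct, mulVec, Finset.mul_sum]
  congr 1; ext i; congr 1; ext j; rw [hx i, hx j]; ring

/-- extend an m×m matrix to (m+1)×(m+1) as 1 ⊕ U -/
def ext1 {m : ℕ} (U : Matrix (Fin m) (Fin m) ℝ) : Matrix (Fin (m+1)) (Fin (m+1)) ℝ :=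
  Matrix.of fun i j =>
    Fin.cases (Fin.cases 1 (fun _ => 0) j) (fun i' => Fin.cases 0 (fun j' => U i' j') j) i

@[simp] lemma ext1_zero_zero {m : ℕ} (U : Matrix (Fin m) (Fin m) ℝ) : ext1 U 0 0 = 1 := rfl
@[simp] lemma ext1_zero_succ {m : ℕ} (U : Matrix (Fin m) (Fin m) ℝ) (j : Fin m) :
    ext1 U 0 j.succ = 0 := rfl
@[simp] lemma ext1_succ_zero {m : ℕ} (U : Matrix (Fin m) (Fin m) ℝ) (i : Fin m) :
    ext1 U i.succ 0 = 0 := rfl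
@[simp] lemma ext1_succ_succ {m : ℕ} (U : Matrix (Fin m) (Fin m) ℝ) (i j : Fin m) :
    ext1 U i.succ j.succ = U i j := rfl

lemma ext1_orth {m : ℕ} (U : Matrix (Fin m) (Fin m) ℝ) (hU : Uᵀ * U = 1) :
    (ext1 U)ᵀ * ext1 U = 1 := by
  ext i j
  have hU' := fun p q => congrFun (congrFun hU p) q
  simp only [Matrix.mul_apply, transpose_apply] at hU' ⊢
  rw [Fin.sum_univ_succ]
  induction i using Fin.cases with
  | zero =>
    induction j using Fin.cases with
    | zero => simp [Matrix.one_apply, Fin.succ_ne_zero]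
    | succ j => simp [Matrix.one_apply, (Fin.succ_ne_zero j).symm]
  | succ i =>
    induction j using Fin.cases with
    | zero => simp [Matrix.one_apply, Fin.succ_ne_zero]
    | succ j =>
      simp only [ext1_succ_zero, ext1_succ_succ, mul_zero, zero_mul, zero_add]
      rw [hU' i j]
      simp [Matrix.one_apply, Fin.succ_inj]

lemma ext1_conj_zero {m : ℕ} (U : Matrix (Fin m) (Fin m) ℝ)
    (M : Matrix (Fin (m+1)) (Fin (m+1)) ℝ) :
    ((ext1 U)ᵀ * M * ext1 U) 0 0 = M 0 0 := by
  rw [conj_entry]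
  rw [Fin.sum_univ_succ]
  simp [Fin.sum_univ_succ]

lemma ext1_conj_succ {m : ℕ} (U : Matrix (Fin m) (Fin m) ℝ)
    (M : Matrix (Fin (m+1)) (Fin (m+1)) ℝ) (p q : Fin m) :
    ((ext1 U)ᵀ * M * ext1 U) p.succ q.succ
      = (Uᵀ * (M.submatrix Fin.succ Fin.succ) * U) p q := by
  rw [conj_entry, conj_entry]
  rw [Fin.sum_univ_succ]
  simp only [ext1_zero_succ, zero_mul, mul_zero, Finset.sum_const_zero, zero_add]
  congr 1; ext i
  rw [Fin.sum_univ_succ]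
  simp [submatrix_apply]

lemma trace_submatrix_succ {m : ℕ} (M : Matrix (Fin (m+1)) (Fin (m+1)) ℝ) :
    (M.submatrix Fin.succ Fin.succ).trace = M.trace - M 0 0 := by
  simp only [Matrix.trace, Matrix.diag, submatrix_apply]
  rw [Fin.sum_univ_succ (f := fun i => M i i)]
  ring


/-- IVT helper: a continuous family of nonzero B-null vectors whose qf A changes sign -/
lemma ivt_helper {n : ℕ} (A B : Matrix (Fin n) (Fin n) ℝ) (p : ℝ → Fin n → ℝ)
    (hp : Continuous p) (a b : ℝ)
    (hnz : ∀ t ∈ Set.uIcc a b, p t ⬝ᵥ p t ≠ 0)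
    (hB : ∀ t ∈ Set.uIcc a b, qf B (p t) = 0)
    (hsign : qf A (p a) * qf A (p b) ≤ 0) :
    ∃ x : Fin n → ℝ, x ⬝ᵥ x = 1 ∧ qf A x = 0 ∧ qf B x = 0 := by
  have hc : ContinuousOn (fun t => qf A (p t)) (Set.uIcc a b) :=
    ((continuous_qf A).comp hp).continuousOn
  have h0 : (0 : ℝ) ∈ Set.uIcc (qf A (p a)) (qf A (p b)) := by
    rw [Set.mem_uIcc]
    rcases mul_nonpos_iff.mp hsign with h | h
    · exact Or.inr ⟨h.2, h.1⟩
    · exact Or.inl ⟨h.1, h.2⟩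
  obtain ⟨t, ht, hqt⟩ := intermediate_value_uIcc hc h0
  set v := p t with hv
  have hvv : v ⬝ᵥ v ≠ 0 := hnz t ht
  have hvpos : 0 < v ⬝ᵥ v := by
    rcases lt_or_gt_of_ne hvv with h | h
    · exfalso
      have : 0 ≤ v ⬝ᵥ v := by
        simp only [dotProduct]
        exact Finset.sum_nonneg fun i _ => mul_self_nonneg _
      linarith
    · exact h
  refine ⟨(Real.sqrt (v ⬝ᵥ v))⁻¹ • v, ?_, ?_, ?_⟩
  · have hs : Real.sqrt (v ⬝ᵥ v) * Real.sqrt (v ⬝ᵥ v) = v ⬝ᵥ v := Real.mul_self_sqrt hvpos.le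
    have hs0 : Real.sqrt (v ⬝ᵥ v) ≠ 0 := by positivity
    simp only [smul_dotProduct, dotProduct_smul, smul_eq_mul]
    field_simp
    rw [Real.sq_sqrt hvpos.le]
  · rw [qf_smul]
    simp [hqt]
    exact Or.inr hqt
  · rw [qf_smul, hB t ht]
    ring

/-- a vector supported on two coordinates -/
def v2 {n : ℕ} (i j : Fin n) (x y : ℝ) : Fin n → ℝ :=
  x • (Pi.single i 1 : Fin n → ℝ) + y • (Pi.single j 1 : Fin n → ℝ)

lemma continuous_v2 {n : ℕ} (i j : Fin n) (f g : ℝ → ℝ) (hf : Continuous f)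
    (hg : Continuous g) : Continuous fun t => v2 i j (f t) (g t) := by
  unfold v2
  fun_prop

lemma qf_single {n : ℕ} (M : Matrix (Fin n) (Fin n) ℝ) (i j : Fin n) :
    (Pi.single i 1 : Fin n → ℝ) ⬝ᵥ M.mulVec (Pi.single j 1) = M i j := by
  rw [Matrix.mulVec_single_one, single_dotProduct]
  simp

lemma qf_v2 {n : ℕ} (M : Matrix (Fin n) (Fin n) ℝ) (i j : Fin n) (x y : ℝ) :
    qf M (v2 i j x y) = x^2 * M i i + y^2 * M j j + x*y*(M i j + M j i) := by
  simp only [qf, v2, Matrix.mulVec_add, Matrix.mulVec_smul, dotProduct_add, add_dotProduct,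
    smul_dotProduct, dotProduct_smul, smul_eq_mul, qf_single]
  ring

lemma dot_v2 {n : ℕ} (i j : Fin n) (hij : i ≠ j) (x y : ℝ) :
    v2 i j x y ⬝ᵥ v2 i j x y = x^2 + y^2 := by
  simp only [v2, dotProduct_add, add_dotProduct, smul_dotProduct, dotProduct_smul,
    smul_eq_mul, single_dotProduct, dotProduct_single]
  simp [Pi.single_apply, hij, hij.symm]
  ring

lemma exists_nonneg_diag {n : ℕ} (hn : n ≠ 0) (d : Fin n → ℝ) (h : ∑ i, d i = 0) :
    (∃ i, 0 ≤ d i) ∧ (∃ j, d j ≤ 0) := by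
  constructor
  · by_contra hc
    push_neg at hc
    have : ∑ i, d i < 0 := by
      have hne : (Finset.univ : Finset (Fin n)).Nonempty := by
        simpa [Finset.univ_nonempty_iff] using Fin.pos_iff_nonempty.mp (Nat.pos_of_ne_zero hn)
      exact Finset.sum_neg (fun i _ => hc i) hne
    linarith
  · by_contra hc
    push_neg at hc
    have : 0 < ∑ i, d i := by
      have hne : (Finset.univ : Finset (Fin n)).Nonempty := by
        simpa [Finset.univ_nonempty_iff] using Fin.pos_iff_nonempty.mp (Nat.pos_of_ne_zero hn)
      exact Finset.sum_pos (fun i _ => hc i) hne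
    linarith

lemma dot_single_one {n : ℕ} (i : Fin n) :
    (Pi.single i 1 : Fin n → ℝ) ⬝ᵥ (Pi.single i 1 : Fin n → ℝ) = 1 := by
  rw [single_dotProduct]
  simp

lemma exists_isotropic {n : ℕ} (hn : n ≠ 0) (A : Matrix (Fin n) (Fin n) ℝ)
    (hA : A.trace = 0) : ∃ x : Fin n → ℝ, x ⬝ᵥ x = 1 ∧ qf A x = 0 := by
  have htr : ∑ i, A i i = 0 := hA
  obtain ⟨⟨i, hi⟩, ⟨j, hj⟩⟩ := exists_nonneg_diag hn (fun i => A i i) htr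
  by_cases hij : i = j
  · subst hij
    have h0 : A i i = 0 := le_antisymm hj hi
    exact ⟨Pi.single i 1, dot_single_one i, by rw [qf]; rw [qf_single]; exact h0⟩
  · have := ivt_helper A 0 (fun t => v2 i j (Real.cos t) (Real.sin t))
      (continuous_v2 i j _ _ Real.continuous_cos Real.continuous_sin) 0 (Real.pi/2)
      (fun t _ => by
        rw [dot_v2 i j hij]
        nlinarith [Real.sin_sq_add_cos_sq t])
      (fun t _ => by simp [qf, Matrix.zero_mulVec])
      (by
        simp only [Real.cos_zero, Real.sin_zero, Real.cos_pi_div_two, Real.sin_pi_div_two, qf_v2]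
        ring_nf
        nlinarith [hi, hj])
    obtain ⟨x, hx1, hx2, _⟩ := this
    exact ⟨x, hx1, hx2⟩

lemma trace_conj {n : ℕ} (W M : Matrix (Fin n) (Fin n) ℝ) (hW : Wᵀ * W = 1) :
    (Wᵀ * M * W).trace = M.trace := by
  have h2 : W * Wᵀ = 1 := mul_eq_one_comm.mp hW
  rw [Matrix.trace_mul_cycle, h2, Matrix.one_mul]

lemma hollowize : ∀ (n : ℕ) (A : Matrix (Fin n) (Fin n) ℝ), A.trace = 0 →
    ∃ V : Matrix (Fin n) (Fin n) ℝ, Vᵀ * V = 1 ∧ ∀ i, (Vᵀ * A * V) i i = 0 := by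
  intro n
  induction n with
  | zero =>
    intro A _
    exact ⟨1, by simp, fun i => i.elim0⟩
  | succ m ih =>
    intro A hA
    obtain ⟨x, hx1, hx2⟩ := exists_isotropic (Nat.succ_ne_zero m) A hA
    obtain ⟨W, hW, hWcol⟩ := exists_orthogonal_col x hx1 0
    set A₁ := Wᵀ * A * W with hA₁
    have h00 : A₁ 0 0 = 0 := by
      rw [hA₁, conj_entry_qf W A 0 x hWcol]
      exact hx2
    have htr1 : A₁.trace = 0 := by rw [hA₁, trace_conj W A hW, hA]
    have htr2 : (A₁.submatrix Fin.succ Fin.succ).trace = 0 := by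
      rw [trace_submatrix_succ, htr1, h00]; ring
    obtain ⟨U, hU, hUdiag⟩ := ih (A₁.submatrix Fin.succ Fin.succ) htr2
    refine ⟨W * ext1 U, ?_, ?_⟩
    · rw [Matrix.transpose_mul, Matrix.mul_assoc, ← Matrix.mul_assoc Wᵀ W, hW,
        Matrix.one_mul]
      exact ext1_orth U hU
    · have hconj : (W * ext1 U)ᵀ * A * (W * ext1 U) = (ext1 U)ᵀ * A₁ * ext1 U := by
        rw [Matrix.transpose_mul, hA₁]
        simp only [Matrix.mul_assoc]
      rw [hconj]
      intro i
      induction i using Fin.cases with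
      | zero => rw [ext1_conj_zero]; exact h00
      | succ p => rw [ext1_conj_succ]; exact hUdiag p

/-- a vector supported on three coordinates -/
def v3 {n : ℕ} (i j k : Fin n) (x y z : ℝ) : Fin n → ℝ :=
  x • (Pi.single i 1 : Fin n → ℝ) + y • (Pi.single j 1 : Fin n → ℝ)
    + z • (Pi.single k 1 : Fin n → ℝ)

lemma continuous_v3 {n : ℕ} (i j k : Fin n) (f g h : ℝ → ℝ) (hf : Continuous f)
    (hg : Continuous g) (hh : Continuous h) :
    Continuous fun t => v3 i j k (f t) (g t) (h t) := by
  unfold v3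
  fun_prop

lemma qf_v3 {n : ℕ} (M : Matrix (Fin n) (Fin n) ℝ) (i j k : Fin n) (x y z : ℝ) :
    qf M (v3 i j k x y z) = x^2 * M i i + y^2 * M j j + z^2 * M k k
      + x*y*(M i j + M j i) + x*z*(M i k + M k i) + y*z*(M j k + M k j) := by
  simp only [qf, v3, Matrix.mulVec_add, Matrix.mulVec_smul, dotProduct_add, add_dotProduct,
    smul_dotProduct, dotProduct_smul, smul_eq_mul, qf_single]
  ring

lemma dot_v3 {n : ℕ} (i j k : Fin n) (hij : i ≠ j) (hik : i ≠ k) (hjk : j ≠ k)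
    (x y z : ℝ) : v3 i j k x y z ⬝ᵥ v3 i j k x y z = x^2 + y^2 + z^2 := by
  simp only [v3, dotProduct_add, add_dotProduct, smul_dotProduct, dotProduct_smul,
    smul_eq_mul, single_dotProduct, dotProduct_single]
  simp [Pi.single_apply, hij, hij.symm, hik, hik.symm, hjk, hjk.symm]
  ring

lemma exists_cos_sin (a b : ℝ) (h : a^2 + b^2 = 1) :
    ∃ t : ℝ, Real.cos t = a ∧ Real.sin t = b := by
  have ha1 : -1 ≤ a := by nlinarith
  have ha2 : a ≤ 1 := by nlinarith
  have hsq : Real.sqrt (1 - a^2) = |b| := by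
    rw [show 1 - a^2 = b^2 by linarith]
    exact Real.sqrt_sq_eq_abs b
  rcases le_or_gt 0 b with hb | hb
  · exact ⟨Real.arccos a, Real.cos_arccos ha1 ha2,
      by rw [Real.sin_arccos, hsq, abs_of_nonneg hb]⟩
  · refine ⟨-Real.arccos a, by rw [Real.cos_neg]; exact Real.cos_arccos ha1 ha2, ?_⟩
    rw [Real.sin_neg, Real.sin_arccos, hsq, abs_of_neg hb]
    ring

lemma qf_v3_i {n : ℕ} (A : Matrix (Fin n) (Fin n) ℝ) (i j k : Fin n) (x : ℝ) :
    qf A (v3 i j k x 0 0) = x^2 * A i i := by rw [qf_v3]; ring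

lemma qf_v3_j {n : ℕ} (A : Matrix (Fin n) (Fin n) ℝ) (i j k : Fin n) (y : ℝ) :
    qf A (v3 i j k 0 y 0) = y^2 * A j j := by rw [qf_v3]; ring

set_option maxHeartbeats 1000000 in
lemma joint_isotropic_core {n : ℕ} (A B : Matrix (Fin n) (Fin n) ℝ)
    (i j k : Fin n) (hij : i ≠ j) (hik : i ≠ k) (hjk : j ≠ k)
    (hBi : B i i = 0) (hBj : B j j = 0) (hBk : B k k = 0)
    (hi : 0 ≤ A i i) (hj : A j j ≤ 0) :
    ∃ x : Fin n → ℝ, x ⬝ᵥ x = 1 ∧ qf A x = 0 ∧ qf B x = 0 := by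
  set β := B i j + B j i with hβdef
  set γ := B i k + B k i with hγdef
  set δ := B j k + B k j with hδdef
  have hqB : ∀ x y z : ℝ, qf B (v3 i j k x y z) = β*(x*y) + γ*(x*z) + δ*(y*z) := by
    intro x y z
    rw [qf_v3, hBi, hBj, hBk]
    ring
  have hdot := dot_v3 i j k hij hik hjk
  have hAij : A i i * A j j ≤ 0 := mul_nonpos_iff.mpr (Or.inl ⟨hi, hj⟩)
  by_cases hβ : β = 0
  · -- Case 1: circle in the (i,j) plane
    apply ivt_helper A B (fun t => v3 i j k (Real.cos t) (Real.sin t) 0)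
      (continuous_v3 i j k _ _ _ Real.continuous_cos Real.continuous_sin continuous_const)
      0 (Real.pi/2)
    · intro t _
      rw [hdot]
      have h1 : (Real.cos t)^2 + (Real.sin t)^2 + (0:ℝ)^2 = 1 := by
        linear_combination Real.sin_sq_add_cos_sq t
      rw [h1]
      norm_num
    · intro t _
      rw [hqB, hβ]
      ring
    · simp only [Real.cos_zero, Real.sin_zero, Real.cos_pi_div_two, Real.sin_pi_div_two]
      rw [qf_v3_i, qf_v3_j]
      nlinarith [hAij]
  by_cases hγ : γ = 0
  · -- Case 2: via the (i,k) plane and the plane spanned by w, e_j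
    have hr0 : (0:ℝ) < β^2 + δ^2 := by positivity
    set r := Real.sqrt (β^2 + δ^2) with hrdef
    have hr : 0 < r := Real.sqrt_pos.mpr hr0
    have hr2 : r^2 = β^2 + δ^2 := Real.sq_sqrt hr0.le
    have hrne : r ≠ 0 := ne_of_gt hr
    have hunit : (δ/r)^2 + (-β/r)^2 = 1 := by
      field_simp
      linarith [hr2]
    obtain ⟨t0, hc0, hs0⟩ := exists_cos_sin (δ/r) (-β/r) hunit
    rcases le_or_gt (qf A (v3 i j k (δ/r) 0 (-β/r))) 0 with hvwle | hvwgt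
    · apply ivt_helper A B (fun t => v3 i j k (Real.cos t) 0 (Real.sin t))
        (continuous_v3 i j k _ _ _ Real.continuous_cos continuous_const Real.continuous_sin)
        0 t0
      · intro t _
        rw [hdot]
        have h1 : (Real.cos t)^2 + (0:ℝ)^2 + (Real.sin t)^2 = 1 := by
          linear_combination Real.sin_sq_add_cos_sq t
        rw [h1]
        norm_num
      · intro t _
        rw [hqB, hγ]
        ring
      · simp only [Real.cos_zero, Real.sin_zero, hc0, hs0]
        rw [qf_v3_i]
        nlinarith [hi, hvwle]
    · apply ivt_helper A B
        (fun t => v3 i j k (Real.cos t * (δ/r)) (Real.sin t) (Real.cos t * (-β/r)))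
        (continuous_v3 i j k _ _ _ (Real.continuous_cos.mul continuous_const)
          Real.continuous_sin (Real.continuous_cos.mul continuous_const))
        0 (Real.pi/2)
      · intro t _
        rw [hdot]
        have h1 : (Real.cos t * (δ/r))^2 + (Real.sin t)^2 + (Real.cos t * (-β/r))^2 = 1 := by
          linear_combination (Real.cos t)^2 * hunit + Real.sin_sq_add_cos_sq t
        rw [h1]
        norm_num
      · intro t _
        rw [hqB, hγ]
        ring
      · simp only [Real.cos_zero, Real.sin_zero, Real.cos_pi_div_two, Real.sin_pi_div_two,
          one_mul, zero_mul]
        rw [qf_v3_j]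
        nlinarith [hvwgt, hj]
  by_cases hδ : δ = 0
  · -- Case 3: mirror of case 2
    have hr0 : (0:ℝ) < β^2 + γ^2 := by positivity
    set r := Real.sqrt (β^2 + γ^2) with hrdef
    have hr : 0 < r := Real.sqrt_pos.mpr hr0
    have hr2 : r^2 = β^2 + γ^2 := Real.sq_sqrt hr0.le
    have hrne : r ≠ 0 := ne_of_gt hr
    have hunit : (γ/r)^2 + (-β/r)^2 = 1 := by
      field_simp
      linarith [hr2]
    obtain ⟨t1, hc1, hs1⟩ := exists_cos_sin (γ/r) (-β/r) hunit
    rcases le_or_gt (qf A (v3 i j k 0 (γ/r) (-β/r))) 0 with hvwle | hvwgt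
    · apply ivt_helper A B
        (fun t => v3 i j k (Real.cos t) (Real.sin t * (γ/r)) (Real.sin t * (-β/r)))
        (continuous_v3 i j k _ _ _ Real.continuous_cos
          (Real.continuous_sin.mul continuous_const) (Real.continuous_sin.mul continuous_const))
        0 (Real.pi/2)
      · intro t _
        rw [hdot]
        have h1 : (Real.cos t)^2 + (Real.sin t * (γ/r))^2 + (Real.sin t * (-β/r))^2 = 1 := by
          linear_combination (Real.sin t)^2 * hunit + Real.sin_sq_add_cos_sq t
        rw [h1]
        norm_num
      · intro t _
        rw [hqB, hδ]
        ring
      · simp only [Real.cos_zero, Real.sin_zero, Real.cos_pi_div_two, Real.sin_pi_div_two,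
          one_mul, zero_mul]
        rw [qf_v3_i]
        nlinarith [hi, hvwle]
    · apply ivt_helper A B (fun t => v3 i j k 0 (Real.cos t) (Real.sin t))
        (continuous_v3 i j k _ _ _ continuous_const Real.continuous_cos Real.continuous_sin)
        0 t1
      · intro t _
        rw [hdot]
        have h1 : (0:ℝ)^2 + (Real.cos t)^2 + (Real.sin t)^2 = 1 := by
          linear_combination Real.sin_sq_add_cos_sq t
        rw [h1]
        norm_num
      · intro t _
        rw [hqB, hδ]
        ring
      · simp only [Real.cos_zero, Real.sin_zero, hc1, hs1]
        rw [qf_v3_j]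
        nlinarith [hj, hvwgt]
  · -- Case 4: the generic cubic curve
    apply ivt_helper A B
      (fun t => v3 i j k (Real.cos t * (γ * Real.cos t + δ * Real.sin t))
        (Real.sin t * (γ * Real.cos t + δ * Real.sin t))
        (-β * Real.cos t * Real.sin t))
      (by apply continuous_v3 <;> fun_prop)
      0 (Real.pi/2)
    · intro t _
      rw [hdot]
      set c := Real.cos t with hc'
      set s := Real.sin t with hs'
      have hcs : s^2 + c^2 = 1 := Real.sin_sq_add_cos_sq t
      intro h0
      rcases eq_or_ne c 0 with hc | hc
      · rw [hc] at h0
        have hs2 : s^2 = 1 := by nlinarith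
        have hd2 : δ^2 > 0 := by positivity
        have key : (s * (γ*0 + δ*s))^2 = δ^2 := by
          linear_combination (δ^2*(s^2+1)) * hs2
        linarith [h0, key, hd2, sq_nonneg ((0:ℝ) * (γ*0 + δ*s)), sq_nonneg (-β*0*s)]
      rcases eq_or_ne s 0 with hs | hs
      · rw [hs] at h0
        have hc2 : c^2 = 1 := by nlinarith
        have hg2 : γ^2 > 0 := by positivity
        have key : (c * (γ*c + δ*0))^2 = γ^2 := by
          linear_combination (γ^2*(c^2+1)) * hc2
        linarith [h0, key, hg2, sq_nonneg ((0:ℝ) * (γ*c + δ*0)), sq_nonneg (-β*c*0)]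
      · have h1 : (β*c*s)^2 > 0 := by positivity
        nlinarith [h0, h1, sq_nonneg (c * (γ*c + δ*s)), sq_nonneg (s * (γ*c + δ*s))]
    · intro t _
      rw [hqB]
      ring
    · simp only [Real.cos_zero, Real.sin_zero, Real.cos_pi_div_two, Real.sin_pi_div_two]
      rw [show (1:ℝ) * (γ * 1 + δ * 0) = γ by ring, show (0:ℝ) * (γ * 1 + δ * 0) = 0 by ring,
        show -β * 1 * 0 = (0:ℝ) by ring, show (0:ℝ) * (γ * 0 + δ * 1) = 0 by ring,
        show (1:ℝ) * (γ * 0 + δ * 1) = δ by ring, show -β * 0 * 1 = (0:ℝ) by ring]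
      rw [qf_v3_i, qf_v3_j]
      nlinarith [hAij, sq_nonneg γ, sq_nonneg δ, sq_nonneg (γ*δ)]

lemma qf_conj {n : ℕ} (V M : Matrix (Fin n) (Fin n) ℝ) (x : Fin n → ℝ) :
    qf (Vᵀ * M * V) x = qf M (V *ᵥ x) := by
  unfold qf
  rw [← Matrix.mulVec_mulVec, ← Matrix.mulVec_mulVec, Matrix.dotProduct_mulVec,
    Matrix.vecMul_transpose]

lemma dot_mulVec_orth {n : ℕ} (V : Matrix (Fin n) (Fin n) ℝ) (hV : Vᵀ * V = 1)
    (x : Fin n → ℝ) : (V *ᵥ x) ⬝ᵥ (V *ᵥ x) = x ⬝ᵥ x := by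
  rw [Matrix.dotProduct_mulVec, ← Matrix.mulVec_transpose, Matrix.mulVec_mulVec, hV,
    Matrix.one_mulVec]

lemma joint_isotropic {n : ℕ} (hn : 3 ≤ n) (A B : Matrix (Fin n) (Fin n) ℝ)
    (hA : A.trace = 0) (hB : B.trace = 0) :
    ∃ x : Fin n → ℝ, x ⬝ᵥ x = 1 ∧ qf A x = 0 ∧ qf B x = 0 := by
  obtain ⟨V, hV, hVh⟩ := hollowize n B hB
  have hn0 : n ≠ 0 := by omega
  have htrA' : ∑ i, (Vᵀ * A * V) i i = 0 := by
    have h := trace_conj V A hV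
    rw [hA] at h
    exact h
  obtain ⟨⟨i, hi⟩, ⟨j, hj⟩⟩ := exists_nonneg_diag hn0 (fun i => (Vᵀ * A * V) i i) htrA'
  have transport : ∀ x' : Fin n → ℝ, x' ⬝ᵥ x' = 1 → qf (Vᵀ * A * V) x' = 0 →
      qf (Vᵀ * B * V) x' = 0 → ∃ x : Fin n → ℝ, x ⬝ᵥ x = 1 ∧ qf A x = 0 ∧ qf B x = 0 := by
    intro x' h1 h2 h3
    refine ⟨V *ᵥ x', ?_, ?_, ?_⟩
    · rw [dot_mulVec_orth V hV, h1]
    · rw [← qf_conj]; exact h2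
    · rw [← qf_conj]; exact h3
  by_cases hij : i = j
  · subst hij
    have h0 : (Vᵀ * A * V) i i = 0 := le_antisymm hj hi
    apply transport (Pi.single i 1) (dot_single_one i)
    · rw [qf, qf_single]; exact h0
    · rw [qf, qf_single]; exact hVh i
  · have hk : ∃ k : Fin n, k ≠ i ∧ k ≠ j := by
      by_contra hc
      push_neg at hc
      have hsub : (Finset.univ : Finset (Fin n)) ⊆ {i, j} := by
        intro k _
        rcases eq_or_ne k i with h' | h'
        · simp [h']
        · simp [hc k h']
      have h1 : (Finset.univ : Finset (Fin n)).card ≤ ({i, j} : Finset (Fin n)).card :=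
        Finset.card_le_card hsub
      have h2 : ({i, j} : Finset (Fin n)).card ≤ 2 :=
        (Finset.card_insert_le _ _).trans (by simp)
      simp [Finset.card_univ] at h1
      omega
    obtain ⟨k, hki, hkj⟩ := hk
    obtain ⟨x', h1, h2, h3⟩ := joint_isotropic_core (Vᵀ * A * V) (Vᵀ * B * V) i j k
      hij hki.symm hkj.symm (hVh i) (hVh j) (hVh k) hi hj
    exact transport x' h1 h2 h3

end Stmt4Aux
end

/-- A square matrix is hollow if all its diagonal entries are zero. -/
def IsHollow {n : ℕ} {R : Type*} [Zero R] (M : Matrix (Fin n) (Fin n) R) : Prop :=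
  ∀ i, M i i = 0

/-- A square matrix is almost hollow if its first `n-2` diagonal entries are zero
and the last two diagonal entries are negatives of each other. -/
def IsAlmostHollow {n : ℕ} {R : Type*} [Zero R] [Neg R]
    (M : Matrix (Fin n) (Fin n) R) : Prop :=
  (∀ i : Fin n, (i : ℕ) < n - 2 → M i i = 0) ∧
  (∀ i j : Fin n, (i : ℕ) = n - 2 → (j : ℕ) = n - 1 → M i i = - M j j)

namespace Stmt4Aux

lemma main_induction : ∀ (n : ℕ) (A B : Matrix (Fin n) (Fin n) ℝ),
    A.trace = 0 → B.trace = 0 →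
    ∃ V : Matrix (Fin n) (Fin n) ℝ, Vᵀ * V = 1 ∧
      IsHollow (Vᵀ * A * V) ∧ IsAlmostHollow (Vᵀ * B * V) := by
  intro n
  induction n with
  | zero =>
    intro A B _ _
    exact ⟨1, by simp, fun i => i.elim0, fun i _ => i.elim0, fun i _ _ _ => i.elim0⟩
  | succ m ih =>
    intro A B hA hB
    rcases Nat.lt_or_ge m 2 with hm | hm
    · interval_cases m
      · -- n = 1
        have e : ∀ M : Matrix (Fin (0+1)) (Fin (0+1)) ℝ,
            (1 : Matrix (Fin (0+1)) (Fin (0+1)) ℝ)ᵀ * M * 1 = M := by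
          intro M; simp
        have hA0 : A 0 0 = 0 := by
          simpa [Matrix.trace, Matrix.diag, Fin.sum_univ_succ] using hA
        have hB0 : B 0 0 = 0 := by
          simpa [Matrix.trace, Matrix.diag, Fin.sum_univ_succ] using hB
        refine ⟨1, by simp, ?_, ?_, ?_⟩
        · intro i
          rw [e, Fin.eq_zero i]
          exact hA0
        · intro i h
          exact absurd h (Nat.not_lt_zero _)
        · intro i j _ _
          rw [e, Fin.eq_zero i, Fin.eq_zero j, hB0]
          simp
      · -- n = 2
        obtain ⟨x, hx1, hx2⟩ := exists_isotropic (by omega) A hA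
        obtain ⟨W, hW, hWcol⟩ := exists_orthogonal_col x hx1 0
        have hA00 : (Wᵀ * A * W) 0 0 = 0 := by
          rw [conj_entry_qf W A 0 x hWcol]; exact hx2
        have htrA : (Wᵀ * A * W) 0 0 + (Wᵀ * A * W) 1 1 = 0 := by
          have h := trace_conj W A hW
          rw [hA] at h
          rw [← h, Matrix.trace]
          simp [Fin.sum_univ_two]
        have htrB : (Wᵀ * B * W) 0 0 + (Wᵀ * B * W) 1 1 = 0 := by
          have h := trace_conj W B hW
          rw [hB] at h
          rw [← h, Matrix.trace]
          simp [Fin.sum_univ_two]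
        refine ⟨W, hW, ?_, ?_, ?_⟩
        · intro i
          induction i using Fin.cases with
          | zero => exact hA00
          | succ p =>
            rw [Fin.eq_zero p, Fin.succ_zero_eq_one]
            linarith [hA00, htrA]
        · intro i h
          exact absurd h (by omega)
        · intro i j hi2 hj2
          induction i using Fin.cases with
          | succ p =>
            exfalso
            simp only [Fin.val_succ] at hi2
            omega
          | zero =>
            induction j using Fin.cases with
            | zero =>
              exfalso
              simp only [Fin.val_zero] at hj2
              omega
            | succ q =>
              rw [Fin.eq_zero q, Fin.succ_zero_eq_one]
              linarith [htrB]
    · -- n = m+1 ≥ 3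
      obtain ⟨x, hx1, hx2, hx3⟩ := joint_isotropic (by omega) A B hA hB
      obtain ⟨W, hW, hWcol⟩ := exists_orthogonal_col x hx1 0
      set A₁ := Wᵀ * A * W with hA₁
      set B₁ := Wᵀ * B * W with hB₁
      have hA00 : A₁ 0 0 = 0 := by rw [hA₁, conj_entry_qf W A 0 x hWcol]; exact hx2
      have hB00 : B₁ 0 0 = 0 := by rw [hB₁, conj_entry_qf W B 0 x hWcol]; exact hx3
      have htrA1 : A₁.trace = 0 := by rw [hA₁, trace_conj W A hW, hA]
      have htrB1 : B₁.trace = 0 := by rw [hB₁, trace_conj W B hW, hB]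
      have htrA2 : (A₁.submatrix Fin.succ Fin.succ).trace = 0 := by
        rw [trace_submatrix_succ, htrA1, hA00]
        ring
      have htrB2 : (B₁.submatrix Fin.succ Fin.succ).trace = 0 := by
        rw [trace_submatrix_succ, htrB1, hB00]
        ring
      obtain ⟨U, hU, hUhol, hUalm1, hUalm2⟩ :=
        ih (A₁.submatrix Fin.succ Fin.succ) (B₁.submatrix Fin.succ Fin.succ) htrA2 htrB2
      refine ⟨W * ext1 U, ?_, ?_, ?_, ?_⟩
      · rw [Matrix.transpose_mul, Matrix.mul_assoc, ← Matrix.mul_assoc Wᵀ W, hW,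
          Matrix.one_mul]
        exact ext1_orth U hU
      · have hconj : (W * ext1 U)ᵀ * A * (W * ext1 U) = (ext1 U)ᵀ * A₁ * ext1 U := by
          rw [Matrix.transpose_mul, hA₁]
          simp only [Matrix.mul_assoc]
        rw [hconj]
        intro i
        induction i using Fin.cases with
        | zero => rw [ext1_conj_zero]; exact hA00
        | succ p => rw [ext1_conj_succ]; exact hUhol p
      · have hconj : (W * ext1 U)ᵀ * B * (W * ext1 U) = (ext1 U)ᵀ * B₁ * ext1 U := by
          rw [Matrix.transpose_mul, hB₁]
          simp only [Matrix.mul_assoc]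
        rw [hconj]
        intro i hilt
        induction i using Fin.cases with
        | zero => rw [ext1_conj_zero]; exact hB00
        | succ p =>
          rw [ext1_conj_succ]
          apply hUalm1 p
          have hp := hilt
          simp only [Fin.val_succ] at hp
          omega
      · have hconj : (W * ext1 U)ᵀ * B * (W * ext1 U) = (ext1 U)ᵀ * B₁ * ext1 U := by
          rw [Matrix.transpose_mul, hB₁]
          simp only [Matrix.mul_assoc]
        rw [hconj]
        intro i j hi2 hj2
        induction i using Fin.cases with
        | zero =>
          exfalso
          simp only [Fin.val_zero] at hi2
          omega
        | succ p =>
          induction j using Fin.cases with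
          | zero =>
            exfalso
            simp only [Fin.val_zero] at hj2
            omega
          | succ q =>
            rw [ext1_conj_succ, ext1_conj_succ]
            apply hUalm2 p q
            · simp only [Fin.val_succ] at hi2
              omega
            · simp only [Fin.val_succ] at hj2
              omega

end Stmt4Aux

theorem stmt_4 (n : ℕ) (A B : Matrix (Fin n) (Fin n) ℝ)
    (hA : A.trace = 0) (hB : B.trace = 0) :
    ∃ V : Matrix (Fin n) (Fin n) ℝ, Vᵀ * V = 1 ∧
      IsHollow (Vᵀ * A * V) ∧ IsAlmostHollow (Vᵀ * B * V) := by
  exact Stmt4Aux.main_induction n A B hA hB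
end

section
/- (Brickman's theorem) Let A, B ∈ ℝ^{n×n} with n ≥ 3. Then the joint real numerical range W(A,B) = {(xᵀAx, xᵀBx) : x ∈ ℝ^n, ‖x‖ = 1} is a convex subset of ℝ². -/
open Matrix

namespace Brick

variable {n : ℕ}

/-- solution set of the diagonal problem -/
def SS (lam : Fin n → ℝ) : Set (Fin n → ℝ) :=
  {u | ∑ i, u i ^ 2 = 1 ∧ ∑ i, lam i * u i ^ 2 = 0}

/-- coverage relation -/
def Cover (lam : Fin n → ℝ) (g : (Fin n → ℝ) → ℝ) (u v : Fin n → ℝ) : Prop :=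
  ∀ m ∈ Set.uIcc (g u) (g v), ∃ z ∈ SS lam, g z = m

variable {lam : Fin n → ℝ} {g : (Fin n → ℝ) → ℝ}

theorem cover_refl {u : Fin n → ℝ} (hu : u ∈ SS lam) : Cover lam g u u := by
  intro m hm
  simp at hm
  exact ⟨u, hu, hm.symm⟩

theorem cover_symm {u v : Fin n → ℝ} (h : Cover lam g u v) : Cover lam g v u := by
  intro m hm
  exact h m (by rwa [Set.uIcc_comm])

theorem cover_trans {u v w : Fin n → ℝ} (h1 : Cover lam g u v) (h2 : Cover lam g v w) :
    Cover lam g u w := by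
  intro m hm
  rcases Set.uIcc_subset_uIcc_union_uIcc (b := g v) hm with h | h
  · exact h1 m h
  · exact h2 m h

theorem cover_of_path {t₀ t₁ : ℝ} {p : ℝ → Fin n → ℝ} (hg : Continuous g)
    (hp : ∀ t ∈ Set.uIcc t₀ t₁, p t ∈ SS lam)
    (hcont : ContinuousOn p (Set.uIcc t₀ t₁)) :
    Cover lam g (p t₀) (p t₁) := by
  intro m hm
  have : Set.uIcc ((g ∘ p) t₀) ((g ∘ p) t₁) ⊆ (g ∘ p) '' Set.uIcc t₀ t₁ :=
    intermediate_value_uIcc (hg.comp_continuousOn hcont)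
  rcases this hm with ⟨t, ht, htm⟩
  exact ⟨p t, hp t ht, htm⟩



theorem sum_three_split (i j k : Fin n) (hij : i ≠ j) (hik : i ≠ k) (hjk : j ≠ k)
    (h : Fin n → ℝ) :
    ∑ l, h l = h i + h j + h k + ∑ l ∈ Finset.univ \ {i, j, k}, h l := by
  have hsub : ({i, j, k} : Finset (Fin n)) ⊆ Finset.univ := Finset.subset_univ _
  rw [← Finset.sum_sdiff hsub]
  have : ∑ l ∈ ({i, j, k} : Finset (Fin n)), h l = h i + h j + h k := by
    rw [Finset.sum_insert (by simp [hij, hik]), Finset.sum_insert (by simp [hjk]),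
      Finset.sum_singleton]
    ring
  rw [this]; ring

/-- three-coordinate sqrt path -/
noncomputable def pth (u : Fin n → ℝ) (i j k : Fin n) (ei ej ek : ℝ) (fi fj fk : ℝ → ℝ) (t : ℝ) :
    Fin n → ℝ :=
  fun l => if l = i then ei * Real.sqrt (fi t) else if l = j then ej * Real.sqrt (fj t)
    else if l = k then ek * Real.sqrt (fk t) else u l

theorem pth_mem {u : Fin n → ℝ} {i j k : Fin n} (hij : i ≠ j) (hik : i ≠ k) (hjk : j ≠ k)
    (hu : u ∈ SS lam) {ei ej ek : ℝ} (hei : ei ^ 2 = 1) (hej : ej ^ 2 = 1) (hek : ek ^ 2 = 1)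
    {fi fj fk : ℝ → ℝ} {t : ℝ}
    (hnni : 0 ≤ fi t) (hnnj : 0 ≤ fj t) (hnnk : 0 ≤ fk t)
    (hsum : fi t + fj t + fk t = u i ^ 2 + u j ^ 2 + u k ^ 2)
    (hlam : lam i * fi t + lam j * fj t + lam k * fk t
      = lam i * u i ^ 2 + lam j * u j ^ 2 + lam k * u k ^ 2) :
    pth u i j k ei ej ek fi fj fk t ∈ SS lam := by
  obtain ⟨hu1, hu2⟩ := hu
  set p := pth u i j k ei ej ek fi fj fk t with hp
  have hpi : p i = ei * Real.sqrt (fi t) := by simp [hp, pth]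
  have hpj : p j = ej * Real.sqrt (fj t) := by simp [hp, pth, hij.symm, hjk]
  have hpk : p k = ek * Real.sqrt (fk t) := by simp [hp, pth, hik.symm, hjk.symm]
  have hoff : ∀ l, l ≠ i → l ≠ j → l ≠ k → p l = u l := by
    intro l h1 h2 h3; simp [hp, pth, h1, h2, h3]
  have hsqi : p i ^ 2 = fi t := by rw [hpi, mul_pow, hei, Real.sq_sqrt hnni, one_mul]
  have hsqj : p j ^ 2 = fj t := by rw [hpj, mul_pow, hej, Real.sq_sqrt hnnj, one_mul]
  have hsqk : p k ^ 2 = fk t := by rw [hpk, mul_pow, hek, Real.sq_sqrt hnnk, one_mul]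
  have hoffsum : ∀ h h' : Fin n → ℝ, (∀ l ∈ Finset.univ \ ({i,j,k} : Finset (Fin n)), h l = h' l) →
      ∑ l ∈ Finset.univ \ ({i,j,k} : Finset (Fin n)), h l
        = ∑ l ∈ Finset.univ \ ({i,j,k} : Finset (Fin n)), h' l := fun _ _ => Finset.sum_congr rfl
  constructor
  · rw [sum_three_split i j k hij hik hjk]
    rw [hoffsum _ (fun l => u l ^ 2) (by intro l hl; simp at hl; rw [hoff l hl.1 hl.2.1 hl.2.2])]
    rw [sum_three_split i j k hij hik hjk (fun l => u l ^ 2)] at hu1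
    rw [hsqi, hsqj, hsqk]; linarith
  · rw [sum_three_split i j k hij hik hjk]
    rw [hoffsum _ (fun l => lam l * u l ^ 2)
      (by intro l hl; simp at hl; rw [hoff l hl.1 hl.2.1 hl.2.2])]
    rw [sum_three_split i j k hij hik hjk (fun l => lam l * u l ^ 2)] at hu2
    rw [hsqi, hsqj, hsqk]; linarith

theorem pth_cover {u : Fin n → ℝ} {i j k : Fin n} (hij : i ≠ j) (hik : i ≠ k) (hjk : j ≠ k)
    (hu : u ∈ SS lam) (hg : Continuous g)
    {ei ej ek : ℝ} (hei : ei ^ 2 = 1) (hej : ej ^ 2 = 1) (hek : ek ^ 2 = 1)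
    {fi fj fk : ℝ → ℝ} (hci : Continuous fi) (hcj : Continuous fj) (hck : Continuous fk)
    {T : ℝ} (hT : 0 ≤ T)
    (hnn : ∀ t ∈ Set.Icc (0:ℝ) T, 0 ≤ fi t ∧ 0 ≤ fj t ∧ 0 ≤ fk t)
    (hsum : ∀ t ∈ Set.Icc (0:ℝ) T, fi t + fj t + fk t = u i ^ 2 + u j ^ 2 + u k ^ 2)
    (hlam : ∀ t ∈ Set.Icc (0:ℝ) T, lam i * fi t + lam j * fj t + lam k * fk t
      = lam i * u i ^ 2 + lam j * u j ^ 2 + lam k * u k ^ 2)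
    (hs0i : ei * Real.sqrt (fi 0) = u i) (hs0j : ej * Real.sqrt (fj 0) = u j)
    (hs0k : ek * Real.sqrt (fk 0) = u k) :
    Cover lam g u (pth u i j k ei ej ek fi fj fk T) ∧
      pth u i j k ei ej ek fi fj fk T ∈ SS lam := by
  have hIcc : Set.uIcc (0:ℝ) T = Set.Icc 0 T := Set.uIcc_of_le hT
  have hmem : ∀ t ∈ Set.uIcc (0:ℝ) T, pth u i j k ei ej ek fi fj fk t ∈ SS lam := by
    intro t ht
    rw [hIcc] at ht
    exact pth_mem hij hik hjk hu hei hej hek (hnn t ht).1 (hnn t ht).2.1 (hnn t ht).2.2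
      (hsum t ht) (hlam t ht)
  have hp0 : pth u i j k ei ej ek fi fj fk 0 = u := by
    funext l
    by_cases h1 : l = i
    · subst h1; simpa [pth] using hs0i
    by_cases h2 : l = j
    · subst h2; simpa [pth, h1] using hs0j
    by_cases h3 : l = k
    · subst h3; simpa [pth, h1, h2] using hs0k
    · simp [pth, h1, h2, h3]
  have hcont : Continuous (fun t => pth u i j k ei ej ek fi fj fk t) := by
    apply continuous_pi
    intro l
    by_cases h1 : l = i
    · simp [pth, h1]; exact continuous_const.mul (Real.continuous_sqrt.comp hci)
    by_cases h2 : l = j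
    · simp [pth, h1, h2, hij.symm]; exact continuous_const.mul (Real.continuous_sqrt.comp hcj)
    by_cases h3 : l = k
    · simp [pth, h1, h2, h3, hik.symm, hjk.symm]; exact continuous_const.mul (Real.continuous_sqrt.comp hck)
    · simpa [pth, h1, h2, h3] using (continuous_const : Continuous fun _ : ℝ => u l)
  refine ⟨?_, hmem T (by rw [hIcc]; exact Set.right_mem_Icc.2 hT)⟩
  have := cover_of_path (t₀ := 0) (t₁ := T) hg hmem hcont.continuousOn
  rwa [hp0] at this



/-- sign of a real number, valued in ±1 -/
noncomputable def esign (x : ℝ) : ℝ := if x < 0 then -1 else 1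

theorem esign_sq (x : ℝ) : esign x ^ 2 = 1 := by
  unfold esign; split <;> norm_num

theorem esign_mul_sqrt_sq (x : ℝ) : esign x * Real.sqrt (x ^ 2) = x := by
  rw [Real.sqrt_sq_eq_abs]
  unfold esign
  split
  · rw [abs_of_neg (by assumption)]; ring
  · rw [abs_of_nonneg (by linarith [not_lt.1 (by assumption)])]; ring

theorem esign_mul_nonneg (x y : ℝ) (hy : 0 ≤ y) : 0 ≤ esign x * y * x := by
  unfold esign
  split
  · nlinarith [le_of_lt (by assumption : x < 0)]
  · nlinarith [not_lt.1 (by assumption : ¬ x < 0)]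

theorem pth_apply_i {u : Fin n → ℝ} {i j k : Fin n}
    (ei ej ek : ℝ) (fi fj fk : ℝ → ℝ) (t : ℝ) :
    pth u i j k ei ej ek fi fj fk t i = ei * Real.sqrt (fi t) := by simp [pth]

theorem pth_apply_j {u : Fin n → ℝ} {i j k : Fin n} (hij : i ≠ j)
    (ei ej ek : ℝ) (fi fj fk : ℝ → ℝ) (t : ℝ) :
    pth u i j k ei ej ek fi fj fk t j = ej * Real.sqrt (fj t) := by
  simp [pth, hij.symm]

theorem pth_apply_k {u : Fin n → ℝ} {i j k : Fin n} (hik : i ≠ k) (hjk : j ≠ k)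
    (ei ej ek : ℝ) (fi fj fk : ℝ → ℝ) (t : ℝ) :
    pth u i j k ei ej ek fi fj fk t k = ek * Real.sqrt (fk t) := by
  simp [pth, hik.symm, hjk.symm]

theorem pth_apply_off {u : Fin n → ℝ} {i j k l : Fin n} (h1 : l ≠ i) (h2 : l ≠ j) (h3 : l ≠ k)
    (ei ej ek : ℝ) (fi fj fk : ℝ → ℝ) (t : ℝ) :
    pth u i j k ei ej ek fi fj fk t l = u l := by simp [pth, h1, h2, h3]

/-- rotation move in two coordinates with equal eigenvalues, zeroing coordinate i -/
theorem move_eq (hg : Continuous g) {u : Fin n → ℝ} (hu : u ∈ SS lam)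
    {i j k : Fin n} (hij : i ≠ j) (hik : i ≠ k) (hjk : j ≠ k) (hlamij : lam i = lam j) :
    ∃ u' ∈ SS lam, Cover lam g u u' ∧ u' i = 0 ∧ (∀ l, l ≠ i → l ≠ j → u' l = u l) := by
  have key := pth_cover (fi := fun t => u i ^ 2 * (1 - t)) (fj := fun t => u j ^ 2 + u i ^ 2 * t)
    (fk := fun _ => u k ^ 2) (T := 1)
    (ei := esign (u i)) (ej := esign (u j)) (ek := esign (u k))
    hij hik hjk hu hg (esign_sq (u i)) (esign_sq (u j)) (esign_sq (u k))
    (by fun_prop) (by fun_prop) (by fun_prop) zero_le_one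
    (by
      intro t ht
      refine ⟨?_, ?_, ?_⟩
      · have : 0 ≤ 1 - t := by linarith [ht.2]
        positivity
      · have := ht.1
        positivity
      · positivity)
    (by intro t _; ring)
    (by intro t _; simp only [hlamij]; ring)
    (by norm_num; exact esign_mul_sqrt_sq (u i))
    (by norm_num; exact esign_mul_sqrt_sq (u j))
    (by exact esign_mul_sqrt_sq (u k))
  refine ⟨_, key.2, key.1, ?_, ?_⟩
  · rw [pth_apply_i]; norm_num
  · intro l h1 h2
    by_cases h3 : l = k
    · subst h3
      rw [pth_apply_k hik hjk]
      exact esign_mul_sqrt_sq (u l)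
    · exact pth_apply_off h1 h2 h3 _ _ _ _ _ _ _


theorem affine_nonneg {a b T t : ℝ} (h0 : 0 ≤ a) (h1 : 0 ≤ a + b * T)
    (ht : 0 ≤ t) (ht' : t ≤ T) : 0 ≤ a + b * t := by
  rcases le_or_gt T 0 with h | h
  · have : t = 0 := le_antisymm (ht'.trans h) ht
    simp [this, h0]
  · nlinarith [mul_nonneg (sub_nonneg.2 ht') h0, mul_nonneg ht h1]

theorem move_neq (hg : Continuous g) {u : Fin n → ℝ} (hu : u ∈ SS lam)
    {i j k : Fin n} (hij : i ≠ j) (hik : i ≠ k) (hjk : j ≠ k)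
    (hlamij : lam i ≠ lam j) (hr : u i ≠ 0 ∨ u j ≠ 0) (ek : ℝ) (hek : ek ^ 2 = 1)
    (hekk : ek * Real.sqrt (u k ^ 2) = u k) :
    ∃ T u', 0 ≤ T ∧ u' ∈ SS lam ∧ Cover lam g u u' ∧ (u' i = 0 ∨ u' j = 0) ∧
      (∀ l, l ≠ i → l ≠ j → l ≠ k → u' l = u l) ∧
      0 ≤ u' i * u i ∧ 0 ≤ u' j * u j ∧ u' k = ek * Real.sqrt (u k ^ 2 + T) := by
  have hd : lam i - lam j ≠ 0 := sub_ne_zero.2 hlamij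
  set bi : ℝ := (lam j - lam k) / (lam i - lam j) with hbi
  set bj : ℝ := (lam k - lam i) / (lam i - lam j) with hbj
  have hbsum : bi + bj = -1 := by rw [hbi, hbj]; field_simp; ring
  have hlbsum : lam i * bi + lam j * bj + lam k = 0 := by rw [hbi, hbj]; field_simp; ring
  set r : ℝ := u i ^ 2 + u j ^ 2 with hrdef
  have hrpos : 0 < r := by
    rcases hr with h | h
    · have := sq_nonneg (u j); positivity
    · have := sq_nonneg (u i); positivity
  have main : ∀ T : ℝ, 0 ≤ T → 0 ≤ u i ^ 2 + bi * T → 0 ≤ u j ^ 2 + bj * T →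
      (u i ^ 2 + bi * T = 0 ∨ u j ^ 2 + bj * T = 0) →
      ∃ T' u', 0 ≤ T' ∧ u' ∈ SS lam ∧ Cover lam g u u' ∧ (u' i = 0 ∨ u' j = 0) ∧
      (∀ l, l ≠ i → l ≠ j → l ≠ k → u' l = u l) ∧
      0 ≤ u' i * u i ∧ 0 ≤ u' j * u j ∧ u' k = ek * Real.sqrt (u k ^ 2 + T') := by
    intro T hT0 hfiT hfjT hzero
    have key := pth_cover (fi := fun t => u i ^ 2 + bi * t) (fj := fun t => u j ^ 2 + bj * t)
      (fk := fun t => u k ^ 2 + t) (T := T)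
      (ei := esign (u i)) (ej := esign (u j)) (ek := ek)
      hij hik hjk hu hg (esign_sq (u i)) (esign_sq (u j)) hek
      (by fun_prop) (by fun_prop) (by fun_prop) hT0
      (by
        intro t ht
        refine ⟨?_, ?_, ?_⟩
        · exact affine_nonneg (sq_nonneg (u i)) hfiT ht.1 ht.2
        · exact affine_nonneg (sq_nonneg (u j)) hfjT ht.1 ht.2
        · have := sq_nonneg (u k); linarith [ht.1])
      (by intro t _; linear_combination t * hbsum)
      (by intro t _; linear_combination t * hlbsum)
      (by norm_num; exact esign_mul_sqrt_sq (u i))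
      (by norm_num; exact esign_mul_sqrt_sq (u j))
      (by norm_num; exact hekk)
    refine ⟨T, _, hT0, key.2, key.1, ?_, ?_, ?_, ?_, ?_⟩
    · rcases hzero with h | h
      · left; rw [pth_apply_i]; simp only [h, Real.sqrt_zero, mul_zero]
      · right; rw [pth_apply_j hij]; simp only [h, Real.sqrt_zero, mul_zero]
    · intro l h1 h2 h3; exact pth_apply_off h1 h2 h3 _ _ _ _ _ _ _
    · rw [pth_apply_i]; exact esign_mul_nonneg _ _ (Real.sqrt_nonneg _)
    · rw [pth_apply_j hij]; exact esign_mul_nonneg _ _ (Real.sqrt_nonneg _)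
    · rw [pth_apply_k hik hjk]
  set ci : ℝ := u i ^ 2 + bi * r with hci
  set cj : ℝ := u j ^ 2 + bj * r with hcj
  have hcsum : ci + cj = 0 := by rw [hci, hcj]; linear_combination r * hbsum
  rcases le_or_gt 0 ci with h1 | h1
  · rcases le_or_gt 0 cj with h2 | h2
    · exact main r hrpos.le (by linarith) (by linarith) (Or.inl (by linarith))
    · -- cj < 0 : coordinate j hits zero first
      set T : ℝ := u j ^ 2 * r / (u j ^ 2 - cj) with hTdef
      have hden : 0 < u j ^ 2 - cj := by nlinarith [sq_nonneg (u j)]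
      have hT0 : 0 ≤ T := by positivity
      have hfjT : u j ^ 2 + bj * T = 0 := by
        rw [hTdef]
        have hbjr : bj * r = cj - u j ^ 2 := by rw [hcj]; ring
        rw [div_eq_mul_inv, show bj * (u j ^ 2 * r * (u j ^ 2 - cj)⁻¹)
          = (bj * r) * u j ^ 2 * (u j ^ 2 - cj)⁻¹ by ring, hbjr]
        field_simp
        ring
      have hTr : T ≤ r := by
        rw [hTdef, div_le_iff₀ hden]
        nlinarith [sq_nonneg (u j)]
      have hfiT : 0 ≤ u i ^ 2 + bi * T := by
        have e1 : (u i ^ 2 + bi * T) + (u j ^ 2 + bj * T) = r - T := by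
          linear_combination T * hbsum
        rw [hfjT] at e1; linarith
      exact main T hT0 hfiT hfjT.ge (Or.inr hfjT)
  · -- ci < 0 : coordinate i hits zero first
    set T : ℝ := u i ^ 2 * r / (u i ^ 2 - ci) with hTdef
    have hden : 0 < u i ^ 2 - ci := by nlinarith [sq_nonneg (u i)]
    have hT0 : 0 ≤ T := by positivity
    have hfiT : u i ^ 2 + bi * T = 0 := by
      rw [hTdef]
      have hbir : bi * r = ci - u i ^ 2 := by rw [hci]; ring
      rw [div_eq_mul_inv, show bi * (u i ^ 2 * r * (u i ^ 2 - ci)⁻¹)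
        = (bi * r) * u i ^ 2 * (u i ^ 2 - ci)⁻¹ by ring, hbir]
      field_simp
      ring
    have hTr : T ≤ r := by
      rw [hTdef, div_le_iff₀ hden]
      nlinarith [sq_nonneg (u i)]
    have hfjT : 0 ≤ u j ^ 2 + bj * T := by
      have e1 : (u i ^ 2 + bi * T) + (u j ^ 2 + bj * T) = r - T := by
        linear_combination T * hbsum
      rw [hfiT] at e1; linarith
    exact main T hT0 hfiT.ge hfjT (Or.inl hfiT)


-- basis vector
def ee (z : Fin n) : Fin n → ℝ := fun l => if l = z then 1 else 0

theorem ee_mem {z : Fin n} (hz : lam z = 0) : ee z ∈ SS lam := by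
  constructor
  · rw [Finset.sum_eq_single z]
    · simp [ee]
    · intro l _ hl; simp [ee, hl]
    · simp
  · rw [Finset.sum_eq_single z]
    · simp [ee, hz]
    · intro l _ hl; simp [ee, hl]
    · simp

theorem sum_sq_comb (u : Fin n → ℝ) (z : Fin n) (c1 c2 : ℝ) (w : Fin n → ℝ) :
    ∑ l, w l * (c1 * u l + c2 * ee z l) ^ 2
      = c1 ^ 2 * ∑ l, w l * u l ^ 2 + 2 * c1 * c2 * (w z * u z) + c2 ^ 2 * w z := by
  have : ∀ l, w l * (c1 * u l + c2 * ee z l) ^ 2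
      = c1 ^ 2 * (w l * u l ^ 2) + 2 * c1 * c2 * (w l * u l * ee z l)
        + c2 ^ 2 * (w l * ee z l ^ 2) := by
    intro l; ring
  rw [Finset.sum_congr rfl (fun l _ => this l)]
  rw [Finset.sum_add_distrib, Finset.sum_add_distrib, ← Finset.mul_sum, ← Finset.mul_sum,
    ← Finset.mul_sum]
  congr 2
  · congr 1
    rw [Finset.sum_eq_single z]
    · simp [ee]
    · intro l _ hl; simp [ee, hl]
    · simp
  · congr 1
    rw [Finset.sum_eq_single z]
    · simp [ee]
    · intro l _ hl; simp [ee, hl]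
    · simp

theorem cover_to_kernel (hg : Continuous g) {z : Fin n} (hz : lam z = 0)
    {u : Fin n → ℝ} (hu : u ∈ SS lam) (huz : |u z| < 1) :
    Cover lam g u (ee z) := by
  obtain ⟨hu1, hu2⟩ := hu
  set D : ℝ → ℝ := fun t => 1 + 2 * Real.cos t * Real.sin t * u z with hD
  have hDpos : ∀ t, 0 < D t := by
    intro t
    have h1 : |2 * Real.cos t * Real.sin t| ≤ 1 := by
      have := Real.sin_sq_add_cos_sq t
      rw [abs_le]
      constructor <;> nlinarith [sq_nonneg (Real.sin t + Real.cos t), sq_nonneg (Real.sin t - Real.cos t)]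
    have := abs_mul (2 * Real.cos t * Real.sin t) (u z)
    have h2 : |2 * Real.cos t * Real.sin t * u z| < 1 := by
      rcases eq_or_ne (u z) 0 with h | h
      · simp [h]
      · calc |2 * Real.cos t * Real.sin t * u z| = |2 * Real.cos t * Real.sin t| * |u z| := by
              rw [abs_mul]
          _ ≤ 1 * |u z| := by apply mul_le_mul_of_nonneg_right h1 (abs_nonneg _)
          _ < 1 := by rw [one_mul]; exact huz
    have := abs_lt.1 h2
    simp only [hD]; linarith [this.1]
  set p : ℝ → Fin n → ℝ :=
    fun t l => (Real.cos t * u l + Real.sin t * ee z l) / Real.sqrt (D t) with hp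
  have hmem : ∀ t ∈ Set.uIcc (0:ℝ) (Real.pi/2), p t ∈ SS lam := by
    intro t _
    have hDt := hDpos t
    have hsqrt : Real.sqrt (D t) ^ 2 = D t := Real.sq_sqrt hDt.le
    have hsqrtne : Real.sqrt (D t) ≠ 0 := by positivity
    constructor
    · have hpow : ∀ l, (p t l) ^ 2 = (Real.cos t * u l + Real.sin t * ee z l) ^ 2 / D t := by
        intro l; rw [hp]; rw [div_pow, hsqrt]
      have hs := sum_sq_comb u z (Real.cos t) (Real.sin t) (fun _ => 1)
      simp only [one_mul, mul_one] at hs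
      simp only [hpow]
      rw [← Finset.sum_div, hs, hu1]
      have hc := Real.sin_sq_add_cos_sq t
      rw [div_eq_one_iff_eq hDt.ne']
      simp only [hD]
      nlinarith [hc]
    · have : ∀ l, lam l * (p t l) ^ 2
          = lam l * (Real.cos t * u l + Real.sin t * ee z l) ^ 2 / D t := by
        intro l; rw [hp]; rw [div_pow, hsqrt]; ring
      simp only [this]
      rw [← Finset.sum_div]
      rw [sum_sq_comb u z (Real.cos t) (Real.sin t) lam, hu2, hz]
      simp
  have hcont : ContinuousOn p (Set.uIcc (0:ℝ) (Real.pi/2)) := by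
    apply Continuous.continuousOn
    apply continuous_pi
    intro l
    apply Continuous.div
    · exact (Real.continuous_cos.mul continuous_const).add
        (Real.continuous_sin.mul continuous_const)
    · exact Real.continuous_sqrt.comp (by continuity)
    · intro t; exact Real.sqrt_ne_zero'.2 (hDpos t)
  have h0 : p 0 = u := by
    funext l; simp [hp, hD]
  have h1 : p (Real.pi/2) = ee z := by
    funext l; simp [hp, hD, Real.cos_pi_div_two, Real.sin_pi_div_two]
  have := cover_of_path (t₀ := 0) (t₁ := Real.pi/2) hg hmem hcont
  rwa [h0, h1] at this



theorem cover_neg_left (hgneg : ∀ w, g (-w) = g w) {u v : Fin n → ℝ}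
    (h : Cover lam g u v) : Cover lam g (-u) v := by
  intro m hm
  apply h
  rwa [← hgneg u]

theorem exists_third (hn : 3 ≤ n) (i j : Fin n) : ∃ k : Fin n, k ≠ i ∧ k ≠ j := by
  have hcard : (Finset.univ \ {i, j} : Finset (Fin n)).Nonempty := by
    rw [← Finset.card_pos, Finset.card_sdiff_of_subset (Finset.subset_univ _)]
    have h2 : ({i, j} : Finset (Fin n)).card ≤ 2 := Finset.card_insert_le _ _ |>.trans (by simp)
    simp only [Finset.card_univ, Fintype.card_fin]
    omega
  obtain ⟨k, hk⟩ := hcard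
  simp only [Finset.mem_sdiff, Finset.mem_insert, Finset.mem_singleton] at hk
  exact ⟨k, fun h => hk.2 (Or.inl h), fun h => hk.2 (Or.inr h)⟩

theorem SS_neg : SS (fun l => -lam l) = (SS lam : Set (Fin n → ℝ)) := by
  ext u
  simp only [SS, Set.mem_setOf_eq, and_congr_right_iff]
  intro _
  rw [show ∑ i, -lam i * u i ^ 2 = -∑ i, lam i * u i ^ 2 by
    rw [← Finset.sum_neg_distrib]; congr 1; funext l; ring]
  rw [neg_eq_zero]

theorem cover_neglam {u v : Fin n → ℝ} (h : Cover (fun l => -lam l) g u v) :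
    Cover lam g u v := by
  intro m hm
  obtain ⟨z, hz, hzm⟩ := h m hm
  rw [SS_neg] at hz
  exact ⟨z, hz, hzm⟩

/-- zero one of three given nonzero coordinates -/
theorem move3 (hg : Continuous g) {u : Fin n → ℝ} (hu : u ∈ SS lam)
    {i j k : Fin n} (hij : i ≠ j) (hik : i ≠ k) (hjk : j ≠ k)
    (hui : u i ≠ 0) (huj : u j ≠ 0) (huk : u k ≠ 0) :
    ∃ u' ∈ SS lam, Cover lam g u u' ∧ (∀ l, u l = 0 → u' l = 0) ∧
      (u' i = 0 ∨ u' j = 0 ∨ u' k = 0) := by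
  rcases eq_or_ne (lam i) (lam j) with he | hne
  · obtain ⟨u', hu', hcov, hzi, hoff⟩ := move_eq hg hu hij hik hjk he
    refine ⟨u', hu', hcov, ?_, Or.inl hzi⟩
    intro l hl
    rcases eq_or_ne l i with rfl | h1
    · exact hzi
    rcases eq_or_ne l j with rfl | h2
    · exact absurd hl huj
    · rw [hoff l h1 h2]; exact hl
  · obtain ⟨T, u', hT, hu', hcov, hzero, hoff, _, _, hk⟩ :=
      move_neq hg hu hij hik hjk hne (Or.inl hui) (esign (u k)) (esign_sq _)
        (esign_mul_sqrt_sq _)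
    refine ⟨u', hu', hcov, ?_, ?_⟩
    · intro l hl
      rcases eq_or_ne l i with rfl | h1
      · exact absurd hl hui
      rcases eq_or_ne l j with rfl | h2
      · exact absurd hl huj
      rcases eq_or_ne l k with rfl | h3
      · exact absurd hl huk
      · rw [hoff l h1 h2 h3]; exact hl
    · rcases hzero with h | h
      · exact Or.inl h
      · exact Or.inr (Or.inl h)

/-- reduce support to at most two coordinates -/
theorem reduce_to_pair (hg : Continuous g) {u : Fin n → ℝ} (hu : u ∈ SS lam) :
    ∃ u' ∈ SS lam, Cover lam g u u' ∧
      (Finset.univ.filter (fun l => u' l ≠ 0)).card ≤ 2 := by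
  set N := (Finset.univ.filter (fun l => u l ≠ 0)).card with hN
  clear_value N
  induction N using Nat.strong_induction_on generalizing u with
  | _ N ih =>
    rcases le_or_gt ((Finset.univ.filter (fun l => u l ≠ 0)).card) 2 with hle | hgt
    · exact ⟨u, hu, cover_refl hu, hle⟩
    · have h3 : 3 ≤ (Finset.univ.filter (fun l => u l ≠ 0)).card := hgt
      obtain ⟨t, hts, htc⟩ := Finset.exists_subset_card_eq h3
      obtain ⟨i, j, k, hij, hik, hjk, rfl⟩ := Finset.card_eq_three.1 htc
      have hmem : ∀ l ∈ ({i, j, k} : Finset (Fin n)), u l ≠ 0 := by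
        intro l hl
        have := hts hl
        simp only [Finset.mem_filter] at this
        exact this.2
      obtain ⟨u', hu', hcov, hsupp, hz⟩ := move3 hg hu hij hik hjk
        (hmem i (by simp)) (hmem j (by simp)) (hmem k (by simp))
      have hsub : (Finset.univ.filter (fun l => u' l ≠ 0))
          ⊆ (Finset.univ.filter (fun l => u l ≠ 0)) := by
        intro l hl
        simp only [Finset.mem_filter] at hl ⊢
        refine ⟨hl.1, fun h => hl.2 (hsupp l h)⟩
      have hlt : (Finset.univ.filter (fun l => u' l ≠ 0)).card
          < (Finset.univ.filter (fun l => u l ≠ 0)).card := by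
        apply Finset.card_lt_card
        rw [Finset.ssubset_iff_of_subset hsub]
        rcases hz with h | h | h
        · exact ⟨i, hts (by simp), by simp [h]⟩
        · exact ⟨j, hts (by simp), by simp [h]⟩
        · exact ⟨k, hts (by simp), by simp [h]⟩
      obtain ⟨u'', hu'', hcov2, hcard⟩ := ih _ (by rw [hN]; exact hlt) hu' rfl
      exact ⟨u'', hu'', cover_trans hcov hcov2, hcard⟩



/-- sums for a vector supported on two coordinates -/
theorem pair_sums {u : Fin n → ℝ} (hu : u ∈ SS lam) {i j : Fin n} (hij : i ≠ j)
    (hoff : ∀ l, l ≠ i → l ≠ j → u l = 0) :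
    u i ^ 2 + u j ^ 2 = 1 ∧ lam i * u i ^ 2 + lam j * u j ^ 2 = 0 := by
  obtain ⟨h1, h2⟩ := hu
  have key : ∀ w : Fin n → ℝ, (∑ l, w l * u l ^ 2) = w i * u i ^ 2 + w j * u j ^ 2 := by
    intro w
    rw [← Finset.sum_subset (Finset.subset_univ ({i, j} : Finset (Fin n)))]
    · rw [Finset.sum_insert (by simp [hij]), Finset.sum_singleton]
    · intro l _ hl
      simp only [Finset.mem_insert, Finset.mem_singleton, not_or] at hl
      rw [hoff l hl.1 hl.2]
      ring
  constructor
  · have := key (fun _ => 1)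
    simp only [one_mul] at this
    rw [← this]
    rw [← h1]
  · rw [← key lam]; exact h2

/-- sums for a vector supported on three coordinates -/
theorem triple_sums {u : Fin n → ℝ} (hu : u ∈ SS lam) {i j k : Fin n}
    (hij : i ≠ j) (hik : i ≠ k) (hjk : j ≠ k)
    (hoff : ∀ l, l ≠ i → l ≠ j → l ≠ k → u l = 0) :
    u i ^ 2 + u j ^ 2 + u k ^ 2 = 1 ∧
      lam i * u i ^ 2 + lam j * u j ^ 2 + lam k * u k ^ 2 = 0 := by
  obtain ⟨h1, h2⟩ := hu
  have key : ∀ w : Fin n → ℝ,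
      (∑ l, w l * u l ^ 2) = w i * u i ^ 2 + w j * u j ^ 2 + w k * u k ^ 2 := by
    intro w
    rw [← Finset.sum_subset (Finset.subset_univ ({i, j, k} : Finset (Fin n)))]
    · rw [Finset.sum_insert (by simp [hij, hik]), Finset.sum_insert (by simp [hjk]),
        Finset.sum_singleton]
      ring
    · intro l _ hl
      simp only [Finset.mem_insert, Finset.mem_singleton, not_or] at hl
      rw [hoff l hl.1 hl.2.1 hl.2.2]
      ring
  constructor
  · have := key (fun _ => 1)
    simp only [one_mul] at this
    rw [← this, ← h1]
  · rw [← key lam]; exact h2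

/-- from small support, extract an ordered signed pair -/
theorem pair_extract (hlam0 : ∀ l, lam l ≠ 0) {u : Fin n → ℝ} (hu : u ∈ SS lam)
    (hcard : (Finset.univ.filter (fun l => u l ≠ 0)).card ≤ 2) :
    ∃ i j, i ≠ j ∧ (∀ l, l ≠ i → l ≠ j → u l = 0) ∧ 0 < lam i ∧ lam j < 0 ∧
      u i ≠ 0 ∧ u j ≠ 0 := by
  have h1 := hu.1
  have h2 := hu.2
  -- some nonzero coordinate
  have hex : ∃ i, u i ≠ 0 := by
    by_contra h
    push_neg at h
    rw [Finset.sum_eq_zero (fun l _ => by rw [h l]; ring)] at h1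
    norm_num at h1
  obtain ⟨i, hi⟩ := hex
  -- another one
  have hex2 : ∃ j, j ≠ i ∧ u j ≠ 0 := by
    by_contra h
    push_neg at h
    have hoff : ∀ l, l ≠ i → u l = 0 := by
      intro l hl
      by_contra h'
      exact h' (h l hl)
    have e1 : u i ^ 2 = 1 := by
      rw [← h1, Finset.sum_eq_single i]
      · intro l _ hl; rw [hoff l hl]; ring
      · simp
    have e2 : lam i * u i ^ 2 = 0 := by
      rw [← h2, Finset.sum_eq_single i]
      · intro l _ hl; rw [hoff l hl]; ring
      · simp
    rw [e1, mul_one] at e2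
    exact hlam0 i e2
  obtain ⟨j, hji, hj⟩ := hex2
  -- no third one
  have hoff : ∀ l, l ≠ i → l ≠ j → u l = 0 := by
    intro l hl1 hl2
    by_contra h'
    have hsub : ({i, j, l} : Finset (Fin n)) ⊆ Finset.univ.filter (fun l => u l ≠ 0) := by
      intro m hm
      simp only [Finset.mem_insert, Finset.mem_singleton] at hm
      simp only [Finset.mem_filter, Finset.mem_univ, true_and]
      rcases hm with rfl | rfl | rfl
      · exact hi
      · exact hj
      · exact h'
    have hc3 : ({i, j, l} : Finset (Fin n)).card = 3 := by
      rw [Finset.card_insert_of_notMem (by simp [Ne.symm hji, hl1.symm]),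
        Finset.card_insert_of_notMem (by simp [hl2.symm]), Finset.card_singleton]
    have := Finset.card_le_card hsub
    omega
  obtain ⟨e1, e2⟩ := pair_sums hu (Ne.symm hji) hoff
  -- signs of the eigenvalues
  have hii : u i ^ 2 > 0 := by positivity
  have hjj : u j ^ 2 > 0 := by positivity
  rcases lt_or_gt_of_ne (hlam0 i) with hneg | hpos
  · -- lam i < 0, so lam j > 0
    have hlj : 0 < lam j := by
      rcases lt_or_gt_of_ne (hlam0 j) with h' | h'
      · nlinarith
      · exact h'
    exact ⟨j, i, hji, fun l a b => hoff l b a, hlj, hneg, hj, hi⟩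
  · have hlj : lam j < 0 := by
      rcases lt_or_gt_of_ne (hlam0 j) with h' | h'
      · exact h'
      · nlinarith
    exact ⟨i, j, Ne.symm hji, hoff, hpos, hlj, hi, hj⟩

/-- replace the positive index of a pair by another positive index,
with free sign on the new coordinate -/
theorem pair_move (hg : Continuous g) {u : Fin n → ℝ} (hu : u ∈ SS lam)
    {i j k : Fin n} (hij : i ≠ j) (hik : i ≠ k) (hjk : j ≠ k)
    (hli : 0 < lam i) (hlj : lam j < 0) (hlk : 0 < lam k)
    (hoff : ∀ l, l ≠ i → l ≠ j → u l = 0) (ε : ℝ) (hε : ε ^ 2 = 1) :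
    ∃ u' ∈ SS lam, Cover lam g u u' ∧ (∀ l, l ≠ k → l ≠ j → u' l = 0) ∧
      0 < u' j * u j ∧ 0 < u' k * ε := by
  obtain ⟨e1, e2⟩ := pair_sums hu hij hoff
  have hui : u i ≠ 0 := by
    intro h
    rw [h] at e1 e2
    have hjj : u j ^ 2 > 0 := by nlinarith
    nlinarith
  have huj : u j ≠ 0 := by
    intro h
    rw [h] at e1 e2
    have hii : u i ^ 2 > 0 := by nlinarith
    nlinarith
  have huk : u k = 0 := hoff k (Ne.symm hik) (Ne.symm hjk)
  obtain ⟨T, u', hT, hu', hcov, hzero, hoff', hsi, hsj, hk⟩ :=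
    move_neq hg hu hij hik hjk (by linarith) (Or.inl hui) ε hε
      (by rw [huk]; simp)
  have hoff'' : ∀ l, l ≠ i → l ≠ j → l ≠ k → u' l = 0 := by
    intro l h1 h2 h3
    rw [hoff' l h1 h2 h3]
    exact hoff l h1 h2
  obtain ⟨t1, t2⟩ := triple_sums hu' hij hik hjk hoff''
  -- rule out the branch u' j = 0
  have hzi : u' i = 0 := by
    rcases hzero with h | h
    · exact h
    · exfalso
      rw [h] at t1 t2
      have : u' i ^ 2 = 0 ∧ u' k ^ 2 = 0 := by
        constructor <;> nlinarith [sq_nonneg (u' i), sq_nonneg (u' k)]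
      nlinarith [this.1, this.2]
  rw [hzi] at t1 t2
  have huj' : u' j ≠ 0 := by
    intro h
    rw [h] at t1 t2
    have : u' k ^ 2 = 0 := by nlinarith [sq_nonneg (u' k)]
    nlinarith
  have huk' : u' k ≠ 0 := by
    intro h
    rw [h] at t1 t2
    have : u' j ^ 2 = 0 := by nlinarith [sq_nonneg (u' j)]
    nlinarith
  refine ⟨u', hu', hcov, ?_, ?_, ?_⟩
  · intro l h1 h2
    rcases eq_or_ne l i with rfl | h3
    · exact hzi
    · exact hoff'' l h3 h2 h1
  · exact lt_of_le_of_ne hsj (Ne.symm (mul_ne_zero huj' huj))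
  · have hεne : ε ≠ 0 := by intro h; rw [h] at hε; norm_num at hε
    have : u' k * ε = √(u k ^ 2 + T) := by
      rw [hk]
      linear_combination Real.sqrt (u k ^ 2 + T) * hε
    rw [this]
    have h0 : √(u k ^ 2 + T) ≠ 0 := by
      intro h
      rw [hk, h, mul_zero] at huk'
      exact huk' rfl
    have := Real.sqrt_nonneg (u k ^ 2 + T)
    exact lt_of_le_of_ne this (Ne.symm h0)

/-- two pair vectors on the same indices with matching signs coincide -/
theorem pair_eq {u v : Fin n → ℝ} (hu : u ∈ SS lam) (hv : v ∈ SS lam) {i j : Fin n}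
    (hij : i ≠ j) (hlamne : lam i ≠ lam j)
    (hoffu : ∀ l, l ≠ i → l ≠ j → u l = 0) (hoffv : ∀ l, l ≠ i → l ≠ j → v l = 0)
    (hsi : 0 < u i * v i) (hsj : 0 < u j * v j) : u = v := by
  obtain ⟨e1, e2⟩ := pair_sums hu hij hoffu
  obtain ⟨f1, f2⟩ := pair_sums hv hij hoffv
  have hd : lam i - lam j ≠ 0 := sub_ne_zero.2 hlamne
  have hsq_i : u i ^ 2 = v i ^ 2 := by
    have : (lam i - lam j) * (u i ^ 2 - v i ^ 2) = 0 := by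
      linear_combination e2 - f2 - lam j * e1 + lam j * f1
    rcases mul_eq_zero.1 this with h | h
    · exact absurd h hd
    · linarith
  have hsq_j : u j ^ 2 = v j ^ 2 := by nlinarith
  have hei : u i = v i := by
    have h0 : (u i - v i) * (u i + v i) = 0 := by nlinarith
    rcases mul_eq_zero.1 h0 with h | h
    · linarith
    · nlinarith
  have hej : u j = v j := by
    have h0 : (u j - v j) * (u j + v j) = 0 := by nlinarith
    rcases mul_eq_zero.1 h0 with h | h
    · linarith
    · nlinarith
  funext l
  rcases eq_or_ne l i with rfl | h1
  · exact hei
  rcases eq_or_ne l j with rfl | h2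
  · exact hej
  · rw [hoffu l h1 h2, hoffv l h1 h2]


theorem cover_neg_right (hgneg : ∀ w, g (-w) = g w) {u v : Fin n → ℝ}
    (h : Cover lam g u (-v)) : Cover lam g u v := by
  intro m hm
  apply h
  rwa [hgneg v]

theorem SS_neg_mem {v : Fin n → ℝ} (hv : v ∈ SS lam) : -v ∈ SS lam := by
  obtain ⟨h1, h2⟩ := hv
  constructor
  · simpa using h1
  · simpa using h2

theorem mul_pos_trans {a b c : ℝ} (h1 : 0 < a * b) (h2 : 0 < b * c) : 0 < a * c := by
  have hb : b ≠ 0 := by intro h; rw [h, mul_zero] at h1; exact lt_irrefl 0 h1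
  have hb2 : 0 < b ^ 2 := by positivity
  nlinarith [mul_pos h1 h2]

theorem esign_transfer {x y : ℝ} (hx : x ≠ 0) (h : 0 < y * esign x) : 0 < y * x := by
  unfold esign at h
  split at h
  · nlinarith [(by assumption : x < 0)]
  · have : 0 < x := lt_of_le_of_ne (not_lt.1 (by assumption)) (Ne.symm hx)
    nlinarith

/-- out-and-back on the negative side: flip the sign of the `l` coordinate at will -/
theorem outback_neg (hg : Continuous g) (hn : 3 ≤ n) {u : Fin n → ℝ} (hu : u ∈ SS lam)
    {k l m : Fin n} (hkl : k ≠ l) (hmk : m ≠ k) (hml : m ≠ l)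
    (hlk : 0 < lam k) (hll : lam l < 0) (hlm : lam m < 0)
    (hoff : ∀ a, a ≠ k → a ≠ l → u a = 0) (ε : ℝ) (hε : ε ^ 2 = 1) :
    ∃ u' ∈ SS lam, Cover lam g u u' ∧ (∀ a, a ≠ k → a ≠ l → u' a = 0) ∧
      0 < u' k * u k ∧ 0 < u' l * ε := by
  -- first move: l → m (working with -lam, positive side)
  have hu' : u ∈ SS (fun a => -lam a) := by rw [SS_neg]; exact hu
  obtain ⟨w, hw, hcov1, hoffw, hsk1, hsm1⟩ := pair_move (lam := fun a => -lam a) hg hu'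
    (i := l) (j := k) (k := m) (Ne.symm hkl) (Ne.symm hml) (Ne.symm hmk)
    (by simpa using hll) (by simpa using hlk) (by simpa using hlm)
    (fun a ha1 ha2 => hoff a ha2 ha1) 1 (one_pow 2)
  -- second move: m → l
  obtain ⟨w', hw', hcov2, hoffw', hsk2, hsl2⟩ := pair_move (lam := fun a => -lam a) hg hw
    (i := m) (j := k) (k := l) hmk hml hkl
    (by simpa using hlm) (by simpa using hlk) (by simpa using hll)
    (fun a ha1 ha2 => hoffw a ha1 ha2) ε hε
  rw [SS_neg] at hw'
  refine ⟨w', hw', cover_trans (cover_neglam hcov1) (cover_neglam hcov2),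
    fun a ha1 ha2 => hoffw' a ha2 ha1, mul_pos_trans hsk2 hsk1, hsl2⟩

/-- out-and-back on the positive side -/
theorem outback_pos (hg : Continuous g) (hn : 3 ≤ n) {u : Fin n → ℝ} (hu : u ∈ SS lam)
    {k l m : Fin n} (hkl : k ≠ l) (hmk : m ≠ k) (hml : m ≠ l)
    (hlk : 0 < lam k) (hll : lam l < 0) (hlm : 0 < lam m)
    (hoff : ∀ a, a ≠ k → a ≠ l → u a = 0) (ε : ℝ) (hε : ε ^ 2 = 1) :
    ∃ u' ∈ SS lam, Cover lam g u u' ∧ (∀ a, a ≠ k → a ≠ l → u' a = 0) ∧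
      0 < u' l * u l ∧ 0 < u' k * ε := by
  obtain ⟨w, hw, hcov1, hoffw, hsl1, hsm1⟩ := pair_move hg hu
    (i := k) (j := l) (k := m) hkl (Ne.symm hmk) (Ne.symm hml) hlk hll hlm hoff 1 (one_pow 2)
  obtain ⟨w', hw', hcov2, hoffw', hsl2, hsk2⟩ := pair_move hg hw
    (i := m) (j := l) (k := k) hml hmk (Ne.symm hkl) hlm hll hlk
    (fun a ha1 ha2 => hoffw a ha1 ha2) ε hε
  exact ⟨w', hw', cover_trans hcov1 hcov2, fun a ha1 ha2 => hoffw' a ha1 ha2,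
    mul_pos_trans hsl2 hsl1, hsk2⟩

/-- align two pairs on the same indices when the `k`-signs already match -/
theorem align_signed (hg : Continuous g) (hgneg : ∀ w, g (-w) = g w) (hn : 3 ≤ n)
    (hlam0 : ∀ a, lam a ≠ 0) {u v : Fin n → ℝ} (hu : u ∈ SS lam) (hv : v ∈ SS lam)
    {k l : Fin n} (hkl : k ≠ l) (hlk : 0 < lam k) (hll : lam l < 0)
    (hoffu : ∀ a, a ≠ k → a ≠ l → u a = 0) (hoffv : ∀ a, a ≠ k → a ≠ l → v a = 0)
    (huk : u k ≠ 0) (hul : u l ≠ 0) (hvk : v k ≠ 0) (hvl : v l ≠ 0)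
    (hsk : 0 < u k * v k) : Cover lam g u v := by
  have hlamne : lam k ≠ lam l := by linarith
  rcases lt_or_gt_of_ne (mul_ne_zero hul hvl) with hneg | hpos
  · -- mismatch at l; get a spare index
    obtain ⟨m, hmk, hml⟩ := exists_third hn k l
    rcases lt_or_gt_of_ne (hlam0 m) with hm | hm
    · -- negative spare: flip l directly
      obtain ⟨u', hu', hcov, hoffu', hsk', hsl'⟩ :=
        outback_neg hg hn hu hkl hmk hml hlk hll hm hoffu (esign (v l)) (esign_sq _)
      have heq : u' = v := by
        apply pair_eq hu' hv hkl hlamne hoffu' hoffv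
        · exact mul_pos_trans hsk' hsk
        · exact esign_transfer hvl hsl'
      rwa [heq] at hcov
    · -- positive spare: aim at -v, flipping k
      apply cover_neg_right hgneg
      obtain ⟨u', hu', hcov, hoffu', hsl', hsk'⟩ :=
        outback_pos hg hn hu hkl hmk hml hlk hll hm hoffu (esign (-v k)) (esign_sq _)
      have heq : u' = -v := by
        apply pair_eq hu' (SS_neg_mem hv) hkl hlamne hoffu'
          (fun a h1 h2 => by simp [hoffv a h1 h2])
        · have := esign_transfer (x := -v k) (by simpa using hvk) hsk'
          simpa using this
        · have h1 : 0 < u' l * u l := hsl'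
          have h2 : 0 < u l * (-v l) := by nlinarith
          have := mul_pos_trans h1 h2
          simpa using this
      rwa [heq] at hcov
  · -- signs already fully match
    have heq : u = v := pair_eq hu hv hkl hlamne hoffu hoffv hsk hpos
    rw [heq]
    exact cover_refl hv

/-- align two pairs on the same indices -/
theorem align_any (hg : Continuous g) (hgneg : ∀ w, g (-w) = g w) (hn : 3 ≤ n)
    (hlam0 : ∀ a, lam a ≠ 0) {u v : Fin n → ℝ} (hu : u ∈ SS lam) (hv : v ∈ SS lam)
    {k l : Fin n} (hkl : k ≠ l) (hlk : 0 < lam k) (hll : lam l < 0)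
    (hoffu : ∀ a, a ≠ k → a ≠ l → u a = 0) (hoffv : ∀ a, a ≠ k → a ≠ l → v a = 0)
    (huk : u k ≠ 0) (hul : u l ≠ 0) (hvk : v k ≠ 0) (hvl : v l ≠ 0) :
    Cover lam g u v := by
  rcases lt_or_gt_of_ne (mul_ne_zero huk hvk) with hneg | hpos
  · apply cover_neg_right hgneg
    apply align_signed hg hgneg hn hlam0 hu (SS_neg_mem hv) hkl hlk hll hoffu
      (fun a h1 h2 => by simp [hoffv a h1 h2]) huk hul
      (by simpa using hvk) (by simpa using hvl)
    simp only [Pi.neg_apply]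
    nlinarith
  · exact align_signed hg hgneg hn hlam0 hu hv hkl hlk hll hoffu hoffv huk hul hvk hvl hpos

/-- the case where all eigenvalues are nonzero -/
theorem caseB (hg : Continuous g) (hgneg : ∀ w, g (-w) = g w) (hn : 3 ≤ n)
    (hlam0 : ∀ a, lam a ≠ 0) {u v : Fin n → ℝ} (hu : u ∈ SS lam) (hv : v ∈ SS lam) :
    Cover lam g u v := by
  obtain ⟨u₀, hu₀, hcovu, hcardu⟩ := reduce_to_pair hg hu
  obtain ⟨v₀, hv₀, hcovv, hcardv⟩ := reduce_to_pair hg hv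
  obtain ⟨i, j, hij, hoffu0, hli, hlj, hui, huj⟩ := pair_extract hlam0 hu₀ hcardu
  obtain ⟨k, l, hkl, hoffv0, hlk, hll, hvk, hvl⟩ := pair_extract hlam0 hv₀ hcardv
  -- it suffices to cover u₀ to v₀
  suffices h : Cover lam g u₀ v₀ by
    exact cover_trans hcovu (cover_trans h (cover_symm hcovv))
  -- step 1 : make positive index k
  have hjk : j ≠ k := fun h => by rw [← h] at hlk; linarith
  have hjl' : j ≠ l → True := fun _ => trivial
  obtain ⟨u₁, hu₁, hcov1, hoffu1, hu1j, hu1k⟩ :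
      ∃ u₁ ∈ SS lam, Cover lam g u₀ u₁ ∧ (∀ a, a ≠ k → a ≠ j → u₁ a = 0) ∧
        u₁ j ≠ 0 ∧ u₁ k ≠ 0 := by
    rcases eq_or_ne i k with rfl | hik
    · exact ⟨u₀, hu₀, cover_refl hu₀, fun a h1 h2 => hoffu0 a h1 h2, huj, hui⟩
    · obtain ⟨u₁, hu₁, hcov, hoff', hsj, hsk⟩ :=
        pair_move hg hu₀ hij hik hjk hli hlj hlk hoffu0 1 (one_pow 2)
      refine ⟨u₁, hu₁, hcov, hoff', ?_, ?_⟩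
      · intro h; rw [h, zero_mul] at hsj; exact lt_irrefl 0 hsj
      · intro h; rw [h, zero_mul] at hsk; exact lt_irrefl 0 hsk
  -- step 2 : make negative index l
  have hkl' : k ≠ l := hkl
  obtain ⟨u₂, hu₂, hcov2, hoffu2, hu2k, hu2l⟩ :
      ∃ u₂ ∈ SS lam, Cover lam g u₁ u₂ ∧ (∀ a, a ≠ k → a ≠ l → u₂ a = 0) ∧
        u₂ k ≠ 0 ∧ u₂ l ≠ 0 := by
    rcases eq_or_ne j l with rfl | hjl
    · exact ⟨u₁, hu₁, cover_refl hu₁, fun a h1 h2 => hoffu1 a h1 h2, hu1k, hu1j⟩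
    · have hu₁' : u₁ ∈ SS (fun a => -lam a) := by rw [SS_neg]; exact hu₁
      obtain ⟨u₂, hu₂, hcov, hoff', hsk, hsl⟩ := pair_move (lam := fun a => -lam a) hg hu₁'
        (i := j) (j := k) (k := l) hjk hjl hkl
        (by simpa using hlj) (by simpa using hlk) (by simpa using hll)
        (fun a h1 h2 => hoffu1 a h2 h1) 1 (one_pow 2)
      rw [SS_neg] at hu₂
      refine ⟨u₂, hu₂, cover_neglam hcov, fun a h1 h2 => hoff' a h2 h1, ?_, ?_⟩
      · intro h; rw [h, zero_mul] at hsk; exact lt_irrefl 0 hsk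
      · intro h; rw [h, zero_mul] at hsl; exact lt_irrefl 0 hsl
  exact cover_trans hcov1 (cover_trans hcov2
    (align_any hg hgneg hn hlam0 hu₂ hv₀ hkl hlk hll hoffu2 hoffv0 hu2k hu2l hvk hvl))

/-- kernel coverage: everything covers to `ee z` -/
theorem kernel_cover (hg : Continuous g) (hgneg : ∀ w, g (-w) = g w) {z : Fin n}
    (hz : lam z = 0) {u : Fin n → ℝ} (hu : u ∈ SS lam) : Cover lam g u (ee z) := by
  have hsq : u z ^ 2 ≤ 1 := by
    rw [← hu.1]
    exact Finset.single_le_sum (f := fun l => u l ^ 2) (fun l _ => sq_nonneg _) (Finset.mem_univ z)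
  rcases lt_or_eq_of_le hsq with hlt | heq
  · exact cover_to_kernel hg hz hu (by nlinarith [abs_nonneg (u z), sq_abs (u z)])
  · -- u = ± ee z
    have hoff : ∀ l, l ≠ z → u l = 0 := by
      intro l hl
      have hrest : ∑ m ∈ Finset.univ.erase z, u m ^ 2 = 0 := by
        have := hu.1
        rw [← Finset.add_sum_erase _ _ (Finset.mem_univ z)] at this
        linarith
      have := (Finset.sum_eq_zero_iff_of_nonneg (fun m _ => sq_nonneg (u m))).1 hrest l
        (Finset.mem_erase.2 ⟨hl, Finset.mem_univ l⟩)
      exact pow_eq_zero_iff (n := 2) (by norm_num) |>.1 this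
    have hcases : u = ee z ∨ u = -ee z := by
      have h1 : (u z - 1) * (u z + 1) = 0 := by nlinarith
      rcases mul_eq_zero.1 h1 with h | h
      · left
        funext l
        rcases eq_or_ne l z with rfl | hl
        · simp [ee]; linarith
        · rw [hoff l hl]; simp [ee, hl]
      · right
        funext l
        rcases eq_or_ne l z with rfl | hl
        · simp [ee]; linarith
        · rw [hoff l hl]; simp [ee, hl]
    rcases hcases with rfl | h
    · exact cover_refl (ee_mem hz)
    · rw [h]
      exact cover_neg_left hgneg (cover_refl (ee_mem hz))

/-- main coverage theorem for diagonal forms -/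
theorem diag_cover (hg : Continuous g) (hgneg : ∀ w, g (-w) = g w) (hn : 3 ≤ n)
    {u v : Fin n → ℝ} (hu : u ∈ SS lam) (hv : v ∈ SS lam) : Cover lam g u v := by
  by_cases hz : ∃ z, lam z = 0
  · obtain ⟨z, hz⟩ := hz
    exact cover_trans (kernel_cover hg hgneg hz hu) (cover_symm (kernel_cover hg hgneg hz hv))
  · push_neg at hz
    exact caseB hg hgneg hn hz hu hv



/-- the quadratic form of a matrix -/
def qf (M : Matrix (Fin n) (Fin n) ℝ) (x : Fin n → ℝ) : ℝ := x ⬝ᵥ M *ᵥ x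

theorem qf_add (X Y : Matrix (Fin n) (Fin n) ℝ) (z : Fin n → ℝ) :
    qf (X + Y) z = qf X z + qf Y z := by
  simp [qf, add_mulVec, dotProduct_add]

theorem qf_smul (c : ℝ) (X : Matrix (Fin n) (Fin n) ℝ) (z : Fin n → ℝ) :
    qf (c • X) z = c * qf X z := by
  simp [qf, smul_mulVec, dotProduct_smul]

theorem qf_transpose (X : Matrix (Fin n) (Fin n) ℝ) (z : Fin n → ℝ) :
    qf Xᵀ z = qf X z := by
  rw [qf, mulVec_transpose, qf, dotProduct_mulVec, dotProduct_comm]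

theorem qf_one (z : Fin n → ℝ) : qf (1 : Matrix (Fin n) (Fin n) ℝ) z = ∑ i, z i ^ 2 := by
  simp [qf, one_mulVec, dotProduct, sq]

theorem qf_neg (M : Matrix (Fin n) (Fin n) ℝ) (z : Fin n → ℝ) : qf M (-z) = qf M z := by
  simp [qf, mulVec_neg]

theorem qf_diagonal (lam : Fin n → ℝ) (w : Fin n → ℝ) :
    qf (diagonal lam) w = ∑ i, lam i * w i ^ 2 := by
  simp only [qf, dotProduct, mulVec_diagonal]
  exact Finset.sum_congr rfl fun i _ => by ring

theorem qf_continuous (M : Matrix (Fin n) (Fin n) ℝ) : Continuous (qf M) := by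
  unfold qf
  simp only [dotProduct, mulVec]
  exact continuous_finset_sum _ fun i _ => (continuous_apply i).mul
    (continuous_finset_sum _ fun j _ => continuous_const.mul (continuous_apply j))

theorem continuous_mulVec (V : Matrix (Fin n) (Fin n) ℝ) :
    Continuous fun w : Fin n → ℝ => V *ᵥ w := by
  apply continuous_pi
  intro i
  simp only [mulVec, dotProduct]
  exact continuous_finset_sum _ fun j _ => continuous_const.mul (continuous_apply j)

theorem qf_conj (V D : Matrix (Fin n) (Fin n) ℝ) (x : Fin n → ℝ) :
    qf (V * D * star V) x = qf D (star V *ᵥ x) := by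
  have hstar : star V = Vᵀ := conjTranspose_eq_transpose_of_trivial V
  rw [qf, qf, ← mulVec_mulVec, ← mulVec_mulVec, dotProduct_mulVec, ← mulVec_transpose, ← hstar]

theorem sum_sq_mulVec {A : Matrix (Fin n) (Fin n) ℝ} (hA : Aᵀ * A = 1) (x : Fin n → ℝ) :
    ∑ i, (A *ᵥ x) i ^ 2 = ∑ i, x i ^ 2 := by
  have e1 : ∀ y : Fin n → ℝ, ∑ i, y i ^ 2 = y ⬝ᵥ y := by
    intro y; simp [dotProduct, sq]
  rw [e1, e1]
  rw [dotProduct_mulVec, ← mulVec_transpose, mulVec_mulVec, hA, one_mulVec]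



/-- diagonalization interface for a real symmetric matrix -/
theorem exists_diag (C : Matrix (Fin n) (Fin n) ℝ) (hCh : C.IsHermitian) :
    ∃ (lam : Fin n → ℝ) (V : Matrix (Fin n) (Fin n) ℝ), Vᵀ * V = 1 ∧ V * Vᵀ = 1 ∧
      ∀ w, qf C (V *ᵥ w) = ∑ i, lam i * w i ^ 2 := by
  obtain ⟨lam, V, hVt, hV1, hV2, hspec⟩ :
      ∃ (lam : Fin n → ℝ) (V : Matrix (Fin n) (Fin n) ℝ), star V = Vᵀ ∧
        star V * V = 1 ∧ V * star V = 1 ∧ C = V * diagonal lam * star V := by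
    refine ⟨hCh.eigenvalues, (hCh.eigenvectorUnitary : Matrix (Fin n) (Fin n) ℝ),
      conjTranspose_eq_transpose_of_trivial _, hCh.eigenvectorUnitary.2.1,
      hCh.eigenvectorUnitary.2.2, ?_⟩
    have := hCh.spectral_theorem
    rw [Unitary.conjStarAlgAut_apply] at this
    simpa using this
  refine ⟨lam, V, by rw [← hVt]; exact hV1, by rw [← hVt]; exact hV2, ?_⟩
  intro w
  rw [hspec, qf_conj, mulVec_mulVec, hV1, one_mulVec, qf_diagonal]
end Brick

namespace Brick2
open Brick

theorem comb_mem_uIcc {p q a b : ℝ} (ha : 0 ≤ a) (hb : 0 ≤ b) (hab : a + b = 1) :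
    a * p + b * q ∈ Set.uIcc p q := by
  have ha1 : a = 1 - b := by linarith
  subst ha1
  rcases le_total p q with h | h
  · rw [Set.uIcc_of_le h, Set.mem_Icc]
    constructor
    · nlinarith [mul_nonneg hb (sub_nonneg.2 h)]
    · nlinarith [mul_nonneg (by linarith : (0:ℝ) ≤ 1 - b) (sub_nonneg.2 h)]
  · rw [Set.uIcc_of_ge h, Set.mem_Icc]
    constructor
    · nlinarith [mul_nonneg (by linarith : (0:ℝ) ≤ 1 - b) (sub_nonneg.2 h)]
    · nlinarith [mul_nonneg hb (sub_nonneg.2 h)]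

set_option maxHeartbeats 1000000 in
theorem main_aux {n : ℕ} (hn : 3 ≤ n) (A B : Matrix (Fin n) (Fin n) ℝ)
    (x y : Fin n → ℝ) (hx : ∑ i, x i ^ 2 = 1) (hy : ∑ i, y i ^ 2 = 1)
    (a b : ℝ) (ha : 0 ≤ a) (hb : 0 ≤ b) (hab : a + b = 1) :
    ∃ z : Fin n → ℝ, (∑ i, z i ^ 2 = 1) ∧
      qf A z = a * qf A x + b * qf A y ∧ qf B z = a * qf B x + b * qf B y := by
  by_cases hPQ : qf A x = qf A y ∧ qf B x = qf B y
  · refine ⟨x, hx, ?_, ?_⟩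
    · rw [← hPQ.1]; linear_combination (qf A x) * hab.symm
    · rw [← hPQ.2]; linear_combination (qf B x) * hab.symm
  · set α : ℝ := qf B y - qf B x with hα
    set β : ℝ := qf A x - qf A y with hβ
    have hαβ : ¬(α = 0 ∧ β = 0) := by
      intro ⟨h1, h2⟩
      apply hPQ
      constructor
      · rw [hβ] at h2; linarith
      · rw [hα] at h1; linarith
    set γ : ℝ := -(α * qf A x + β * qf B x) with hγ
    set N : Matrix (Fin n) (Fin n) ℝ := α • A + β • B with hN
    set C : Matrix (Fin n) (Fin n) ℝ := (1/2 : ℝ) • (N + Nᵀ) + γ • (1 : Matrix (Fin n) (Fin n) ℝ)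
      with hC
    have hCq : ∀ z, qf C z = α * qf A z + β * qf B z + γ * ∑ i, z i ^ 2 := by
      intro z
      rw [hC, qf_add, qf_smul, qf_add, qf_transpose, qf_smul, qf_one, hN, qf_add, qf_smul,
        qf_smul]
      ring
    have hCh : C.IsHermitian := by
      rw [Matrix.IsHermitian, conjTranspose_eq_transpose_of_trivial, hC,
        transpose_add, transpose_smul, transpose_add, transpose_transpose, transpose_smul,
        transpose_one, add_comm Nᵀ N]
    obtain ⟨lam, V, hVT1, hVT2, hq⟩ := exists_diag C hCh
    clear_value C
    set g : (Fin n → ℝ) → ℝ := fun w => -β * qf A (V *ᵥ w) + α * qf B (V *ᵥ w) with hg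
    have hgc : Continuous g := by
      apply Continuous.add
      · exact continuous_const.mul ((qf_continuous A).comp (continuous_mulVec V))
      · exact continuous_const.mul ((qf_continuous B).comp (continuous_mulVec V))
    have hgneg : ∀ w, g (-w) = g w := by
      intro w
      simp only [hg, mulVec_neg, qf_neg]
    set u : Fin n → ℝ := Vᵀ *ᵥ x with hu'
    set v : Fin n → ℝ := Vᵀ *ᵥ y with hv'
    have hVu : V *ᵥ u = x := by rw [hu', mulVec_mulVec, hVT2, one_mulVec]
    have hVv : V *ᵥ v = y := by rw [hv', mulVec_mulVec, hVT2, one_mulVec]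
    have hqCx : qf C x = 0 := by rw [hCq, hx, hγ]; ring
    have hqCy : qf C y = 0 := by
      rw [hCq, hy]
      have : α * (qf A x - qf A y) = β * (qf B y - qf B x) := by rw [← hβ, ← hα]; ring
      rw [hγ]
      nlinarith [this]
    have hVtV1 : (Vᵀ)ᵀ * Vᵀ = 1 := by rw [transpose_transpose]; exact hVT2
    have hu : u ∈ SS lam := by
      constructor
      · rw [hu', sum_sq_mulVec hVtV1, hx]
      · rw [← hq, hVu, hqCx]
    have hv : v ∈ SS lam := by
      constructor
      · rw [hv', sum_sq_mulVec hVtV1, hy]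
      · rw [← hq, hVv, hqCy]
    set R1 : ℝ := a * qf A x + b * qf A y with hR1
    set R2 : ℝ := a * qf B x + b * qf B y with hR2
    set m : ℝ := -β * R1 + α * R2 with hm
    have hgu : g u = -β * qf A x + α * qf B x := by rw [hg]; simp only [hVu]
    have hgv : g v = -β * qf A y + α * qf B y := by rw [hg]; simp only [hVv]
    have hmm : m ∈ Set.uIcc (g u) (g v) := by
      have e : m = a * (g u) + b * (g v) := by
        rw [hgu, hgv, hm, hR1, hR2]; ring
      rw [e]
      exact comb_mem_uIcc ha hb hab
    obtain ⟨z0, hz0, hgz0⟩ := diag_cover hgc hgneg hn hu hv m hmm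
    have hznorm : ∑ i, (V *ᵥ z0) i ^ 2 = 1 := by rw [sum_sq_mulVec hVT1, hz0.1]
    have E1 : α * qf A (V *ᵥ z0) + β * qf B (V *ᵥ z0) + γ = 0 := by
      have h0 : qf C (V *ᵥ z0) = 0 := by rw [hq, hz0.2]
      rw [hCq, hznorm] at h0
      linarith
    have E2 : -β * qf A (V *ᵥ z0) + α * qf B (V *ᵥ z0) = m := by
      rw [← hgz0, hg]
    have E3 : α * R1 + β * R2 + γ = 0 := by
      have ha1 : a = 1 - b := by linarith
      rw [hR1, hR2, hγ, hα, hβ, ha1]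
      ring
    have D1 : α * (qf A (V *ᵥ z0) - R1) + β * (qf B (V *ᵥ z0) - R2) = 0 := by
      linear_combination E1 - E3
    have D2 : -β * (qf A (V *ᵥ z0) - R1) + α * (qf B (V *ᵥ z0) - R2) = 0 := by
      linear_combination E2 - hm
    have hpos : 0 < α ^ 2 + β ^ 2 := by
      rcases not_and_or.1 hαβ with h | h
      · have : α ^ 2 > 0 := by positivity
        nlinarith [sq_nonneg β]
      · have : β ^ 2 > 0 := by positivity
        nlinarith [sq_nonneg α]
    have keyA : (α ^ 2 + β ^ 2) * (qf A (V *ᵥ z0) - R1) = 0 := by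
      linear_combination α * D1 - β * D2
    have keyB : (α ^ 2 + β ^ 2) * (qf B (V *ᵥ z0) - R2) = 0 := by
      linear_combination β * D1 + α * D2
    have hA' : qf A (V *ᵥ z0) = R1 := by
      rcases mul_eq_zero.1 keyA with h | h
      · exact absurd h (ne_of_gt hpos)
      · linarith
    have hB' : qf B (V *ᵥ z0) = R2 := by
      rcases mul_eq_zero.1 keyB with h | h
      · exact absurd h (ne_of_gt hpos)
      · linarith
    exact ⟨V *ᵥ z0, hznorm, by rw [hA', hR1], by rw [hB', hR2]⟩
end Brick2

open Brick2 in
theorem stmt_6 (n : ℕ) (hn : 3 ≤ n) (A B : Matrix (Fin n) (Fin n) ℝ) :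
    Convex ℝ {p : ℝ × ℝ | ∃ x : EuclideanSpace ℝ (Fin n), ‖x‖ = 1 ∧
      p = ((x : Fin n → ℝ) ⬝ᵥ A.mulVec x, (x : Fin n → ℝ) ⬝ᵥ B.mulVec x)} := by
  intro p hp q hq a b ha hb hab
  obtain ⟨x, hx1, hx2⟩ := hp
  obtain ⟨y, hy1, hy2⟩ := hq
  have norm_iff : ∀ w : EuclideanSpace ℝ (Fin n), ‖w‖ = 1 ↔ ∑ i, (w : Fin n → ℝ) i ^ 2 = 1 := by
    intro w
    rw [EuclideanSpace.norm_eq]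
    have he : ∀ i, ‖w i‖ ^ 2 = (w : Fin n → ℝ) i ^ 2 := by
      intro i; rw [Real.norm_eq_abs, sq_abs]
    rw [Finset.sum_congr rfl fun i _ => he i]
    constructor
    · intro h
      have hnn : 0 ≤ ∑ i, (w : Fin n → ℝ) i ^ 2 :=
        Finset.sum_nonneg fun i _ => sq_nonneg _
      nlinarith [Real.sq_sqrt hnn]
    · intro h
      rw [h, Real.sqrt_one]
  obtain ⟨z, hz, hA, hB⟩ := Brick2.main_aux hn A B (x : Fin n → ℝ) (y : Fin n → ℝ)
    ((norm_iff x).1 hx1) ((norm_iff y).1 hy1) a b ha hb hab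
  refine ⟨(WithLp.toLp 2 z : EuclideanSpace ℝ (Fin n)), (norm_iff (WithLp.toLp 2 z)).2 hz, ?_⟩
  rw [hx2, hy2]
  have e1 : (z : Fin n → ℝ) ⬝ᵥ A.mulVec z = Brick.qf A z := rfl
  have e2 : (z : Fin n → ℝ) ⬝ᵥ B.mulVec z = Brick.qf B z := rfl
  rw [Prod.ext_iff]
  constructor
  · simp only [Prod.smul_fst, Prod.fst_add, smul_eq_mul, Prod.mk.injEq]
    rw [e1, hA]
    rfl
  · simp only [Prod.smul_snd, Prod.snd_add, smul_eq_mul]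
    rw [e2, hB]
    rfl
end

section
/- Let A ∈ ℝ^{2n×2n} with n ≥ 1. Then there exists a symplectic orthogonal matrix U ∈ ℝ^{2n×2n} (i.e., UᵀU = I and UᵀJU = J where J = [[0, I_n],[−I_n, 0]]) such that all diagonal entries of UᵀAU are equal. -/
open Matrix Real

section RotAux

variable {α : Type*} [Fintype α] [DecidableEq α]

noncomputable def rotA (i j : α) (θ : ℝ) : Matrix α α ℝ :=
  1 + (Real.cos θ - 1) • (single i i 1 + single j j 1)
    + Real.sin θ • (single j i 1 - single i j 1)

lemma rotA_mul (i j : α) (hij : i ≠ j) (θ φ : ℝ) :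
    rotA i j θ * rotA i j φ = rotA i j (θ + φ) := by
  set P : Matrix α α ℝ := single i i 1 + single j j 1 with hPdef
  set K : Matrix α α ℝ := single j i 1 - single i j 1 with hKdef
  have hP : P * P = P := by
    simp [hPdef, mul_add, add_mul, single_mul_single_same,
      Matrix.single_mul_single_of_ne, hij, hij.symm]
  have hK : K * K = -P := by
    simp [hPdef, hKdef, mul_sub, sub_mul, single_mul_single_same,
      Matrix.single_mul_single_of_ne, hij, hij.symm]
    all_goals abel
  have hPK : P * K = K := by
    simp [hPdef, hKdef, mul_sub, sub_mul, mul_add, add_mul, single_mul_single_same,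
      Matrix.single_mul_single_of_ne, hij, hij.symm]
    all_goals abel
  have hKP : K * P = K := by
    simp [hPdef, hKdef, mul_sub, sub_mul, mul_add, add_mul, single_mul_single_same,
      Matrix.single_mul_single_of_ne, hij, hij.symm]
    all_goals abel
  show (1 + (cos θ - 1) • P + sin θ • K) * (1 + (cos φ - 1) • P + sin φ • K)
      = 1 + (cos (θ+φ) - 1) • P + sin (θ+φ) • K
  rw [Real.cos_add, Real.sin_add]
  simp only [mul_add, add_mul, one_mul, mul_one, smul_mul_assoc, mul_smul_comm,
    hP, hK, hPK, hKP, smul_smul, smul_neg]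
  module

lemma sbm_transpose (a b : α) : (single a b (1:ℝ))ᵀ = single b a 1 := by
  ext p q
  simp [single, transpose_apply, Matrix.of_apply, and_comm]

lemma rotA_transpose (i j : α) (θ : ℝ) : (rotA i j θ)ᵀ = rotA i j (-θ) := by
  simp only [rotA, transpose_add, transpose_smul, transpose_one, transpose_sub,
    sbm_transpose, Real.cos_neg, Real.sin_neg]
  module

lemma rotA_zero (i j : α) : rotA i j 0 = 1 := by
  simp [rotA]

lemma rotA_orth (i j : α) (hij : i ≠ j) (θ : ℝ) : (rotA i j θ)ᵀ * rotA i j θ = 1 := by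
  rw [rotA_transpose, rotA_mul _ _ hij, neg_add_cancel, rotA_zero]

lemma rotA_apply (i j : α) (θ : ℝ) (p q : α) : rotA i j θ p q =
    (if p = q then 1 else 0) + ((if i = p ∧ i = q then Real.cos θ - 1 else 0)
      + if j = p ∧ j = q then Real.cos θ - 1 else 0)
      + Real.sin θ * ((if j = p ∧ i = q then 1 else 0) - if i = p ∧ j = q then 1 else 0) := by
  simp [rotA, Matrix.one_apply, Matrix.single, Matrix.of_apply]

lemma rotA_col_i {i j : α} (hij : i ≠ j) (θ : ℝ) (p : α) :
    rotA i j θ p i = if p = i then Real.cos θ else if p = j then Real.sin θ else 0 := by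
  rw [rotA_apply]
  by_cases h1 : i = p <;> by_cases h2 : j = p <;> simp_all [eq_comm] <;> ring

lemma rotA_col_j {i j : α} (hij : i ≠ j) (θ : ℝ) (p : α) :
    rotA i j θ p j = if p = i then -Real.sin θ else if p = j then Real.cos θ else 0 := by
  rw [rotA_apply]
  by_cases h1 : i = p <;> by_cases h2 : j = p <;> simp_all [eq_comm] <;> ring

lemma rotA_col_other {i j z : α} (hz1 : z ≠ i) (hz2 : z ≠ j) (θ : ℝ) (p : α) :
    rotA i j θ p z = if p = z then 1 else 0 := by
  have h1 : i ≠ z := hz1.symm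
  have h2 : j ≠ z := hz2.symm
  rw [rotA_apply]
  by_cases h : p = z <;> simp_all

lemma matConjEntry7 (G M : Matrix α α ℝ) (a b : α) :
    (Gᵀ * M * G) a b = ∑ p, G p a * (∑ q, G q b * M p q) := by
  rw [Matrix.mul_apply]
  simp only [Matrix.mul_apply, transpose_apply, Finset.sum_mul]
  rw [Finset.sum_comm]
  refine Finset.sum_congr rfl fun p _ => ?_
  rw [Finset.mul_sum]
  refine Finset.sum_congr rfl fun q _ => by ring

lemma mySumOne7 (z : α) (F : α → ℝ) : (∑ p, (if p = z then (1:ℝ) else 0) * F p) = F z := by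
  simp [ite_mul, Finset.sum_ite_eq']

lemma mySumTwo7 {i j : α} (hij : i ≠ j) (c s : ℝ) (F : α → ℝ) :
    (∑ p, (if p = i then c else if p = j then s else 0) * F p) = c * F i + s * F j := by
  have h : ∀ p, (if p = i then c else if p = j then s else 0) * F p
      = (if p = i then c * F p else 0) + (if p = j then s * F p else 0) := by
    intro p
    by_cases h1 : p = i <;> by_cases h2 : p = j <;> simp_all
  rw [Finset.sum_congr rfl fun p _ => h p, Finset.sum_add_distrib,
    Finset.sum_ite_eq', Finset.sum_ite_eq']
  simp

lemma matConjOther7 {i j z w : α} (hz1 : z ≠ i) (hz2 : z ≠ j) (hw1 : w ≠ i) (hw2 : w ≠ j)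
    (M : Matrix α α ℝ) (θ : ℝ) :
    ((rotA i j θ)ᵀ * M * rotA i j θ) z w = M z w := by
  rw [matConjEntry7]
  simp only [rotA_col_other hz1 hz2, rotA_col_other hw1 hw2, mySumOne7]

lemma matConjDiagI7 {i j : α} (hij : i ≠ j) (M : Matrix α α ℝ) (θ : ℝ) :
    ((rotA i j θ)ᵀ * M * rotA i j θ) i i
      = Real.cos θ ^ 2 * M i i + Real.cos θ * Real.sin θ * (M i j + M j i)
        + Real.sin θ ^ 2 * M j j := by
  rw [matConjEntry7]
  simp only [rotA_col_i hij, mySumTwo7 hij]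
  ring

lemma matConjDiagJ7 {i j : α} (hij : i ≠ j) (M : Matrix α α ℝ) (θ : ℝ) :
    ((rotA i j θ)ᵀ * M * rotA i j θ) j j
      = Real.sin θ ^ 2 * M i i - Real.cos θ * Real.sin θ * (M i j + M j i)
        + Real.cos θ ^ 2 * M j j := by
  rw [matConjEntry7]
  simp only [rotA_col_j hij, mySumTwo7 hij]
  ring

end RotAux

section Blocks

variable {n : ℕ}

lemma rotA_inl (i j : Fin n) (θ : ℝ) :
    rotA (Sum.inl i : Fin n ⊕ Fin n) (Sum.inl j) θ = fromBlocks (rotA i j θ) 0 0 1 := by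
  ext (a|a) (b|b) <;> simp [rotA_apply, fromBlocks, Matrix.one_apply]

lemma rotA_inr (i j : Fin n) (θ : ℝ) :
    rotA (Sum.inr i : Fin n ⊕ Fin n) (Sum.inr j) θ = fromBlocks 1 0 0 (rotA i j θ) := by
  ext (a|a) (b|b) <;> simp [rotA_apply, fromBlocks, Matrix.one_apply]

lemma rotA_mix (i : Fin n) (θ : ℝ) :
    rotA (Sum.inl i : Fin n ⊕ Fin n) (Sum.inr i) θ =
      fromBlocks (1 + (Real.cos θ - 1) • single i i 1) (-(Real.sin θ • single i i 1))
        (Real.sin θ • single i i 1) (1 + (Real.cos θ - 1) • single i i 1) := by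
  ext (a|a) (b|b) <;>
    simp [rotA_apply, fromBlocks, Matrix.one_apply, Matrix.single, Matrix.of_apply]

/-- the standard symplectic form -/
def Jn (n : ℕ) : Matrix (Fin n ⊕ Fin n) (Fin n ⊕ Fin n) ℝ := fromBlocks 0 1 (-1) 0

def IsSO (U : Matrix (Fin n ⊕ Fin n) (Fin n ⊕ Fin n) ℝ) : Prop :=
  Uᵀ * U = 1 ∧ U * Jn n = Jn n * U

lemma isSO_one : IsSO (1 : Matrix (Fin n ⊕ Fin n) (Fin n ⊕ Fin n) ℝ) := by
  constructor <;> simp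

lemma isSO_mul {U V : Matrix (Fin n ⊕ Fin n) (Fin n ⊕ Fin n) ℝ}
    (hU : IsSO U) (hV : IsSO V) : IsSO (U * V) := by
  refine ⟨?_, ?_⟩
  · rw [transpose_mul, mul_assoc, ← mul_assoc Uᵀ, hU.1, one_mul, hV.1]
  · rw [mul_assoc, hV.2, ← mul_assoc, hU.2, mul_assoc]

lemma isSO_symplectic {U : Matrix (Fin n ⊕ Fin n) (Fin n ⊕ Fin n) ℝ} (h : IsSO U) :
    Uᵀ * Jn n * U = Jn n := by
  rw [mul_assoc, ← h.2, ← mul_assoc, h.1, one_mul]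

lemma isSO_G1 (i j : Fin n) (hij : i ≠ j) (θ : ℝ) :
    IsSO (rotA (Sum.inl i) (Sum.inl j) θ * rotA (Sum.inr i) (Sum.inr j) θ) := by
  have h1 : (Sum.inl i : Fin n ⊕ Fin n) ≠ Sum.inl j := by simp [hij]
  have h2 : (Sum.inr i : Fin n ⊕ Fin n) ≠ Sum.inr j := by simp [hij]
  constructor
  · rw [transpose_mul, mul_assoc, ← mul_assoc (rotA (Sum.inl i) (Sum.inl j) θ)ᵀ,
      rotA_orth _ _ h1, one_mul, rotA_orth _ _ h2]
  · rw [rotA_inl, rotA_inr, Jn]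
    simp [fromBlocks_multiply, Matrix.mul_assoc]

lemma isSO_G2 (i : Fin n) (θ : ℝ) : IsSO (rotA (Sum.inl i) (Sum.inr i) θ) := by
  have h1 : (Sum.inl i : Fin n ⊕ Fin n) ≠ Sum.inr i := by simp
  constructor
  · exact rotA_orth _ _ h1 θ
  · rw [rotA_mix, Jn]
    simp [fromBlocks_multiply]

end Blocks

section IVT

lemma ivt_combo (a b c t : ℝ) (ht : t ∈ Set.Icc b a) :
    ∃ θ, Real.cos θ ^ 2 * a + Real.cos θ * Real.sin θ * c + Real.sin θ ^ 2 * b = t := by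
  set f : ℝ → ℝ := fun θ => Real.cos θ ^ 2 * a + Real.cos θ * Real.sin θ * c + Real.sin θ ^ 2 * b
    with hf
  have cont : Continuous f := by fun_prop
  have h0 : f 0 = a := by simp [hf]
  have h1 : f (Real.pi/2) = b := by simp [hf]
  have key := intermediate_value_Icc' (a := 0) (b := Real.pi/2)
    (le_of_lt Real.pi_div_two_pos) cont.continuousOn
  rw [h0, h1] at key
  obtain ⟨θ, _, hθ⟩ := key ht
  exact ⟨θ, hθ⟩

lemma ivt_combo2 (a b c : ℝ) :
    ∃ θ, Real.cos θ ^ 2 * a + Real.cos θ * Real.sin θ * c + Real.sin θ ^ 2 * b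
      = Real.sin θ ^ 2 * a - Real.cos θ * Real.sin θ * c + Real.cos θ ^ 2 * b := by
  set f : ℝ → ℝ := fun θ => (Real.cos θ ^ 2 - Real.sin θ ^ 2) * (a - b)
    + 2 * Real.cos θ * Real.sin θ * c with hf
  have cont : Continuous f := by fun_prop
  have h0 : f 0 = a - b := by simp [hf]
  have h1 : f (Real.pi/2) = b - a := by simp [hf]
  have hex : ∃ θ, f θ = 0 := by
    rcases le_total (a - b) 0 with h | h
    · have key := intermediate_value_Icc (a := 0) (b := Real.pi/2)
        (le_of_lt Real.pi_div_two_pos) cont.continuousOn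
      rw [h0, h1] at key
      obtain ⟨θ, _, hθ⟩ := key ⟨h, by linarith⟩
      exact ⟨θ, hθ⟩
    · have key := intermediate_value_Icc' (a := 0) (b := Real.pi/2)
        (le_of_lt Real.pi_div_two_pos) cont.continuousOn
      rw [h0, h1] at key
      obtain ⟨θ, _, hθ⟩ := key ⟨by linarith, h⟩
      exact ⟨θ, hθ⟩
  obtain ⟨θ, hθ⟩ := hex
  refine ⟨θ, ?_⟩
  have : (Real.cos θ ^ 2 - Real.sin θ ^ 2) * (a - b) + 2 * Real.cos θ * Real.sin θ * c = 0 := hθ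
  nlinarith [this]

end IVT

section Main

variable {n : ℕ}

/-- pair sum of diagonal entries -/
noncomputable def psum7 (M : Matrix (Fin n ⊕ Fin n) (Fin n ⊕ Fin n) ℝ) (i : Fin n) : ℝ :=
  M (Sum.inl i) (Sum.inl i) + M (Sum.inr i) (Sum.inr i)

lemma matConjMul7 (M a b : Matrix (Fin n ⊕ Fin n) (Fin n ⊕ Fin n) ℝ) :
    (a*b)ᵀ * M * (a*b) = bᵀ * (aᵀ * M * a) * b := by
  rw [transpose_mul]; simp only [Matrix.mul_assoc]

lemma matConjConj7 (A U G : Matrix (Fin n ⊕ Fin n) (Fin n ⊕ Fin n) ℝ) :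
    (U * G)ᵀ * A * (U * G) = Gᵀ * (Uᵀ * A * U) * G := by
  rw [transpose_mul]; simp only [Matrix.mul_assoc]

lemma phase1_step (M : Matrix (Fin n ⊕ Fin n) (Fin n ⊕ Fin n) ℝ) {i j : Fin n} (hij : i ≠ j)
    {t : ℝ} (ht : t ∈ Set.Icc (psum7 M j) (psum7 M i)) :
    ∃ G, IsSO G ∧ psum7 (Gᵀ * M * G) i = t ∧ ∀ l, l ≠ i → l ≠ j →
      (Gᵀ*M*G) (Sum.inl l) (Sum.inl l) = M (Sum.inl l) (Sum.inl l) ∧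
      (Gᵀ*M*G) (Sum.inr l) (Sum.inr l) = M (Sum.inr l) (Sum.inr l) := by
  have hne1 : (Sum.inl i : Fin n ⊕ Fin n) ≠ Sum.inl j := by simp [hij]
  have hne2 : (Sum.inr i : Fin n ⊕ Fin n) ≠ Sum.inr j := by simp [hij]
  obtain ⟨θ, hθ⟩ := ivt_combo (psum7 M i) (psum7 M j)
    (M (Sum.inl i) (Sum.inl j) + M (Sum.inl j) (Sum.inl i)
      + M (Sum.inr i) (Sum.inr j) + M (Sum.inr j) (Sum.inr i)) t ht
  set a : Matrix (Fin n ⊕ Fin n) (Fin n ⊕ Fin n) ℝ := rotA (Sum.inl i) (Sum.inl j) θ with ha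
  set b : Matrix (Fin n ⊕ Fin n) (Fin n ⊕ Fin n) ℝ := rotA (Sum.inr i) (Sum.inr j) θ with hb
  refine ⟨a * b, isSO_G1 i j hij θ, ?_, ?_⟩
  · have e1 : ((a*b)ᵀ * M * (a*b)) (Sum.inl i) (Sum.inl i)
        = Real.cos θ ^ 2 * M (Sum.inl i) (Sum.inl i)
          + Real.cos θ * Real.sin θ * (M (Sum.inl i) (Sum.inl j) + M (Sum.inl j) (Sum.inl i))
          + Real.sin θ ^ 2 * M (Sum.inl j) (Sum.inl j) := by
      rw [matConjMul7, hb, matConjOther7 (by simp) (by simp) (by simp) (by simp), ha,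
        matConjDiagI7 hne1]
    have e2 : ((a*b)ᵀ * M * (a*b)) (Sum.inr i) (Sum.inr i)
        = Real.cos θ ^ 2 * M (Sum.inr i) (Sum.inr i)
          + Real.cos θ * Real.sin θ * (M (Sum.inr i) (Sum.inr j) + M (Sum.inr j) (Sum.inr i))
          + Real.sin θ ^ 2 * M (Sum.inr j) (Sum.inr j) := by
      rw [matConjMul7, hb, matConjDiagI7 hne2, ha,
        matConjOther7 (by simp) (by simp) (by simp) (by simp),
        matConjOther7 (by simp) (by simp) (by simp) (by simp),
        matConjOther7 (by simp) (by simp) (by simp) (by simp),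
        matConjOther7 (by simp) (by simp) (by simp) (by simp)]
    rw [psum7, e1, e2]
    rw [psum7, psum7] at hθ
    linear_combination hθ
  · intro l hl1 hl2
    have g1 : (Sum.inl l : Fin n ⊕ Fin n) ≠ Sum.inl i := by simp [hl1]
    have g2 : (Sum.inl l : Fin n ⊕ Fin n) ≠ Sum.inl j := by simp [hl2]
    have g3 : (Sum.inr l : Fin n ⊕ Fin n) ≠ Sum.inr i := by simp [hl1]
    have g4 : (Sum.inr l : Fin n ⊕ Fin n) ≠ Sum.inr j := by simp [hl2]
    constructor
    · rw [matConjMul7, hb, matConjOther7 (by simp) (by simp) (by simp) (by simp), ha,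
        matConjOther7 g1 g2 g1 g2]
    · rw [matConjMul7, hb, matConjOther7 g3 g4 g3 g4, ha,
        matConjOther7 (by simp) (by simp) (by simp) (by simp)]

lemma phase2_step (M : Matrix (Fin n ⊕ Fin n) (Fin n ⊕ Fin n) ℝ) (i : Fin n) :
    ∃ G, IsSO G ∧
      (Gᵀ*M*G) (Sum.inl i) (Sum.inl i) = (Gᵀ*M*G) (Sum.inr i) (Sum.inr i) ∧
      psum7 (Gᵀ*M*G) i = psum7 M i ∧ ∀ l, l ≠ i →
      (Gᵀ*M*G) (Sum.inl l) (Sum.inl l) = M (Sum.inl l) (Sum.inl l) ∧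
      (Gᵀ*M*G) (Sum.inr l) (Sum.inr l) = M (Sum.inr l) (Sum.inr l) := by
  have hne : (Sum.inl i : Fin n ⊕ Fin n) ≠ Sum.inr i := by simp
  obtain ⟨θ, hθ⟩ := ivt_combo2 (M (Sum.inl i) (Sum.inl i)) (M (Sum.inr i) (Sum.inr i))
    (M (Sum.inl i) (Sum.inr i) + M (Sum.inr i) (Sum.inl i))
  refine ⟨rotA (Sum.inl i) (Sum.inr i) θ, isSO_G2 i θ, ?_, ?_, ?_⟩
  · rw [matConjDiagI7 hne, matConjDiagJ7 hne]
    exact hθ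
  · rw [psum7, psum7, matConjDiagI7 hne, matConjDiagJ7 hne]
    linear_combination (M (Sum.inl i) (Sum.inl i) + M (Sum.inr i) (Sum.inr i)) * Real.sin_sq_add_cos_sq θ
  · intro l hl
    have g1 : (Sum.inl l : Fin n ⊕ Fin n) ≠ Sum.inl i := by simp [hl]
    have g2 : (Sum.inl l : Fin n ⊕ Fin n) ≠ Sum.inr i := by simp
    have g3 : (Sum.inr l : Fin n ⊕ Fin n) ≠ Sum.inl i := by simp
    have g4 : (Sum.inr l : Fin n ⊕ Fin n) ≠ Sum.inr i := by simp [hl]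
    exact ⟨by rw [matConjOther7 g1 g2 g1 g2], by rw [matConjOther7 g3 g4 g3 g4]⟩

lemma traceConj7 {U : Matrix (Fin n ⊕ Fin n) (Fin n ⊕ Fin n) ℝ}
    (A : Matrix (Fin n ⊕ Fin n) (Fin n ⊕ Fin n) ℝ) (hU : Uᵀ * U = 1) :
    (Uᵀ * A * U).trace = A.trace := by
  rw [Matrix.trace_mul_cycle]
  rw [mul_eq_one_comm.mp hU, one_mul]

lemma sumPsum7 (M : Matrix (Fin n ⊕ Fin n) (Fin n ⊕ Fin n) ℝ) :
    ∑ i, psum7 M i = M.trace := by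
  rw [Matrix.trace]
  simp [psum7, Matrix.diag, Fintype.sum_sum_type, Finset.sum_add_distrib]

end Main

section Induction

variable {n : ℕ}

lemma phase1 (hn : 1 ≤ n) (A : Matrix (Fin n ⊕ Fin n) (Fin n ⊕ Fin n) ℝ) :
    ∃ U, IsSO U ∧ ∀ i, psum7 (Uᵀ * A * U) i = A.trace / n := by
  set t := A.trace / n with htdef
  have claim : ∀ m : ℕ, ∃ (U : Matrix (Fin n ⊕ Fin n) (Fin n ⊕ Fin n) ℝ) (S : Finset (Fin n)), IsSO U ∧ min m n ≤ S.card ∧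
      ∀ l ∈ S, psum7 (Uᵀ * A * U) l = t := by
    intro m
    induction m with
    | zero => exact ⟨1, ∅, isSO_one, by simp, by simp⟩
    | succ m ih =>
      obtain ⟨U, S, hU, hcard, hS⟩ := ih
      by_cases hle : n ≤ S.card
      · exact ⟨U, S, hU, le_trans (min_le_right _ _) hle, hS⟩
      push_neg at hle
      set M := Uᵀ * A * U with hM
      have htr : ∑ l, psum7 M l = (n : ℝ) * t := by
        rw [sumPsum7, hM, traceConj7 A hU.1, htdef]
        field_simp
      have hSsub : S ⊆ Finset.univ := Finset.subset_univ S
      have hsplit : ∑ l ∈ Finset.univ \ S, psum7 M l + ∑ l ∈ S, psum7 M l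
          = ∑ l, psum7 M l := Finset.sum_sdiff hSsub
      have hSsum : ∑ l ∈ S, psum7 M l = S.card * t := by
        rw [Finset.sum_congr rfl hS, Finset.sum_const, nsmul_eq_mul]
      have hcompcard : (Finset.univ \ S).card = n - S.card := by
        rw [Finset.card_sdiff_of_subset hSsub, Finset.card_univ, Fintype.card_fin]
      have hcompsum : ∑ l ∈ Finset.univ \ S, psum7 M l = ((Finset.univ \ S).card : ℝ) * t := by
        have h1 : ∑ l ∈ Finset.univ \ S, psum7 M l = (n : ℝ) * t - S.card * t := by
          rw [← hSsum]
          linarith [hsplit, htr]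
        rw [h1, hcompcard, Nat.cast_sub hle.le]
        ring
      have hne : (Finset.univ \ S).Nonempty := by
        rw [← Finset.card_pos, hcompcard]
        omega
      have hexI : ∃ i ∈ Finset.univ \ S, t ≤ psum7 M i := by
        by_contra hc
        push_neg at hc
        have h2 := Finset.sum_lt_sum_of_nonempty hne hc
        rw [Finset.sum_const, nsmul_eq_mul, hcompsum] at h2
        exact lt_irrefl _ h2
      have hexJ : ∃ j ∈ Finset.univ \ S, psum7 M j ≤ t := by
        by_contra hc
        push_neg at hc
        have h2 := Finset.sum_lt_sum_of_nonempty hne hc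
        rw [Finset.sum_const, nsmul_eq_mul, hcompsum] at h2
        exact lt_irrefl _ h2
      obtain ⟨i, hiS, hi⟩ := hexI
      obtain ⟨j, hjS, hj⟩ := hexJ
      have hiNotS : i ∉ S := (Finset.mem_sdiff.mp hiS).2
      have hjNotS : j ∉ S := (Finset.mem_sdiff.mp hjS).2
      by_cases hit : psum7 M i = t
      · refine ⟨U, insert i S, hU, ?_, ?_⟩
        · rw [Finset.card_insert_of_notMem hiNotS]
          omega
        · intro l hl
          rcases Finset.mem_insert.mp hl with rfl | hlS
          · exact hit
          · exact hS l hlS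
      by_cases hjt : psum7 M j = t
      · refine ⟨U, insert j S, hU, ?_, ?_⟩
        · rw [Finset.card_insert_of_notMem hjNotS]
          omega
        · intro l hl
          rcases Finset.mem_insert.mp hl with rfl | hlS
          · exact hjt
          · exact hS l hlS
      have hij : i ≠ j := by
        rintro rfl
        exact hit (le_antisymm hj hi)
      obtain ⟨G, hG, hGt, hGpres⟩ := phase1_step M hij ⟨hj, hi⟩
      refine ⟨U * G, insert i S, isSO_mul hU hG, ?_, ?_⟩
      · rw [Finset.card_insert_of_notMem hiNotS]
        omega
      · intro l hl
        rw [matConjConj7, ← hM]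
        rcases Finset.mem_insert.mp hl with rfl | hlS
        · exact hGt
        · have hli : l ≠ i := fun h => hiNotS (h ▸ hlS)
          have hlj : l ≠ j := fun h => hjNotS (h ▸ hlS)
          obtain ⟨e1, e2⟩ := hGpres l hli hlj
          rw [psum7, e1, e2, ← psum7]
          exact hS l hlS
  obtain ⟨U, S, hU, hcard, hS⟩ := claim n
  have hSuniv : S = Finset.univ := by
    apply Finset.eq_univ_of_card
    have h1 : S.card ≤ Fintype.card (Fin n) := Finset.card_le_univ S
    rw [Fintype.card_fin] at h1 ⊢
    omega
  exact ⟨U, hU, fun i => hS i (hSuniv ▸ Finset.mem_univ i)⟩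

lemma phase2 (hn : 1 ≤ n) (A : Matrix (Fin n ⊕ Fin n) (Fin n ⊕ Fin n) ℝ) :
    ∃ U, IsSO U ∧ (∀ i, psum7 (Uᵀ * A * U) i = A.trace / n) ∧
      ∀ i, (Uᵀ * A * U) (Sum.inl i) (Sum.inl i) = (Uᵀ * A * U) (Sum.inr i) (Sum.inr i) := by
  set t := A.trace / n with htdef
  have claim : ∀ m : ℕ, ∃ (U : Matrix (Fin n ⊕ Fin n) (Fin n ⊕ Fin n) ℝ) (S : Finset (Fin n)), IsSO U ∧ (∀ i, psum7 (Uᵀ * A * U) i = t) ∧ min m n ≤ S.card ∧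
      ∀ l ∈ S, (Uᵀ * A * U) (Sum.inl l) (Sum.inl l) = (Uᵀ * A * U) (Sum.inr l) (Sum.inr l) := by
    intro m
    induction m with
    | zero =>
      obtain ⟨U, hU, hps⟩ := phase1 hn A
      exact ⟨U, ∅, hU, hps, by simp, by simp⟩
    | succ m ih =>
      obtain ⟨U, S, hU, hps, hcard, hS⟩ := ih
      by_cases hle : n ≤ S.card
      · exact ⟨U, S, hU, hps, le_trans (min_le_right _ _) hle, hS⟩
      push_neg at hle
      have hne : (Finset.univ \ S).Nonempty := by
        rw [← Finset.card_pos, Finset.card_sdiff_of_subset (Finset.subset_univ S),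
          Finset.card_univ, Fintype.card_fin]
        omega
      obtain ⟨i, hiS⟩ := hne
      have hiNotS : i ∉ S := (Finset.mem_sdiff.mp hiS).2
      set M := Uᵀ * A * U with hM
      obtain ⟨G, hG, hGeq, hGps, hGpres⟩ := phase2_step M i
      refine ⟨U * G, insert i S, isSO_mul hU hG, ?_, ?_, ?_⟩
      · intro l
        rw [matConjConj7, ← hM]
        by_cases hli : l = i
        · subst hli
          rw [hGps]
          exact hps l
        · obtain ⟨e1, e2⟩ := hGpres l hli
          rw [psum7, e1, e2, ← psum7]
          exact hps l
      · rw [Finset.card_insert_of_notMem hiNotS]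
        omega
      · intro l hl
        rw [matConjConj7, ← hM]
        rcases Finset.mem_insert.mp hl with rfl | hlS
        · exact hGeq
        · have hli : l ≠ i := fun h => hiNotS (h ▸ hlS)
          obtain ⟨e1, e2⟩ := hGpres l hli
          rw [e1, e2]
          exact hS l hlS
  obtain ⟨U, S, hU, hps, hcard, hS⟩ := claim n
  have hSuniv : S = Finset.univ := by
    apply Finset.eq_univ_of_card
    have h1 : S.card ≤ Fintype.card (Fin n) := Finset.card_le_univ S
    rw [Fintype.card_fin] at h1 ⊢
    omega
  exact ⟨U, hU, hps, fun i => hS i (hSuniv ▸ Finset.mem_univ i)⟩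

end Induction

theorem stmt_7 (n : ℕ) (hn : 1 ≤ n)
    (A : Matrix (Fin n ⊕ Fin n) (Fin n ⊕ Fin n) ℝ) :
    ∃ U : Matrix (Fin n ⊕ Fin n) (Fin n ⊕ Fin n) ℝ,
      Uᵀ * U = 1 ∧
      Uᵀ * (Matrix.fromBlocks 0 1 (-1) 0) * U = Matrix.fromBlocks 0 1 (-1) 0 ∧
      ∀ i j, (Uᵀ * A * U) i i = (Uᵀ * A * U) j j := by
  obtain ⟨U, hU, hps, heq⟩ := phase2 hn A
  refine ⟨U, hU.1, isSO_symplectic hU, ?_⟩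
  have key : ∀ x, (Uᵀ * A * U) x x = A.trace / n / 2 := by
    intro x
    rcases x with l | l
    · have h1 := hps l
      have h2 := heq l
      rw [psum7] at h1
      linarith
    · have h1 := hps l
      have h2 := heq l
      rw [psum7] at h1
      linarith
  intro x y
  rw [key x, key y]
end

section
/- Let A ∈ ℝ^{2n×2n} with tr A = 0. Then there exists a symplectic orthogonal matrix U ∈ ℝ^{2n×2n} such that UᵀAU is hollow. -/
open Matrix Real

variable {n : ℕ}

/-- Givens rotation in the (i,j) plane. -/
noncomputable def giv (i j : Fin n) (θ : ℝ) : Matrix (Fin n) (Fin n) ℝ :=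
  Matrix.of fun a b =>
    if a = i then (if b = i then Real.cos θ else if b = j then -Real.sin θ else 0)
    else if a = j then (if b = i then Real.sin θ else if b = j then Real.cos θ else 0)
    else if a = b then 1 else 0

lemma giv_col_i {i j : Fin n} (hij : i ≠ j) (θ : ℝ) (a : Fin n) :
    giv i j θ a i = Real.cos θ * (if i = a then 1 else 0) + Real.sin θ * (if j = a then 1 else 0) := by
  by_cases hai : a = i
  · subst hai; simp [giv, hij.symm, hij]
  · by_cases haj : a = j
    · subst haj; simp [giv, hij.symm, Ne.symm hai]
    · simp [giv, hai, haj, Ne.symm hai, Ne.symm haj]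

lemma giv_col_j {i j : Fin n} (hij : i ≠ j) (θ : ℝ) (a : Fin n) :
    giv i j θ a j = (-Real.sin θ) * (if i = a then 1 else 0) + Real.cos θ * (if j = a then 1 else 0) := by
  by_cases hai : a = i
  · subst hai; simp [giv, hij.symm, hij]
  · by_cases haj : a = j
    · subst haj; simp [giv, hij.symm, Ne.symm hai]
    · simp [giv, hai, haj, Ne.symm hai, Ne.symm haj]

lemma giv_col_other {i j k : Fin n} (hik : k ≠ i) (hjk : k ≠ j) (θ : ℝ) (a : Fin n) :
    giv i j θ a k = if k = a then 1 else 0 := by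
  by_cases hai : a = i
  · subst hai; simp [giv, hik, Ne.symm hik, hjk, Ne.symm hjk]
  · by_cases haj : a = j
    · subst haj; simp [giv, hjk, Ne.symm hjk, hai, hik, Ne.symm hik]
    · by_cases hak : a = k
      · subst hak; simp [giv, hai, haj]
      · simp [giv, hai, haj, hak, Ne.symm hak]

lemma mul_giv_i {i j : Fin n} (hij : i ≠ j) (θ : ℝ) (M : Matrix (Fin n) (Fin n) ℝ) (p : Fin n) :
    (M * giv i j θ) p i = Real.cos θ * M p i + Real.sin θ * M p j := by
  simp only [Matrix.mul_apply, giv_col_i hij θ]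
  simp [mul_add, Finset.sum_add_distrib, mul_ite, mul_comm, Finset.mul_sum]

lemma mul_giv_j {i j : Fin n} (hij : i ≠ j) (θ : ℝ) (M : Matrix (Fin n) (Fin n) ℝ) (p : Fin n) :
    (M * giv i j θ) p j = (-Real.sin θ) * M p i + Real.cos θ * M p j := by
  simp only [Matrix.mul_apply, giv_col_j hij θ]
  simp [mul_add, Finset.sum_add_distrib, mul_ite, mul_comm, Finset.mul_sum]

lemma mul_giv_other {i j k : Fin n} (hik : k ≠ i) (hjk : k ≠ j) (θ : ℝ) (M : Matrix (Fin n) (Fin n) ℝ) (p : Fin n) :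
    (M * giv i j θ) p k = M p k := by
  simp only [Matrix.mul_apply, giv_col_other hik hjk θ]
  simp [mul_ite]

lemma givT_mul_i {i j : Fin n} (hij : i ≠ j) (θ : ℝ) (M : Matrix (Fin n) (Fin n) ℝ) (p : Fin n) :
    ((giv i j θ)ᵀ * M) i p = Real.cos θ * M i p + Real.sin θ * M j p := by
  have := mul_giv_i hij θ Mᵀ p
  simp only [Matrix.mul_apply, Matrix.transpose_apply] at this ⊢
  simpa [mul_comm] using this

lemma givT_mul_j {i j : Fin n} (hij : i ≠ j) (θ : ℝ) (M : Matrix (Fin n) (Fin n) ℝ) (p : Fin n) :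
    ((giv i j θ)ᵀ * M) j p = (-Real.sin θ) * M i p + Real.cos θ * M j p := by
  have := mul_giv_j hij θ Mᵀ p
  simp only [Matrix.mul_apply, Matrix.transpose_apply] at this ⊢
  simpa [mul_comm] using this

lemma givT_mul_other {i j k : Fin n} (hik : k ≠ i) (hjk : k ≠ j) (θ : ℝ) (M : Matrix (Fin n) (Fin n) ℝ) (p : Fin n) :
    ((giv i j θ)ᵀ * M) k p = M k p := by
  have := mul_giv_other hik hjk θ Mᵀ p
  simp only [Matrix.mul_apply, Matrix.transpose_apply] at this ⊢
  simpa [mul_comm] using this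

lemma giv_row_i {i j : Fin n} (θ : ℝ) (b : Fin n) :
    giv i j θ i b = if b = i then Real.cos θ else if b = j then -Real.sin θ else 0 := by
  simp [giv]

lemma giv_row_j {i j : Fin n} (hij : i ≠ j) (θ : ℝ) (b : Fin n) :
    giv i j θ j b = if b = i then Real.sin θ else if b = j then Real.cos θ else 0 := by
  simp [giv, hij.symm]

lemma giv_orth {i j : Fin n} (hij : i ≠ j) (θ : ℝ) :
    (giv i j θ)ᵀ * giv i j θ = 1 := by
  ext a b
  by_cases hai : a = i
  · subst hai
    rw [givT_mul_i hij, giv_row_i, giv_row_j hij, Matrix.one_apply]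
    split_ifs <;> subst_vars <;> first
      | nlinarith [sin_sq_add_cos_sq θ]
      | simp_all
  · by_cases haj : a = j
    · subst haj
      rw [givT_mul_j hij, giv_row_i, giv_row_j hij, Matrix.one_apply]
      split_ifs <;> subst_vars <;> first
        | nlinarith [sin_sq_add_cos_sq θ]
        | simp_all
    · rw [givT_mul_other hai haj]
      by_cases hbi : b = i
      · subst hbi; rw [giv_col_i hij, Matrix.one_apply]
        simp [Ne.symm hai, Ne.symm haj, hai]
      · by_cases hbj : b = j
        · subst hbj; rw [giv_col_j hij, Matrix.one_apply]
          simp [Ne.symm hai, Ne.symm haj, haj]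
        · rw [giv_col_other hbi hbj, Matrix.one_apply]
          simp [eq_comm]

/-- diagonal entry (i,i) of the conjugated matrix -/
lemma giv_conj_ii {i j : Fin n} (hij : i ≠ j) (θ : ℝ) (B : Matrix (Fin n) (Fin n) ℝ) :
    ((giv i j θ)ᵀ * B * giv i j θ) i i =
      Real.cos θ ^ 2 * B i i + Real.sin θ ^ 2 * B j j
        + Real.cos θ * Real.sin θ * (B i j + B j i) := by
  rw [mul_giv_i hij, givT_mul_i hij, givT_mul_i hij]
  ring

lemma giv_conj_jj {i j : Fin n} (hij : i ≠ j) (θ : ℝ) (B : Matrix (Fin n) (Fin n) ℝ) :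
    ((giv i j θ)ᵀ * B * giv i j θ) j j =
      Real.sin θ ^ 2 * B i i + Real.cos θ ^ 2 * B j j
        - Real.cos θ * Real.sin θ * (B i j + B j i) := by
  rw [mul_giv_j hij, givT_mul_j hij, givT_mul_j hij]
  ring

lemma giv_conj_kk {i j k : Fin n} (hik : k ≠ i) (hjk : k ≠ j) (θ : ℝ) (B : Matrix (Fin n) (Fin n) ℝ) :
    ((giv i j θ)ᵀ * B * giv i j θ) k k = B k k := by
  rw [mul_giv_other hik hjk, givT_mul_other hik hjk]

section Blocks

variable {n : ℕ}

local notation "Jmat" => (Matrix.fromBlocks 0 1 (-1) 0 : Matrix (Fin n ⊕ Fin n) (Fin n ⊕ Fin n) ℝ)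

def symporth (U : Matrix (Fin n ⊕ Fin n) (Fin n ⊕ Fin n) ℝ) : Prop :=
  Uᵀ * U = 1 ∧ Uᵀ * Jmat * U = Jmat

lemma symporth_one : symporth (1 : Matrix (Fin n ⊕ Fin n) (Fin n ⊕ Fin n) ℝ) := by
  constructor <;> simp [symporth]

lemma symporth_mul {U V : Matrix (Fin n ⊕ Fin n) (Fin n ⊕ Fin n) ℝ}
    (hU : symporth U) (hV : symporth V) : symporth (U * V) := by
  obtain ⟨hU1, hU2⟩ := hU
  obtain ⟨hV1, hV2⟩ := hV
  constructor
  · rw [Matrix.transpose_mul]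
    calc Vᵀ * Uᵀ * (U * V) = Vᵀ * (Uᵀ * U) * V := by noncomm_ring
    _ = 1 := by rw [hU1]; simp [hV1]
  · rw [Matrix.transpose_mul]
    calc Vᵀ * Uᵀ * Jmat * (U * V) = Vᵀ * (Uᵀ * Jmat * U) * V := by noncomm_ring
    _ = Jmat := by rw [hU2, hV2]

lemma conj_conj (U V A : Matrix (Fin n ⊕ Fin n) (Fin n ⊕ Fin n) ℝ) :
    (U * V)ᵀ * A * (U * V) = Vᵀ * (Uᵀ * A * U) * V := by
  rw [Matrix.transpose_mul]; noncomm_ring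

/-- the paired diagonal sums -/
def sdiag (A : Matrix (Fin n ⊕ Fin n) (Fin n ⊕ Fin n) ℝ) (i : Fin n) : ℝ :=
  A (Sum.inl i) (Sum.inl i) + A (Sum.inr i) (Sum.inr i)

lemma trace_eq_sum_sdiag (A : Matrix (Fin n ⊕ Fin n) (Fin n ⊕ Fin n) ℝ) :
    A.trace = ∑ i, sdiag A i := by
  show ∑ x : Fin n ⊕ Fin n, A x x = _
  rw [Fintype.sum_sum_type, ← Finset.sum_add_distrib]
  rfl

/-- doubled Givens rotation is symplectic orthogonal -/
lemma symporth_dgiv {i j : Fin n} (hij : i ≠ j) (θ : ℝ) :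
    symporth (Matrix.fromBlocks (giv i j θ) 0 0 (giv i j θ)) := by
  have h := giv_orth hij θ
  constructor
  · simp [Matrix.fromBlocks_transpose, Matrix.fromBlocks_multiply, h,
      ← Matrix.fromBlocks_one]
  · simp [Matrix.fromBlocks_transpose, Matrix.fromBlocks_multiply, h]

/-- conjugation by a doubled Givens rotation: blocks -/
lemma dgiv_conj (i j : Fin n) (θ : ℝ) (A : Matrix (Fin n ⊕ Fin n) (Fin n ⊕ Fin n) ℝ) :
    (Matrix.fromBlocks (giv i j θ) 0 0 (giv i j θ))ᵀ * A *
      (Matrix.fromBlocks (giv i j θ) 0 0 (giv i j θ)) =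
    Matrix.fromBlocks ((giv i j θ)ᵀ * A.toBlocks₁₁ * giv i j θ)
      ((giv i j θ)ᵀ * A.toBlocks₁₂ * giv i j θ)
      ((giv i j θ)ᵀ * A.toBlocks₂₁ * giv i j θ)
      ((giv i j θ)ᵀ * A.toBlocks₂₂ * giv i j θ) := by
  conv_lhs => rw [← Matrix.fromBlocks_toBlocks A]
  simp [Matrix.fromBlocks_transpose, Matrix.fromBlocks_multiply]

lemma sdiag_dgiv_i {i j : Fin n} (hij : i ≠ j) (θ : ℝ)
    (A : Matrix (Fin n ⊕ Fin n) (Fin n ⊕ Fin n) ℝ) :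
    sdiag ((Matrix.fromBlocks (giv i j θ) 0 0 (giv i j θ))ᵀ * A *
      (Matrix.fromBlocks (giv i j θ) 0 0 (giv i j θ))) i =
    Real.cos θ ^ 2 * sdiag A i + Real.sin θ ^ 2 * sdiag A j
      + Real.cos θ * Real.sin θ *
        (A.toBlocks₁₁ i j + A.toBlocks₁₁ j i + A.toBlocks₂₂ i j + A.toBlocks₂₂ j i) := by
  rw [dgiv_conj]
  simp only [sdiag, Matrix.fromBlocks_apply₁₁, Matrix.fromBlocks_apply₂₂]
  rw [giv_conj_ii hij, giv_conj_ii hij]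
  simp only [sdiag, Matrix.toBlocks₁₁, Matrix.toBlocks₂₂, Matrix.of_apply]
  ring

lemma sdiag_dgiv_other {i j k : Fin n} (hik : k ≠ i) (hjk : k ≠ j) (θ : ℝ)
    (A : Matrix (Fin n ⊕ Fin n) (Fin n ⊕ Fin n) ℝ) :
    sdiag ((Matrix.fromBlocks (giv i j θ) 0 0 (giv i j θ))ᵀ * A *
      (Matrix.fromBlocks (giv i j θ) 0 0 (giv i j θ))) k = sdiag A k := by
  rw [dgiv_conj]
  simp only [sdiag, Matrix.fromBlocks_apply₁₁, Matrix.fromBlocks_apply₂₂]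
  rw [giv_conj_kk hik hjk, giv_conj_kk hik hjk]
  rfl

lemma trace_conj {U A : Matrix (Fin n ⊕ Fin n) (Fin n ⊕ Fin n) ℝ}
    (hU : Uᵀ * U = 1) : (Uᵀ * A * U).trace = A.trace := by
  rw [Matrix.trace_mul_comm, ← Matrix.mul_assoc, mul_eq_one_comm.mp hU]
  simp

end Blocks

section PhaseA
variable {n : ℕ}

lemma exists_pos_neg {A : Matrix (Fin n ⊕ Fin n) (Fin n ⊕ Fin n) ℝ}
    (hA : A.trace = 0) (i₀ : Fin n) (h₀ : sdiag A i₀ ≠ 0) :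
    ∃ p q, 0 < sdiag A p ∧ sdiag A q < 0 := by
  have hsum : ∑ i, sdiag A i = 0 := by rw [← trace_eq_sum_sdiag, hA]
  have hpos : ∃ p, 0 < sdiag A p := by
    by_contra h
    push_neg at h
    have := (Finset.sum_eq_zero_iff_of_nonneg (fun i _ => by
      have := h i; linarith [neg_nonneg.mpr (h i)] : ∀ i ∈ Finset.univ, (0:ℝ) ≤ -sdiag A i)).mp
      (by simp [hsum]) i₀ (Finset.mem_univ i₀)
    exact h₀ (by linarith)
  have hneg : ∃ q, sdiag A q < 0 := by
    by_contra h
    push_neg at h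
    have := (Finset.sum_eq_zero_iff_of_nonneg (fun i _ => h i)).mp hsum i₀ (Finset.mem_univ i₀)
    exact h₀ this
  obtain ⟨p, hp⟩ := hpos
  obtain ⟨q, hq⟩ := hneg
  exact ⟨p, q, hp, hq⟩

lemma phaseA (k : ℕ) : ∀ (A : Matrix (Fin n ⊕ Fin n) (Fin n ⊕ Fin n) ℝ), A.trace = 0 →
    (Finset.univ.filter fun i => sdiag A i ≠ 0).card ≤ k →
    ∃ U, symporth U ∧ ∀ i, sdiag (Uᵀ * A * U) i = 0 := by
  induction k with
  | zero =>
    intro A hA hcard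
    refine ⟨1, symporth_one, fun i => ?_⟩
    have hempty : (Finset.univ.filter fun i => sdiag A i ≠ 0) = ∅ :=
      Finset.card_eq_zero.mp (Nat.le_zero.mp hcard)
    have : sdiag A i = 0 := by
      by_contra h
      have : i ∈ (Finset.univ.filter fun i => sdiag A i ≠ 0) := by
        simp [h]
      rw [hempty] at this; exact absurd this (Finset.notMem_empty i)
    simpa [sdiag] using this
  | succ k ih =>
    intro A hA hcard
    by_cases hall : ∀ i, sdiag A i = 0
    · exact ⟨1, symporth_one, fun i => by simpa [sdiag] using hall i⟩
    push_neg at hall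
    obtain ⟨i₀, h₀⟩ := hall
    obtain ⟨p, q, hp, hq⟩ := exists_pos_neg hA i₀ h₀
    have hpq : p ≠ q := by rintro rfl; linarith
    -- IVT
    set cr : ℝ := A.toBlocks₁₁ p q + A.toBlocks₁₁ q p + A.toBlocks₂₂ p q + A.toBlocks₂₂ q p with hcr
    set f : ℝ → ℝ := fun θ =>
      Real.cos θ ^ 2 * sdiag A p + Real.sin θ ^ 2 * sdiag A q
        + Real.cos θ * Real.sin θ * cr with hf
    have hcont : ContinuousOn f (Set.Icc 0 (Real.pi / 2)) := by fun_prop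
    have h0 : f 0 = sdiag A p := by simp [hf]
    have hpi : f (Real.pi / 2) = sdiag A q := by simp [hf]
    have hsub := intermediate_value_Icc' (by positivity : (0:ℝ) ≤ Real.pi / 2) hcont
    have h0mem : (0:ℝ) ∈ Set.Icc (f (Real.pi/2)) (f 0) := by
      rw [h0, hpi]; exact ⟨le_of_lt hq, le_of_lt hp⟩
    obtain ⟨θ, -, hθ⟩ := hsub h0mem
    -- conjugate
    set U := Matrix.fromBlocks (giv p q θ) 0 0 (giv p q θ) with hU
    set A' := Uᵀ * A * U with hA'
    have hUso : symporth U := symporth_dgiv hpq θ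
    have hA'p : sdiag A' p = 0 := by
      rw [hA', hU, sdiag_dgiv_i hpq]
      rw [hf] at hθ; exact hθ
    have hA'other : ∀ j, j ≠ p → j ≠ q → sdiag A' j = sdiag A j := fun j h1 h2 =>
      sdiag_dgiv_other h1 h2 θ A
    have htr' : A'.trace = 0 := by rw [hA', trace_conj hUso.1, hA]
    have hsubset : (Finset.univ.filter fun i => sdiag A' i ≠ 0) ⊆
        (Finset.univ.filter fun i => sdiag A i ≠ 0).erase p := by
      intro j hj
      simp only [Finset.mem_filter, Finset.mem_univ, true_and] at hj
      have hjp : j ≠ p := by rintro rfl; exact hj hA'p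
      rw [Finset.mem_erase]
      refine ⟨hjp, ?_⟩
      simp only [Finset.mem_filter, Finset.mem_univ, true_and]
      by_cases hjq : j = q
      · subst hjq; exact ne_of_lt hq
      · rw [← hA'other j hjp hjq]; exact hj
    have hpmem : p ∈ (Finset.univ.filter fun i => sdiag A i ≠ 0) := by
      simp [ne_of_gt hp]
    have hcard' : (Finset.univ.filter fun i => sdiag A' i ≠ 0).card ≤ k := by
      have h1 := Finset.card_le_card hsubset
      rw [Finset.card_erase_of_mem hpmem] at h1
      omega
    obtain ⟨V, hVso, hV⟩ := ih A' htr' hcard'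
    refine ⟨U * V, symporth_mul hUso hVso, fun i => ?_⟩
    rw [conj_conj]
    exact hV i

end PhaseA

section PhaseB
variable {n : ℕ}

lemma symporth_ddiag (c s : Fin n → ℝ) (hcs : ∀ i, c i ^ 2 + s i ^ 2 = 1) :
    symporth (Matrix.fromBlocks (Matrix.diagonal c) (-(Matrix.diagonal s))
      (Matrix.diagonal s) (Matrix.diagonal c)) := by
  have hCC : (Matrix.diagonal c * Matrix.diagonal c
      + Matrix.diagonal s * Matrix.diagonal s : Matrix (Fin n) (Fin n) ℝ) = 1 := by
    rw [Matrix.diagonal_mul_diagonal, Matrix.diagonal_mul_diagonal, Matrix.diagonal_add,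
      show (fun i => c i * c i + s i * s i) = fun _ => (1:ℝ) from
        funext fun i => by have := hcs i; nlinarith,
      Matrix.diagonal_one]
  have hSS : (Matrix.diagonal s * Matrix.diagonal s
      + Matrix.diagonal c * Matrix.diagonal c : Matrix (Fin n) (Fin n) ℝ) = 1 := by
    rw [add_comm]; exact hCC
  have hCS : (Matrix.diagonal c * Matrix.diagonal s : Matrix (Fin n) (Fin n) ℝ)
      = Matrix.diagonal s * Matrix.diagonal c := by
    rw [Matrix.diagonal_mul_diagonal, Matrix.diagonal_mul_diagonal,
      show (fun i => c i * s i) = fun i => s i * c i from funext fun i => mul_comm _ _]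
  constructor
  · rw [Matrix.fromBlocks_transpose]
    simp only [Matrix.transpose_neg, Matrix.diagonal_transpose, Matrix.fromBlocks_multiply,
      Matrix.mul_neg, Matrix.neg_mul, neg_neg]
    rw [hCC, hSS, hCS, neg_add_cancel]
    exact Matrix.fromBlocks_one
  · rw [Matrix.fromBlocks_transpose]
    simp only [Matrix.transpose_neg, Matrix.diagonal_transpose, Matrix.fromBlocks_multiply,
      Matrix.mul_neg, Matrix.neg_mul, neg_neg, Matrix.mul_zero, Matrix.zero_mul,
      Matrix.mul_one, Matrix.one_mul, add_zero, zero_add]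
    rw [hCS, neg_add_cancel, hSS, add_neg_cancel, ← neg_add, hCC]

lemma ddiag_conj_inl (c s : Fin n → ℝ) (A : Matrix (Fin n ⊕ Fin n) (Fin n ⊕ Fin n) ℝ)
    (i : Fin n) :
    ((Matrix.fromBlocks (Matrix.diagonal c) (-(Matrix.diagonal s))
      (Matrix.diagonal s) (Matrix.diagonal c))ᵀ * A *
     (Matrix.fromBlocks (Matrix.diagonal c) (-(Matrix.diagonal s))
      (Matrix.diagonal s) (Matrix.diagonal c))) (Sum.inl i) (Sum.inl i) =
    c i ^ 2 * A (Sum.inl i) (Sum.inl i) + s i ^ 2 * A (Sum.inr i) (Sum.inr i)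
      + c i * s i * (A (Sum.inl i) (Sum.inr i) + A (Sum.inr i) (Sum.inl i)) := by
  conv_lhs => rw [← Matrix.fromBlocks_toBlocks A]
  rw [Matrix.fromBlocks_transpose]
  simp only [Matrix.transpose_neg, Matrix.diagonal_transpose, Matrix.fromBlocks_multiply,
    Matrix.fromBlocks_apply₁₁, Matrix.add_apply, Matrix.add_mul, Matrix.mul_neg,
    Matrix.neg_mul, neg_neg, Matrix.neg_apply, Matrix.mul_diagonal, Matrix.diagonal_mul,
    Matrix.toBlocks₁₁, Matrix.toBlocks₁₂, Matrix.toBlocks₂₁, Matrix.toBlocks₂₂,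
    Matrix.of_apply]
  ring

lemma ddiag_conj_inr (c s : Fin n → ℝ) (A : Matrix (Fin n ⊕ Fin n) (Fin n ⊕ Fin n) ℝ)
    (i : Fin n) :
    ((Matrix.fromBlocks (Matrix.diagonal c) (-(Matrix.diagonal s))
      (Matrix.diagonal s) (Matrix.diagonal c))ᵀ * A *
     (Matrix.fromBlocks (Matrix.diagonal c) (-(Matrix.diagonal s))
      (Matrix.diagonal s) (Matrix.diagonal c))) (Sum.inr i) (Sum.inr i) =
    s i ^ 2 * A (Sum.inl i) (Sum.inl i) + c i ^ 2 * A (Sum.inr i) (Sum.inr i)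
      - c i * s i * (A (Sum.inl i) (Sum.inr i) + A (Sum.inr i) (Sum.inl i)) := by
  conv_lhs => rw [← Matrix.fromBlocks_toBlocks A]
  rw [Matrix.fromBlocks_transpose]
  simp only [Matrix.transpose_neg, Matrix.diagonal_transpose, Matrix.fromBlocks_multiply,
    Matrix.fromBlocks_apply₂₂, Matrix.add_apply, Matrix.add_mul, Matrix.mul_neg,
    Matrix.neg_mul, neg_neg, Matrix.neg_apply, Matrix.mul_diagonal, Matrix.diagonal_mul,
    Matrix.toBlocks₁₁, Matrix.toBlocks₁₂, Matrix.toBlocks₂₁, Matrix.toBlocks₂₂,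
    Matrix.of_apply]
  ring

lemma phaseB (A : Matrix (Fin n ⊕ Fin n) (Fin n ⊕ Fin n) ℝ) (h : ∀ i, sdiag A i = 0) :
    ∃ U : Matrix (Fin n ⊕ Fin n) (Fin n ⊕ Fin n) ℝ, symporth U ∧ ∀ x, (Uᵀ * A * U) x x = 0 := by
  have hθ : ∀ i : Fin n, ∃ θ : ℝ,
      Real.cos θ ^ 2 * A (Sum.inl i) (Sum.inl i) + Real.sin θ ^ 2 * A (Sum.inr i) (Sum.inr i)
        + Real.cos θ * Real.sin θ * (A (Sum.inl i) (Sum.inr i) + A (Sum.inr i) (Sum.inl i))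
        = 0 := by
    intro i
    set a : ℝ := A (Sum.inl i) (Sum.inl i) with ha
    have h2 : A (Sum.inr i) (Sum.inr i) = -a := by
      have := h i; simp only [sdiag] at this; linarith
    set g : ℝ → ℝ := fun θ =>
      Real.cos θ ^ 2 * A (Sum.inl i) (Sum.inl i) + Real.sin θ ^ 2 * A (Sum.inr i) (Sum.inr i)
        + Real.cos θ * Real.sin θ * (A (Sum.inl i) (Sum.inr i) + A (Sum.inr i) (Sum.inl i))
      with hg
    have hcont : ContinuousOn g (Set.Icc 0 (Real.pi / 2)) := by fun_prop
    have h0 : g 0 = a := by simp [hg, ha]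
    have hpi : g (Real.pi / 2) = -a := by simp [hg, h2]
    rcases le_total 0 a with hcase | hcase
    · obtain ⟨θ, -, hθ⟩ := intermediate_value_Icc' (by positivity : (0:ℝ) ≤ Real.pi / 2) hcont
        (by rw [h0, hpi]; exact ⟨by linarith, hcase⟩ : (0:ℝ) ∈ Set.Icc (g (Real.pi/2)) (g 0))
      exact ⟨θ, hθ⟩
    · obtain ⟨θ, -, hθ⟩ := intermediate_value_Icc (by positivity : (0:ℝ) ≤ Real.pi / 2) hcont
        (by rw [h0, hpi]; exact ⟨hcase, by linarith⟩ : (0:ℝ) ∈ Set.Icc (g 0) (g (Real.pi/2)))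
      exact ⟨θ, hθ⟩
  choose θ hθ' using hθ
  set c : Fin n → ℝ := fun i => Real.cos (θ i) with hc
  set s : Fin n → ℝ := fun i => Real.sin (θ i) with hs
  refine ⟨Matrix.fromBlocks (Matrix.diagonal c) (-(Matrix.diagonal s))
      (Matrix.diagonal s) (Matrix.diagonal c),
    symporth_ddiag c s (fun i => by simp [hc, hs, Real.cos_sq_add_sin_sq]), fun x => ?_⟩
  rcases x with i | i
  · rw [ddiag_conj_inl]
    exact hθ' i
  · rw [ddiag_conj_inr]
    have h2 : A (Sum.inr i) (Sum.inr i) = -A (Sum.inl i) (Sum.inl i) := by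
      have := h i; simp only [sdiag] at this; linarith
    have := hθ' i
    have hone := Real.sin_sq_add_cos_sq (θ i)
    simp only [hc, hs]
    nlinarith [this, hone, h2]

end PhaseB

theorem stmt_8 (n : ℕ)
    (A : Matrix (Fin n ⊕ Fin n) (Fin n ⊕ Fin n) ℝ) (hA : A.trace = 0) :
    ∃ U : Matrix (Fin n ⊕ Fin n) (Fin n ⊕ Fin n) ℝ,
      Uᵀ * U = 1 ∧
      Uᵀ * (Matrix.fromBlocks 0 1 (-1) 0) * U = Matrix.fromBlocks 0 1 (-1) 0 ∧
      ∀ i, (Uᵀ * A * U) i i = 0 := by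
  obtain ⟨U1, hU1, h1⟩ :=
    phaseA (Finset.univ.filter fun i => sdiag A i ≠ 0).card A hA le_rfl
  obtain ⟨U2, hU2, h2⟩ := phaseB (U1ᵀ * A * U1) h1
  obtain ⟨hso1, hso2⟩ := symporth_mul hU1 hU2
  refine ⟨U1 * U2, hso1, hso2, fun x => ?_⟩
  rw [conj_conj]
  exact h2 x
end
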